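/- arXiv:2102.07551 — 12 statements merged into one kernel-verified Lean document; each statement's English description precedes it below -/
import Mathlib

section
/- Let h > 0 and assume |λ1|·e^h < 1, where λ1 is the root with |λ1| < 1 of P_2(λ) = pλ² − 2(1 − e^{2h} + h(e^{2h}+1))λ + p, p = 1 + 2h·e^h − e^{2h}. Then for every β ∈ ℤ the series ∑_{γ∈ℤ} D_2(hγ)·e^{h(β−γ)} converges absolutely and equals 0. -/
set_option maxHeartbeats 1600000


theorem stmt1
    (h : ℝ) (hh : 0 < h)
    (p : ℝ) (hp : p = 1 + 2 * h * Real.exp h - Real.exp (2 * h))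
    (lam : ℝ)
    (hroot : p * lam ^ 2 - 2 * (1 - Real.exp (2 * h) + h * (Real.exp (2 * h) + 1)) * lam + p = 0)
    (hlam : |lam| < 1)
    (hsmall : |lam| * Real.exp h < 1)
    (A C : ℝ)
    (hA : A = 2 * (lam - 1) * (lam * (Real.exp (2 * h) + 1) - Real.exp h * (lam ^ 2 + 1)) / (lam + 1))
    (hC : C = 1 + 2 * Real.exp h + Real.exp (2 * h) - Real.exp h * (lam ^ 2 + 1) / lam)
    (D2 : ℤ → ℝ)
    (hD2zero : D2 0 = (2 * C + A / lam) / p)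
    (hD2one : ∀ β : ℤ, β.natAbs = 1 → D2 β = (-2 * Real.exp h + A) / p)
    (hD2big : ∀ β : ℤ, 2 ≤ β.natAbs → D2 β = A * lam ^ (β.natAbs - 1) / p)
    (β : ℤ) :
    Summable (fun γ : ℤ => |D2 γ * Real.exp (h * ((β : ℝ) - (γ : ℝ)))|) ∧
      ∑' γ : ℤ, D2 γ * Real.exp (h * ((β : ℝ) - (γ : ℝ))) = 0 := by
  set s : ℝ := Real.exp h with hs
  have hs0 : (0:ℝ) < s := Real.exp_pos h
  have hs1 : (1:ℝ) < s := Real.one_lt_exp_iff.2 hh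
  have he2 : Real.exp (2 * h) = s ^ 2 := by
    rw [two_mul, Real.exp_add]; ring
  -- p is negative (hence nonzero)
  have hquad : 1 + h + h ^ 2 / 2 ≤ s := Real.quadratic_le_exp_of_nonneg hh.le
  have hpneg : p < 0 := by
    rw [hp, he2]
    have key : (1 + h + h ^ 2 / 2) * (1 - h + h ^ 2 / 2) ≤ s * (s - 2 * h) := by
      apply mul_le_mul hquad (by linarith) (by nlinarith [sq_nonneg (h - 1)]) hs0.le
    nlinarith [key, pow_pos hh 4]
  have hp0 : p ≠ 0 := ne_of_lt hpneg
  -- lam ≠ 0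
  have hlam0 : lam ≠ 0 := by
    intro h0
    rw [h0] at hroot
    simp at hroot
    exact hp0 hroot
  have hlam1 : lam + 1 ≠ 0 := by
    have := (abs_lt.mp hlam).1; intro h0; linarith
  -- geometric ratios
  have hv : ‖lam * s‖ < 1 := by
    rw [Real.norm_eq_abs, abs_mul, abs_of_pos hs0]; exact hsmall
  have hu : ‖lam * s⁻¹‖ < 1 := by
    rw [Real.norm_eq_abs, abs_mul, abs_of_pos (inv_pos.2 hs0)]
    have h1 : s⁻¹ ≤ 1 := by
      rw [inv_le_one_iff₀]; right; exact hs1.le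
    calc |lam| * s⁻¹ ≤ |lam| * 1 := mul_le_mul_of_nonneg_left h1 (abs_nonneg _)
      _ = |lam| := by ring
      _ < 1 := hlam
  have h1u : (1:ℝ) - lam * s⁻¹ ≠ 0 := by
    have : lam * s⁻¹ < 1 := lt_of_le_of_lt (le_abs_self _) (by rwa [Real.norm_eq_abs] at hu)
    exact ne_of_gt (by linarith)
  have h1v : (1:ℝ) - lam * s ≠ 0 := by
    have : lam * s < 1 := lt_of_le_of_lt (le_abs_self _) (by rwa [Real.norm_eq_abs] at hv)
    exact ne_of_gt (by linarith)
  -- exponential identities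
  have hexpn : ∀ n : ℕ, Real.exp (-(h * (n : ℝ))) = (s⁻¹) ^ n := by
    intro n
    rw [hs, ← Real.exp_neg, ← Real.exp_nat_mul]
    congr 1; ring
  have hexpm : ∀ n : ℕ, Real.exp (h * (n : ℝ)) = s ^ n := by
    intro n
    rw [hs, ← Real.exp_nat_mul]
    congr 1; ring
  -- the auxiliary function without the exp(hβ) factor
  set g : ℤ → ℝ := fun γ => D2 γ * Real.exp (-(h * (γ : ℝ))) with hg
  -- constants
  set a : ℝ := A / (p * lam) with ha
  set c0 : ℝ := D2 0 - a with hc0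
  set c1 : ℝ := D2 1 * s⁻¹ - a * (lam * s⁻¹) with hc1
  set b : ℝ := A * s / p with hb
  set d0 : ℝ := D2 (-1) * s - b with hd0
  -- positive side
  have hposfun : (fun n : ℕ => g n) =
      fun n : ℕ => a * (lam * s⁻¹) ^ n +
        ((if n = 0 then c0 else 0) + (if n = 1 then c1 else 0)) := by
    funext n
    simp only [hg]
    rw [show ((n : ℤ) : ℝ) = (n : ℝ) by push_cast; ring, hexpn n]
    match n with
    | 0 => simp [hc0]
    | 1 => simp only [pow_one, if_neg (by norm_num : (1:ℕ) ≠ 0), if_pos rfl, hc1]; push_cast; ring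
    | (m + 2) =>
      have hD : D2 ((m : ℤ) + 2) = A * lam ^ (m + 1) / p := by
        rw [hD2big _ (by omega)]
        have hq : ((m : ℤ) + 2).natAbs - 1 = m + 1 := by omega
        rw [hq]
      push_cast
      rw [hD]
      simp only [Nat.add_eq_zero, and_false, if_false, OfNat.ofNat_ne_zero,
        Nat.add_eq_right, OfNat.ofNat_ne_one, add_zero]
      rw [ha, mul_pow]
      field_simp
      ring
  have hpos : HasSum (fun n : ℕ => g n) (a * (1 - lam * s⁻¹)⁻¹ + (c0 + c1)) := by
    rw [hposfun]
    exact ((hasSum_geometric_of_norm_lt_one hu).mul_left a).add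
      ((hasSum_ite_eq 0 c0).add (hasSum_ite_eq 1 c1))
  -- negative side
  have hnegfun : (fun n : ℕ => g (-((n : ℤ) + 1))) =
      fun n : ℕ => b * (lam * s) ^ n + (if n = 0 then d0 else 0) := by
    funext n
    simp only [hg]
    rw [show ((-((n : ℤ) + 1) : ℤ) : ℝ) = -(((n + 1 : ℕ) : ℝ)) by push_cast; ring]
    rw [show (-(h * (-(((n + 1 : ℕ) : ℝ))))) = h * ((n + 1 : ℕ) : ℝ) by ring, hexpm (n + 1)]
    match n with
    | 0 => simp [hd0]
    | (m + 1) =>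
      have hD : D2 (-(((m : ℤ) + 1) + 1)) = A * lam ^ (m + 1) / p := by
        rw [hD2big _ (by omega)]
        have hq : (-(((m : ℤ) + 1) + 1)).natAbs - 1 = m + 1 := by omega
        rw [hq]
      push_cast
      rw [hD]
      simp only [Nat.add_eq_zero, and_false, if_false, add_zero]
      rw [hb, mul_pow]
      field_simp
      ring
  have hneg : HasSum (fun n : ℕ => g (-((n : ℤ) + 1))) (b * (1 - lam * s)⁻¹ + d0) := by
    rw [hnegfun]
    exact ((hasSum_geometric_of_norm_lt_one hv).mul_left b).add (hasSum_ite_eq 0 d0)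
  -- total sum of g is zero
  have htotal : (a * (1 - lam * s⁻¹)⁻¹ + (c0 + c1)) + (b * (1 - lam * s)⁻¹ + d0) = 0 := by
    have hD1 : D2 1 = (-2 * s + A) / p := hD2one 1 (by norm_num)
    have hDm1 : D2 (-1) = (-2 * s + A) / p := hD2one (-1) (by norm_num)
    have hs0' : s ≠ 0 := hs0.ne'
    have hsl : s - lam ≠ 0 := by
      have := (abs_lt.mp hlam).2; intro h0; linarith
    rw [hc0, hc1, hd0, ha, hb, hD2zero, hD1, hDm1, hA, hC, he2,
      show (1 : ℝ) - lam * s⁻¹ = (s - lam) / s by field_simp]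
    field_simp
    ring
  have hgsum : HasSum g 0 := by
    have := HasSum.of_nat_of_neg_add_one hpos hneg
    rwa [htotal] at this
  -- relate to the original function
  have hfg : (fun γ : ℤ => D2 γ * Real.exp (h * ((β : ℝ) - (γ : ℝ)))) =
      fun γ : ℤ => Real.exp (h * (β : ℝ)) * g γ := by
    funext γ
    simp only [hg]
    rw [show h * ((β : ℝ) - (γ : ℝ)) = h * (β : ℝ) + (-(h * (γ : ℝ))) by ring, Real.exp_add]
    ring
  have hfsum : HasSum (fun γ : ℤ => D2 γ * Real.exp (h * ((β : ℝ) - (γ : ℝ)))) 0 := by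
    rw [hfg]
    simpa using hgsum.mul_left (Real.exp (h * (β : ℝ)))
  exact ⟨summable_abs_iff.mpr hfsum.summable, hfsum.tsum_eq⟩
end

section
/- Let h > 0 and let λ1 be the root with |λ1| < 1 of P_2(λ) = pλ² − 2(1 − e^{2h} + h(e^{2h}+1))λ + p, p = 1 + 2h·e^h − e^{2h}, with λ1 ≠ 0. Then the series ∑_{γ∈ℤ} D_2(hγ) converges absolutely and equals 0. -/
theorem stmt3
    (h : ℝ) (hh : 0 < h)
    (p : ℝ) (hp : p = 1 + 2 * h * Real.exp h - Real.exp (2 * h))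
    (lam : ℝ)
    (hroot : p * lam ^ 2 - 2 * (1 - Real.exp (2 * h) + h * (Real.exp (2 * h) + 1)) * lam + p = 0)
    (hlam : |lam| < 1)
    (hlam0 : lam ≠ 0)
    (A C : ℝ)
    (hA : A = 2 * (lam - 1) * (lam * (Real.exp (2 * h) + 1) - Real.exp h * (lam ^ 2 + 1)) / (lam + 1))
    (hC : C = 1 + 2 * Real.exp h + Real.exp (2 * h) - Real.exp h * (lam ^ 2 + 1) / lam)
    (D2 : ℤ → ℝ)
    (hD2zero : D2 0 = (2 * C + A / lam) / p)
    (hD2one : ∀ β : ℤ, β.natAbs = 1 → D2 β = (-2 * Real.exp h + A) / p)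
    (hD2big : ∀ β : ℤ, 2 ≤ β.natAbs → D2 β = A * lam ^ (β.natAbs - 1) / p)
    :
    Summable (fun γ : ℤ => |D2 γ|) ∧ ∑' γ : ℤ, D2 γ = 0 := by
  have hlam1 : lam < 1 := lt_of_le_of_lt (le_abs_self lam) hlam
  have hlam1' : -1 < lam := lt_of_lt_of_le (neg_lt_neg hlam) (neg_abs_le lam)
  have h1m : (1 : ℝ) - lam ≠ 0 := by linarith
  have h1p : lam + 1 ≠ 0 := by linarith
  -- key values
  set E := Real.exp h with hE
  -- the tail terms
  have hbig : ∀ n : ℕ, D2 ((n : ℤ) + 2) = A * lam / p * lam ^ n := by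
    intro n
    have hn : ((n : ℤ) + 2).natAbs = n + 2 := by
      omega
    rw [hD2big _ (by omega), hn]
    have : n + 2 - 1 = n + 1 := by omega
    rw [this]
    ring
  have hbigneg : ∀ n : ℕ, D2 (-((n : ℤ) + 1 + 1)) = A * lam / p * lam ^ n := by
    intro n
    have hn : (-((n : ℤ) + 1 + 1)).natAbs = n + 2 := by
      omega
    rw [hD2big _ (by omega), hn]
    have : n + 2 - 1 = n + 1 := by omega
    rw [this]
    ring
  have hgeo : HasSum (fun n : ℕ => A * lam / p * lam ^ n) (A * lam / p * (1 - lam)⁻¹) := by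
    have := hasSum_geometric_of_norm_lt_one (ξ := lam) (by rwa [Real.norm_eq_abs])
    exact this.mul_left _
  -- positive part
  have hpos : HasSum (fun n : ℕ => D2 n)
      (A * lam / p * (1 - lam)⁻¹ + (D2 0 + D2 1)) := by
    have h2 : HasSum (fun n : ℕ => D2 ((n : ℤ) + 2)) (A * lam / p * (1 - lam)⁻¹) := by
      have : (fun n : ℕ => D2 ((n : ℤ) + 2)) = fun n : ℕ => A * lam / p * lam ^ n :=
        funext hbig
      rw [this]; exact hgeo
    have h3 : HasSum (fun n : ℕ => D2 ((n + 2 : ℕ))) (A * lam / p * (1 - lam)⁻¹) := by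
      convert h2 using 2 with n <;> push_cast <;> ring_nf
    have := (hasSum_nat_add_iff (f := fun n : ℕ => D2 n) 2).mp h3
    simpa [Finset.sum_range_succ] using this
  -- negative part
  have hneg : HasSum (fun n : ℕ => D2 (-((n : ℤ) + 1)))
      (A * lam / p * (1 - lam)⁻¹ + D2 (-1)) := by
    have h2 : HasSum (fun n : ℕ => D2 (-(((n + 1 : ℕ) : ℤ) + 1)))
        (A * lam / p * (1 - lam)⁻¹) := by
      have : (fun n : ℕ => D2 (-(((n + 1 : ℕ) : ℤ) + 1))) = fun n : ℕ => A * lam / p * lam ^ n := by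
        funext n
        have := hbigneg n
        convert this using 3 <;> push_cast <;> ring_nf
      rw [this]; exact hgeo
    have := (hasSum_nat_add_iff (f := fun n : ℕ => D2 (-((n : ℤ) + 1))) 1).mp h2
    simpa [Finset.sum_range_succ] using this
  have htotal : HasSum D2
      ((A * lam / p * (1 - lam)⁻¹ + (D2 0 + D2 1)) + (A * lam / p * (1 - lam)⁻¹ + D2 (-1))) := by
    refine HasSum.of_nat_of_neg_add_one ?_ hneg
    exact hpos
  -- the sum is zero
  have hD2one1 : D2 1 = (-2 * E + A) / p := hD2one 1 rfl
  have hD2onem : D2 (-1) = (-2 * E + A) / p := hD2one (-1) rfl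
  have hkey : 2 * (A * lam) * (1 - lam)⁻¹ + (2 * C + A / lam) + 2 * (-2 * E + A) = 0 := by
    rw [hA, hC]
    field_simp
    ring
  have hsum0 : (A * lam / p * (1 - lam)⁻¹ + (D2 0 + D2 1)) + (A * lam / p * (1 - lam)⁻¹ + D2 (-1)) = 0 := by
    rw [hD2zero, hD2one1, hD2onem]
    have : (A * lam / p * (1 - lam)⁻¹ + ((2 * C + A / lam) / p + (-2 * E + A) / p)) +
        (A * lam / p * (1 - lam)⁻¹ + (-2 * E + A) / p) =
        (2 * (A * lam) * (1 - lam)⁻¹ + (2 * C + A / lam) + 2 * (-2 * E + A)) / p := by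
      ring
    rw [this, hkey, zero_div]
  -- summability of absolute values
  have habs : Summable (fun γ : ℤ => |D2 γ|) := by
    have hgeoabs : Summable (fun n : ℕ => |A * lam / p| * |lam| ^ n) :=
      (summable_geometric_of_lt_one (abs_nonneg lam) hlam).mul_left _
    have hposabs : Summable (fun n : ℕ => |D2 n|) := by
      rw [← summable_nat_add_iff 2]
      refine hgeoabs.congr fun n => ?_
      have h3 : ((n + 2 : ℕ) : ℤ) = (n : ℤ) + 2 := by push_cast; ring
      rw [h3, hbig n, abs_mul, abs_pow]
    have hnegabs : Summable (fun n : ℕ => |D2 (-((n : ℤ) + 1))|) := by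
      rw [← summable_nat_add_iff 1]
      refine hgeoabs.congr fun n => ?_
      have h3 : (-(((n + 1 : ℕ) : ℤ) + 1)) = -((n : ℤ) + 1 + 1) := by push_cast; ring
      rw [h3, hbigneg n, abs_mul, abs_pow]
    exact Summable.of_nat_of_neg_add_one hposabs hnegabs
  refine ⟨habs, ?_⟩
  rw [htotal.tsum_eq, hsum0]
end

section
/- Let h > 0 and let λ1 be the root with |λ1| < 1 of P_2(λ) = pλ² − 2(1 − e^{2h} + h(e^{2h}+1))λ + p, p = 1 + 2h·e^h − e^{2h}, with λ1 ≠ 0. Then for every β ∈ ℤ the series ∑_{γ∈ℤ} D_2(hγ)·h(β−γ) converges absolutely and equals 0. -/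
theorem stmt4
    (h : ℝ) (hh : 0 < h)
    (p : ℝ) (hp : p = 1 + 2 * h * Real.exp h - Real.exp (2 * h))
    (lam : ℝ)
    (hroot : p * lam ^ 2 - 2 * (1 - Real.exp (2 * h) + h * (Real.exp (2 * h) + 1)) * lam + p = 0)
    (hlam : |lam| < 1)
    (hlam0 : lam ≠ 0)
    (A C : ℝ)
    (hA : A = 2 * (lam - 1) * (lam * (Real.exp (2 * h) + 1) - Real.exp h * (lam ^ 2 + 1)) / (lam + 1))
    (hC : C = 1 + 2 * Real.exp h + Real.exp (2 * h) - Real.exp h * (lam ^ 2 + 1) / lam)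
    (D2 : ℤ → ℝ)
    (hD2zero : D2 0 = (2 * C + A / lam) / p)
    (hD2one : ∀ β : ℤ, β.natAbs = 1 → D2 β = (-2 * Real.exp h + A) / p)
    (hD2big : ∀ β : ℤ, 2 ≤ β.natAbs → D2 β = A * lam ^ (β.natAbs - 1) / p)
    (β : ℤ) :
    Summable (fun γ : ℤ => |D2 γ * (h * ((β : ℝ) - (γ : ℝ)))|) ∧
      ∑' γ : ℤ, D2 γ * (h * ((β : ℝ) - (γ : ℝ))) = 0 := by
  have hE : Real.exp (2 * h) = Real.exp h * Real.exp h := by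
    rw [two_mul, Real.exp_add]
  -- basic facts about lam
  have hr0 : 0 < |lam| := abs_pos.mpr hlam0
  have hL1 : lam ≠ 1 := by
    intro hc; rw [hc] at hlam; simp at hlam
  have h1mL : (1 : ℝ) - lam ≠ 0 := by
    intro hc; exact hL1 (by linarith)
  have hLp1 : lam + 1 ≠ 0 := by
    have := abs_lt.mp hlam
    intro hc; linarith [this.1]
  -- uniform description of D2 via natAbs
  set u : ℕ → ℝ := fun k =>
    if k = 0 then (2 * C + A / lam) / p
    else if k = 1 then (-2 * Real.exp h + A) / p
    else A * lam ^ (k - 1) / p with hu_def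
  have hu : ∀ γ : ℤ, D2 γ = u γ.natAbs := by
    intro γ
    rcases Nat.lt_or_ge γ.natAbs 2 with hk | hk
    · interval_cases hna : γ.natAbs
      · have : γ = 0 := Int.natAbs_eq_zero.mp hna
        rw [this, hD2zero]; simp [hu_def]
      · rw [hD2one γ hna]; simp [hu_def]
    · rw [hD2big γ hk]
      have h0 : γ.natAbs ≠ 0 := by omega
      have h1 : γ.natAbs ≠ 1 := by omega
      simp [hu_def, h0, h1]
  -- geometric bound on u
  set r : ℝ := |lam| with hr_def
  have hr1 : r < 1 := hlam
  set M : ℝ := max |(2 * C + A / lam) / p|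
      (max (|(-2 * Real.exp h + A) / p| / r) (|A / p| / r)) with hM_def
  have hub : ∀ k : ℕ, |u k| ≤ M * r ^ k := by
    intro k
    rcases Nat.lt_or_ge k 2 with hk | hk
    · interval_cases k
      · have hu0 : u 0 = (2 * C + A / lam) / p := by simp [hu_def]
        rw [pow_zero, mul_one, hu0]
        exact le_max_left _ _
      · have h1 : |(-2 * Real.exp h + A) / p| / r ≤ M :=
          le_trans (le_max_left _ _) (le_max_right _ _)
        have h2 := (div_le_iff₀ hr0).mp h1
        simpa [hu_def] using h2
    · have h0 : k ≠ 0 := by omega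
      have h1 : k ≠ 1 := by omega
      have hA2 : |A / p| / r ≤ M := le_trans (le_max_right _ _) (le_max_right _ _)
      have hA3 : |A / p| ≤ M * r := (div_le_iff₀ hr0).mp hA2
      have hke : k - 1 + 1 = k := by omega
      have heq : |u k| = |A / p| * r ^ (k - 1) := by
        simp only [hu_def, h0, h1, if_false]
        rw [show A * lam ^ (k - 1) / p = A / p * lam ^ (k - 1) by ring,
          abs_mul, abs_pow]
      rw [heq]
      calc |A / p| * r ^ (k - 1) ≤ M * r * r ^ (k - 1) :=
            mul_le_mul_of_nonneg_right hA3 (pow_nonneg (abs_nonneg _) _)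
        _ = M * r ^ (k - 1 + 1) := by ring
        _ = M * r ^ k := by rw [hke]
  have hM0 : 0 ≤ M := le_trans (abs_nonneg _) (le_max_left _ _)
  have hrr : |r| < 1 := by rwa [abs_abs]
  -- summability of the absolute series, for arbitrary real offset b
  have key : ∀ b : ℝ, Summable (fun γ : ℤ => |u γ.natAbs * (h * (b - (γ : ℝ)))|) := by
    intro b
    have hbound : ∀ γ : ℤ, |u γ.natAbs * (h * (b - (γ : ℝ)))| ≤
        h * M * (|b| + γ.natAbs) * r ^ γ.natAbs := by
      intro γ
      rw [abs_mul, abs_mul]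
      have h1 : |b - (γ : ℝ)| ≤ |b| + γ.natAbs := by
        calc |b - (γ : ℝ)| ≤ |b| + |(γ : ℝ)| := abs_sub _ _
          _ = |b| + γ.natAbs := by rw [Nat.cast_natAbs, Int.cast_abs]
      calc |u γ.natAbs| * (|h| * |b - (γ : ℝ)|) ≤
            (M * r ^ γ.natAbs) * (h * (|b| + γ.natAbs)) := by
            apply mul_le_mul (hub _) _ (by positivity) (by positivity)
            rw [abs_of_pos hh]
            exact mul_le_mul_of_nonneg_left h1 hh.le
        _ = h * M * (|b| + γ.natAbs) * r ^ γ.natAbs := by ring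
    have hsb : Summable (fun n : ℕ => h * M * (|b| + n) * r ^ n) := by
      have hg : Summable (fun n : ℕ => r ^ n) := summable_geometric_of_abs_lt_one hrr
      have hng : Summable (fun n : ℕ => (n : ℝ) * r ^ n) := by
        have := summable_pow_mul_geometric_of_norm_lt_one (R := ℝ) 1
          (by rwa [Real.norm_eq_abs] : ‖r‖ < 1)
        simpa using this
      have := (hg.mul_left (h * M * |b|)).add (hng.mul_left (h * M))
      apply this.congr
      intro n; ring
    have hsZ : Summable (fun γ : ℤ => h * M * (|b| + γ.natAbs) * r ^ γ.natAbs) := by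
      apply Summable.of_nat_of_neg
      · apply hsb.congr; intro n; simp
      · apply hsb.congr; intro n; simp
    exact Summable.of_nonneg_of_le (fun γ => abs_nonneg _) hbound hsZ
  -- summability of u itself over ℤ
  have hsumu : Summable (fun γ : ℤ => u γ.natAbs) := by
    have hsZ : Summable (fun γ : ℤ => M * r ^ γ.natAbs) := by
      have hg : Summable (fun n : ℕ => M * r ^ n) :=
        (summable_geometric_of_abs_lt_one hrr).mul_left M
      apply Summable.of_nat_of_neg
      · apply hg.congr; intro n; simp
      · apply hg.congr; intro n; simp
    exact (Summable.of_nonneg_of_le (fun γ => abs_nonneg _) (fun γ => hub _) hsZ).of_abs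
  -- summability of γ * u |γ|
  have hsumg : Summable (fun γ : ℤ => (γ : ℝ) * u γ.natAbs) := by
    have h0 := (key 0).of_abs
    have h1 := h0.mul_left (-h⁻¹)
    apply h1.congr
    intro γ
    field_simp
    ring
  -- the sum of u over ℤ is zero
  have htsumu : ∑' γ : ℤ, u γ.natAbs = 0 := by
    set T : ℝ := (A / p) * (1 - lam)⁻¹ + ((-2 * Real.exp h + A) / p - A / p) with hT_def
    have hpos1 : HasSum (fun n : ℕ => u (n + 1)) T := by
      have hg : HasSum (fun n : ℕ => (A / p) * lam ^ n) ((A / p) * (1 - lam)⁻¹) :=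
        (hasSum_geometric_of_abs_lt_one hlam).mul_left (A / p)
      have hi : HasSum (fun n : ℕ => if n = (0 : ℕ) then
          ((-2 * Real.exp h + A) / p - A / p) else 0)
          ((-2 * Real.exp h + A) / p - A / p) := hasSum_ite_eq 0 _
      have hfe : (fun n : ℕ => u (n + 1)) = fun n : ℕ =>
          (A / p) * lam ^ n + (if n = (0 : ℕ) then
            ((-2 * Real.exp h + A) / p - A / p) else 0) := by
        funext n
        rcases Nat.eq_zero_or_pos n with hn | hn
        · subst hn; simp [hu_def]
        · obtain ⟨m, rfl⟩ := Nat.exists_eq_succ_of_ne_zero (by omega : n ≠ 0)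
          have e0 : m + 1 + 1 ≠ 0 := by omega
          have e1 : m + 1 + 1 ≠ 1 := by omega
          have e2 : m + 1 ≠ 0 := by omega
          simp only [hu_def, if_neg e0, if_neg e1, if_neg e2]
          have e3 : m + 1 + 1 - 1 = m + 1 := rfl
          rw [e3]
          simp only [pow_succ]
          ring
      rw [hfe]
      exact hg.add hi
    have hfe2 : ∀ n : ℕ, ((n : ℤ) + 1).natAbs = n + 1 := by
      intro n
      rw [show ((n : ℤ) + 1) = ((n + 1 : ℕ) : ℤ) by push_cast; ring, Int.natAbs_natCast]
    have hposZ : HasSum (fun n : ℕ => u ((n : ℤ) + 1).natAbs) T := by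
      simpa only [hfe2] using hpos1
    have hnegZ : HasSum (fun n : ℕ => u (-((n : ℤ) + 1)).natAbs) T := by
      simpa only [Int.natAbs_neg, hfe2] using hpos1
    have htot : HasSum (fun γ : ℤ => u γ.natAbs) (T + u (0 : ℤ).natAbs + T) :=
      HasSum.of_add_one_of_neg_add_one hposZ hnegZ
    have hval : T + u (0 : ℤ).natAbs + T = 0 := by
      have hu0 : u (0 : ℤ).natAbs = (2 * C + A / lam) / p := by simp [hu_def]
      rw [hu0, hT_def]
      have hinner : 2 * C + A / lam + ((A * (1 - lam)⁻¹ + ((-2 * Real.exp h + A) - A)) +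
          (A * (1 - lam)⁻¹ + ((-2 * Real.exp h + A) - A))) = 0 := by
        rw [hA, hC, hE]
        field_simp
        ring
      have hcomb : (A / p) * (1 - lam)⁻¹ + ((-2 * Real.exp h + A) / p - A / p) +
          (2 * C + A / lam) / p +
          ((A / p) * (1 - lam)⁻¹ + ((-2 * Real.exp h + A) / p - A / p)) =
          (2 * C + A / lam + ((A * (1 - lam)⁻¹ + ((-2 * Real.exp h + A) - A)) +
          (A * (1 - lam)⁻¹ + ((-2 * Real.exp h + A) - A)))) / p := by
        simp only [div_mul_eq_mul_div, div_sub_div_same, ← sub_div,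
          ← add_div]
        congr 1
        ring
      rw [hcomb, hinner, zero_div]
    rw [htot.tsum_eq, hval]
  -- the odd sum is zero
  have htsumg : ∑' γ : ℤ, (γ : ℝ) * u γ.natAbs = 0 := by
    have hneg := (Equiv.neg ℤ).tsum_eq (fun γ : ℤ => (γ : ℝ) * u γ.natAbs)
    simp only [Equiv.neg_apply] at hneg
    have hodd : (fun γ : ℤ => ((-γ : ℤ) : ℝ) * u (-γ).natAbs) =
        fun γ : ℤ => -((γ : ℝ) * u γ.natAbs) := by
      funext γ
      rw [Int.natAbs_neg]
      push_cast
      ring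
    rw [hodd, tsum_neg] at hneg
    linarith
  constructor
  · simp only [hu]
    exact key (β : ℝ)
  · simp only [hu]
    have hterm : ∀ γ : ℤ, u γ.natAbs * (h * ((β : ℝ) - (γ : ℝ))) =
        (h * (β : ℝ)) * u γ.natAbs - h * ((γ : ℝ) * u γ.natAbs) := by
      intro γ; ring
    rw [tsum_congr hterm, Summable.tsum_sub (hsumu.mul_left _) (hsumg.mul_left _),
      tsum_mul_left, tsum_mul_left, htsumu, htsumg]
    ring
end

section
/- With the coefficients C_0, …, C_N of the optimal quadrature formula for ω = 0 on [0,1] as defined in the context, one has ∑_{β=0}^{N} C_β = 1, i.e. the quadrature formula ∫_0^1 φ(x) dx ≅ ∑_{β=0}^N C_β φ(hβ) is exact for the constant function 1. -/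
theorem stmt7
    (N : ℕ) (hN : 2 ≤ N) (h : ℝ) (hh : h = 1 / N)
    (lam : ℝ)
    (hlamdef : lam = (h * (Real.exp (2 * h) + 1) - Real.exp (2 * h) + 1 - (Real.exp h - 1) * Real.sqrt (h ^ 2 * (Real.exp h + 1) ^ 2 + 2 * h * (1 - Real.exp h))) / (1 - Real.exp (2 * h) + 2 * h * Real.exp h))
    (K : ℝ)
    (hK : K = (2 * Real.exp h - 2 - h * Real.exp h - h) * (lam - 1) /
      (2 * (Real.exp h - 1) ^ 2 * (lam + lam ^ (N + 1))))
    (C : ℕ → ℝ)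
    (hC0 : C 0 = 1 - h / (Real.exp h - 1) - K * (lam - lam ^ N))
    (hCmid : ∀ β : ℕ, 1 ≤ β → β ≤ N - 1 →
      C β = h + K * ((Real.exp h - lam) * lam ^ β + (1 - lam * Real.exp h) * lam ^ (N - β)))
    (hCN : C N = -1 + Real.exp h * h / (Real.exp h - 1) - K * (lam - lam ^ N) * Real.exp h)
    :
    ∑ β ∈ Finset.range (N + 1), C β = 1 := by
  have hNpos : (0:ℝ) < N := by positivity
  have hh0 : 0 < h := by rw [hh]; positivity
  have hE1 : Real.exp h - 1 ≠ 0 := by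
    exact sub_ne_zero.mpr (Real.one_lt_exp_iff.mpr hh0).ne'
  have hNh : (N:ℝ) * h = 1 := by
    rw [hh]; field_simp
  set E := Real.exp h with hEdef
  -- split the sum
  have hsplit : ∑ β ∈ Finset.range (N + 1), C β
      = C 0 + (∑ β ∈ Finset.Ico 1 N, C β) + C N := by
    rw [Finset.sum_range_succ, Finset.range_eq_Ico,
      Finset.sum_eq_sum_Ico_succ_bot (by omega : 0 < N)]
  -- middle sum
  have hmid : ∑ β ∈ Finset.Ico 1 N, C β
      = ∑ β ∈ Finset.Ico 1 N,
        (h + K * ((E - lam) * lam ^ β + (1 - lam * E) * lam ^ (N - β))) := by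
    refine Finset.sum_congr rfl fun β hβ => ?_
    rw [Finset.mem_Ico] at hβ
    exact hCmid β hβ.1 (by omega)
  -- reflection
  have hrefl : ∑ β ∈ Finset.Ico 1 N, lam ^ (N - β)
      = ∑ β ∈ Finset.Ico 1 N, lam ^ β := by
    apply Finset.sum_nbij' (fun β => N - β) (fun β => N - β) <;>
      intro a ha <;> simp only [Finset.mem_Ico] at * <;> first | omega | rfl
  -- geometric sum
  have hgeo : (1 - lam) * (∑ β ∈ Finset.Ico 1 N, lam ^ β) = lam - lam ^ N := by
    have h1 : ∑ β ∈ Finset.range N, lam ^ β = 1 + ∑ β ∈ Finset.Ico 1 N, lam ^ β := by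
      rw [Finset.range_eq_Ico, Finset.sum_eq_sum_Ico_succ_bot (by omega : 0 < N)]
      simp
    have h2 := geom_sum_mul lam N
    rw [h1] at h2
    ring_nf
    ring_nf at h2
    linarith
  set S := ∑ β ∈ Finset.Ico 1 N, lam ^ β with hSdef
  have hcard : ((Finset.Ico 1 N).card : ℝ) = (N:ℝ) - 1 := by
    rw [Nat.card_Ico]
    push_cast [Nat.cast_sub (by omega : 1 ≤ N)]
    ring
  rw [hsplit, hmid]
  simp only [Finset.sum_add_distrib, Finset.sum_const, nsmul_eq_mul]
  rw [← Finset.mul_sum, Finset.sum_add_distrib, ← Finset.mul_sum, ← Finset.mul_sum, hrefl,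
    hC0, hCN, hcard]
  rw [← hSdef]
  field_simp
  linear_combination (K * (1 + E) * (E - 1)) * hgeo + (E - 1) * hNh
end

section
/- With the coefficients C_0, …, C_N of the optimal quadrature formula for ω = 0 on [0,1] as defined in the context, one has ∑_{β=0}^{N} C_β·e^{−hβ} = 1 − e^{−1}, i.e. the quadrature formula ∫_0^1 φ(x) dx ≅ ∑_{β=0}^N C_β φ(hβ) is exact for the function e^{−x}. -/
theorem stmt8
    (N : ℕ) (hN : 2 ≤ N) (h : ℝ) (hh : h = 1 / N)
    (lam : ℝ)
    (hlamdef : lam = (h * (Real.exp (2 * h) + 1) - Real.exp (2 * h) + 1 - (Real.exp h - 1) * Real.sqrt (h ^ 2 * (Real.exp h + 1) ^ 2 + 2 * h * (1 - Real.exp h))) / (1 - Real.exp (2 * h) + 2 * h * Real.exp h))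
    (K : ℝ)
    (hK : K = (2 * Real.exp h - 2 - h * Real.exp h - h) * (lam - 1) /
      (2 * (Real.exp h - 1) ^ 2 * (lam + lam ^ (N + 1))))
    (C : ℕ → ℝ)
    (hC0 : C 0 = 1 - h / (Real.exp h - 1) - K * (lam - lam ^ N))
    (hCmid : ∀ β : ℕ, 1 ≤ β → β ≤ N - 1 →
      C β = h + K * ((Real.exp h - lam) * lam ^ β + (1 - lam * Real.exp h) * lam ^ (N - β)))
    (hCN : C N = -1 + Real.exp h * h / (Real.exp h - 1) - K * (lam - lam ^ N) * Real.exp h)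
    :
    ∑ β ∈ Finset.range (N + 1), C β * Real.exp (-(h * (β : ℝ))) = 1 - Real.exp (-1) := by
  have hNR : (2:ℝ) ≤ (N:ℝ) := by exact_mod_cast hN
  have hhpos : 0 < h := by rw [hh]; positivity
  set E := Real.exp h with hE
  set a := Real.exp (-h) with ha
  have haE : a * E = 1 := by rw [ha, hE, ← Real.exp_add]; norm_num
  have ha0 : a ≠ 0 := Real.exp_ne_zero _
  have hEeq : E = 1 / a := eq_one_div_of_mul_eq_one_left (by linarith [haE, mul_comm a E] : E * a = 1)
  have ha1 : a < 1 := by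
    rw [ha]
    calc Real.exp (-h) < Real.exp 0 := Real.exp_lt_exp.mpr (by linarith)
    _ = 1 := Real.exp_zero
  have hane : (1:ℝ) - a ≠ 0 := sub_ne_zero_of_ne ha1.ne'
  have hhN : h * N = 1 := by
    rw [hh]; field_simp
  have haN : a ^ N = Real.exp (-1) := by
    rw [ha, ← Real.exp_nat_mul]; congr 1; linear_combination -hhN
  have hexp : ∀ β : ℕ, Real.exp (-(h * (β:ℝ))) = a ^ β := by
    intro β; rw [ha, ← Real.exp_nat_mul]; congr 1; ring
  obtain ⟨M, rfl⟩ : ∃ M, N = M + 1 := ⟨N - 1, by omega⟩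
  have hM1 : 1 ≤ M := by omega
  simp only [hexp]
  rw [← haN]
  set g : ℕ → ℝ := fun i =>
    -(h / (1 - a)) * a ^ (i + 1) - K * E * (lam * a) ^ (i + 1)
      + K * (lam ^ (M + 1 - i) * a ^ i) with hg
  rw [Finset.sum_range_succ, Finset.sum_range_succ']
  have hmid : (∑ i ∈ Finset.range M, C (i + 1) * a ^ (i + 1)) = g M - g 0 := by
    rw [← Finset.sum_range_sub g M]
    apply Finset.sum_congr rfl
    intro i hi
    rw [Finset.mem_range] at hi
    rw [hCmid (i + 1) (by omega) (by omega)]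
    have h1 : M + 1 - (i + 1) = M - i := by omega
    have h2 : M + 1 - i = (M - i) + 1 := by omega
    simp only [hg, h1, h2]
    rw [hEeq]
    field_simp
    ring
  rw [hmid, hC0, hCN]
  have h3 : M + 1 - M = 1 := by omega
  simp only [hg, h3, pow_one, pow_zero, Nat.sub_zero]
  rw [hEeq]
  field_simp
  ring
end

section
/- With the coefficients C_0, …, C_N as defined in the context (the Theorem-6 optimal coefficients for ω ∈ ℝ with ωh ∉ ℤ), one has ∑_{β=0}^{N} C_β = (e^{2πiω} − 1)/(2πiω), i.e. the quadrature formula ∫_0^1 e^{2πiωx} φ(x) dx ≅ ∑_{β=0}^N C_β φ(hβ) is exact for the constant function 1. -/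
set_option maxHeartbeats 4000000

theorem keyid (z E Z Y L LN mu K A B : ℂ)
    (hz1 : z - 1 ≠ 0) (hEz : E - z ≠ 0) (hmu : mu ≠ 0) (hmu1 : mu - 1 ≠ 0)
    (hE1 : E - 1 ≠ 0) (hL1 : L - 1 ≠ 0) (hEL : E - L ≠ 0) (hLE1 : L * E - 1 ≠ 0)
    (hL : L ≠ 0) (hLN : 1 - LN ^ 2 ≠ 0)
    (hA : A = ((L - 1) * (L - E) / (L * (1 - LN ^ 2))) *
      ((1 - LN * Z) / (mu * (mu - 1) * (E - 1)) + K * LN * (Y - Z) * z / ((z - 1) * (E - z))))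
    (hB : B = ((L - 1) * (1 - L * E) / (L * (1 - LN ^ 2))) *
      ((LN - Z) / (mu * (mu - 1) * (E - 1)) + K * (Y - Z) * z / ((z - 1) * (E - z)))) :
    (K * z / (z - 1) - 1 / mu + A * L / (L - 1) + B * LN / (1 - L))
    + (K * (Z - z) / (z - 1) + A * (LN - L) / (L - 1) + B * (LN - L) / (L - 1))
    + (K * (Z * E / (E - z) + z * Y * (1 - E) / ((z - 1) * (E - z))) + Z / (mu - 1)
      + A * LN * E / (E - L) + B * L * E / (L * E - 1))
    = (Z - 1) / mu := by
  have h1L : (1 : ℂ) - L ≠ 0 := fun hc => hL1 (by linear_combination -hc)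
  have hK3 : K * z / (z - 1) + K * (Z - z) / (z - 1)
      + K * (Z * E / (E - z) + z * Y * (1 - E) / ((z - 1) * (E - z)))
      = K * z * (E - 1) * (Z - Y) / ((z - 1) * (E - z)) := by
    field_simp
    ring
  have hA3 : A * L / (L - 1) + A * (LN - L) / (L - 1) + A * LN * E / (E - L)
      = A * (LN * L * (E - 1)) / ((L - 1) * (E - L)) := by
    field_simp
    ring
  have hB3 : B * LN / (1 - L) + B * (LN - L) / (L - 1) + B * L * E / (L * E - 1)
      = B * (L * (E - 1)) / ((1 - L) * (L * E - 1)) := by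
    field_simp
    ring
  have hcoefA : (L - 1) * (L - E) / (L * (1 - LN ^ 2)) * ((LN * L * (E - 1)) / ((L - 1) * (E - L)))
      = -(LN * (E - 1) / (1 - LN ^ 2)) := by
    field_simp
    ring
  have hA4 : A * (LN * L * (E - 1)) / ((L - 1) * (E - L))
      = -(LN * (E - 1) / (1 - LN ^ 2)) * ((1 - LN * Z) / (mu * (mu - 1) * (E - 1))
        + K * LN * (Y - Z) * z / ((z - 1) * (E - z))) := by
    rw [hA]
    linear_combination ((1 - LN * Z) / (mu * (mu - 1) * (E - 1))
      + K * LN * (Y - Z) * z / ((z - 1) * (E - z))) * hcoefA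
  have hcoefB : (L - 1) * (1 - L * E) / (L * (1 - LN ^ 2)) * ((L * (E - 1)) / ((1 - L) * (L * E - 1)))
      = (E - 1) / (1 - LN ^ 2) := by
    field_simp
    ring
  have hB4 : B * (L * (E - 1)) / ((1 - L) * (L * E - 1))
      = ((E - 1) / (1 - LN ^ 2)) * ((LN - Z) / (mu * (mu - 1) * (E - 1))
        + K * (Y - Z) * z / ((z - 1) * (E - z))) := by
    rw [hB]
    linear_combination ((LN - Z) / (mu * (mu - 1) * (E - 1))
      + K * (Y - Z) * z / ((z - 1) * (E - z))) * hcoefB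
  have hAB1 : -(LN * (E - 1) / (1 - LN ^ 2)) * ((1 - LN * Z) / (mu * (mu - 1) * (E - 1)))
      + ((E - 1) / (1 - LN ^ 2)) * ((LN - Z) / (mu * (mu - 1) * (E - 1)))
      = -Z / (mu * (mu - 1)) := by
    rw [neg_div, neg_mul, div_mul_div_comm, div_mul_div_comm, ← neg_div, ← add_div]
    rw [show -(Z / (mu * (mu - 1))) = -Z / (mu * (mu - 1)) from neg_div _ _ |>.symm]
    rw [div_eq_div_iff
      (by exact mul_ne_zero hLN (mul_ne_zero (mul_ne_zero hmu hmu1) hE1))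
      (mul_ne_zero hmu hmu1)]
    ring
  have hAB2 : -(LN * (E - 1) / (1 - LN ^ 2)) * (K * LN * (Y - Z) * z / ((z - 1) * (E - z)))
      + ((E - 1) / (1 - LN ^ 2)) * (K * (Y - Z) * z / ((z - 1) * (E - z)))
      = K * (Y - Z) * z * (E - 1) / ((z - 1) * (E - z)) := by
    field_simp
    ring
  have hfinal : K * z * (E - 1) * (Z - Y) / ((z - 1) * (E - z))
      + (-Z / (mu * (mu - 1)) + K * (Y - Z) * z * (E - 1) / ((z - 1) * (E - z)))
      - 1 / mu + Z / (mu - 1) = (Z - 1) / mu := by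
    have c1 : K * z * (E - 1) * (Z - Y) / ((z - 1) * (E - z))
        + K * (Y - Z) * z * (E - 1) / ((z - 1) * (E - z)) = 0 := by
      rw [← add_div, show K * z * (E - 1) * (Z - Y) + K * (Y - Z) * z * (E - 1) = 0 from by
        ring, zero_div]
    have c2 : -Z / (mu * (mu - 1)) - 1 / mu + Z / (mu - 1) = (Z - 1) / mu := by
      field_simp
      ring
    linear_combination c1 + c2
  linear_combination hK3 + hA3 + hB3 + hA4 + hB4 + hAB1 + hAB2 + hfinal

theorem stmt9
    (N : ℕ) (hN : 1 ≤ N) (h : ℝ) (hh : h = 1 / N) (ω : ℝ)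
    (hfreq : ∀ k : ℤ, ω * h ≠ (k : ℝ))
    (p lam : ℝ) (hp : p = 1 + 2 * h * Real.exp h - Real.exp (2 * h))
    (hroot : p * lam ^ 2 - 2 * (1 - Real.exp (2 * h) + h * (Real.exp (2 * h) + 1)) * lam + p = 0)
    (hlam : |lam| < 1) (hlam0 : lam ≠ 0) (hlam2N : 1 - lam ^ (2 * N) ≠ 0)
    (K a1 b1 : ℂ)
    (hK : K = (Complex.exp (h : ℂ) - Complex.exp ((2 * (Real.pi : ℂ) * Complex.I * (ω : ℂ)) * (h : ℂ))) * (1 - Complex.exp ((2 * (Real.pi : ℂ) * Complex.I * (ω : ℂ)) * (h : ℂ) + (h : ℂ))) * (1 - Complex.exp ((2 * (Real.pi : ℂ) * Complex.I * (ω : ℂ)) * (h : ℂ))) ^ 2 / (2 * (Real.pi : ℂ) ^ 2 * (ω : ℂ) ^ 2 * (4 * (Real.pi : ℂ) ^ 2 * (ω : ℂ) ^ 2 + 1) * Complex.exp ((2 * (Real.pi : ℂ) * Complex.I * (ω : ℂ)) * (h : ℂ)) * ((1 - Complex.exp (2 * (h : ℂ))) * (1 - Complex.exp ((2 * (Real.pi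 : ℂ) * Complex.I * (ω : ℂ)) * (h : ℂ))) ^ 2 + 2 * (h : ℂ) * (Complex.exp (h : ℂ) - Complex.exp ((2 * (Real.pi : ℂ) * Complex.I * (ω : ℂ)) * (h : ℂ))) * (1 - Complex.exp ((2 * (Real.pi : ℂ) * Complex.I * (ω : ℂ)) * (h : ℂ) + (h : ℂ))))))
    (ha1 : a1 = (((lam : ℂ) - 1) * ((lam : ℂ) - Complex.exp (h : ℂ)) / ((lam : ℂ) * (1 - (lam : ℂ) ^ (2 * N)))) * ((1 - (lam : ℂ) ^ N * Complex.exp (2 * (Real.pi : ℂ) * Complex.I * (ω : ℂ))) / ((2 * (Real.pi : ℂ) * Complex.I * (ω : ℂ)) * ((2 * (Real.pi : ℂ) * Complex.I * (ω : ℂ)) - 1) * (Complex.exp (h : ℂ) - 1)) + K * (lam : ℂ) ^ N * (Complex.exp 1 - Complex.exp (2 * (Real.pi : ℂ) * Complex.I * (ω : ℂ))) * Complex.exp ((2 * (Real.pi : ℂ) * Complex.I * (ω : ℂ)) * (h : ℂ)) / ((Complex.exp ((2 * (Real.pi : ℂ) * Complex.I * (ω : ℂ)) * (h : ℂ)) -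 1) * (Complex.exp (h : ℂ) - Complex.exp ((2 * (Real.pi : ℂ) * Complex.I * (ω : ℂ)) * (h : ℂ))))))
    (hb1 : b1 = (((lam : ℂ) - 1) * (1 - (lam : ℂ) * Complex.exp (h : ℂ)) / ((lam : ℂ) * (1 - (lam : ℂ) ^ (2 * N)))) * (((lam : ℂ) ^ N - Complex.exp (2 * (Real.pi : ℂ) * Complex.I * (ω : ℂ))) / ((2 * (Real.pi : ℂ) * Complex.I * (ω : ℂ)) * ((2 * (Real.pi : ℂ) * Complex.I * (ω : ℂ)) - 1) * (Complex.exp (h : ℂ) - 1)) + K * (Complex.exp 1 - Complex.exp (2 * (Real.pi : ℂ) * Complex.I * (ω : ℂ))) * Complex.exp ((2 * (Real.pi : ℂ) * Complex.I * (ω : ℂ)) * (h : ℂ)) / ((Complex.exp ((2 * (Real.pi : ℂ) * Complex.I * (ω : ℂ)) * (h : ℂ)) - 1) * (Complex.exp (h : ℂ) - Complex.exp ((2 * (Real.pi : ℂ) * Complex.I * (ω : ℂ)) * (h : ℂ))))))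
    (C : ℕ → ℂ)
    (hC0 : C 0 = K * Complex.exp ((2 * (Real.pi : ℂ) * Complex.I * (ω : ℂ)) * (h : ℂ)) / (Complex.exp ((2 * (Real.pi : ℂ) * Complex.I * (ω : ℂ)) * (h : ℂ)) - 1) - 1 / (2 * (Real.pi : ℂ) * Complex.I * (ω : ℂ)) + a1 * (lam : ℂ) / ((lam : ℂ) - 1) + b1 * (lam : ℂ) ^ N / (1 - (lam : ℂ)))
    (hCmid : ∀ β : ℕ, 1 ≤ β → β ≤ N - 1 → C β = Complex.exp ((2 * (Real.pi : ℂ) * Complex.I * (ω : ℂ)) * (h : ℂ) * (β : ℂ)) * K + a1 * (lam : ℂ) ^ β + b1 * (lam : ℂ) ^ (N - β))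
    (hCN : C N = K * (Complex.exp (2 * (Real.pi : ℂ) * Complex.I * (ω : ℂ)) * Complex.exp (h : ℂ) / (Complex.exp (h : ℂ) - Complex.exp ((2 * (Real.pi : ℂ) * Complex.I * (ω : ℂ)) * (h : ℂ))) + Complex.exp ((2 * (Real.pi : ℂ) * Complex.I * (ω : ℂ)) * (h : ℂ) + 1) * (1 - Complex.exp (h : ℂ)) / ((Complex.exp ((2 * (Real.pi : ℂ) * Complex.I * (ω : ℂ)) * (h : ℂ)) - 1) * (Complex.exp (h : ℂ) - Complex.exp ((2 * (Real.pi : ℂ) * Complex.I * (ω : ℂ)) * (h : ℂ))))) + Complex.exp (2 * (Real.pi : ℂ) * Complex.I * (ω : ℂ)) / ((2 * (Real.pi : ℂ) * Complex.I * (ω : ℂ)) - 1) + a1 * (lam : ℂ) ^ N * Complex.exp (h : ℂ) / (Complex.exp (h : ℂ) - (lam : ℂ)) + b1 * (lam : ℂ) * Complex.exp (h : ℂ) / ((lam : ℂ) * Complex.exp (h : ℂ) - 1))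
    :
    ∑ β ∈ Finset.range (N + 1), C β = (Complex.exp (2 * (Real.pi : ℂ) * Complex.I * (ω : ℂ)) - 1) / (2 * (Real.pi : ℂ) * Complex.I * (ω : ℂ)) := by
  -- basic real facts
  have hNR : (0 : ℝ) < (N : ℝ) := by exact_mod_cast hN
  have hhpos : 0 < h := by rw [hh]; positivity
  have hhN : h * (N : ℝ) = 1 := by rw [hh]; field_simp
  set mu : ℂ := 2 * (Real.pi : ℂ) * Complex.I * (ω : ℂ) with hmu_def
  set z : ℂ := Complex.exp (mu * (h : ℂ)) with hz_def
  set E : ℂ := Complex.exp (h : ℂ) with hE_def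
  set Z : ℂ := Complex.exp mu with hZ_def
  set Y : ℂ := Complex.exp 1 with hY_def
  set L : ℂ := (lam : ℂ) with hL_def
  -- nonvanishing facts
  have hω : ω ≠ 0 := by
    intro hc; exact hfreq 0 (by simp [hc])
  have hmu0 : mu ≠ 0 := by
    simp only [hmu_def]
    simp [Real.pi_ne_zero, Complex.I_ne_zero, Complex.ofReal_ne_zero, hω]
  have hmu1 : mu - 1 ≠ 0 := by
    intro hc
    have : mu = 1 := by linear_combination hc
    have := congrArg Complex.re this
    simp [hmu_def, Complex.mul_re, Complex.mul_im] at this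
  have hz1 : z - 1 ≠ 0 := by
    intro hc
    have hz1' : z = 1 := by linear_combination hc
    rw [hz_def, Complex.exp_eq_one_iff] at hz1'
    obtain ⟨n, hn⟩ := hz1'
    apply hfreq n
    have h2 : ((ω * h : ℝ) : ℂ) = ((n : ℝ) : ℂ) := by
      have hπI : (2 : ℂ) * (Real.pi : ℂ) * Complex.I ≠ 0 := by
        simp [Real.pi_ne_zero, Complex.I_ne_zero]
      field_simp at hn ⊢
      push_cast
      -- hn : mu * h = n * (2 * π * I)
      have : ((ω : ℂ) * (h : ℂ)) * (2 * (Real.pi : ℂ) * Complex.I) = ((n : ℂ)) * (2 * (Real.pi : ℂ) * Complex.I) := by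
        rw [hmu_def] at hn; linear_combination hn
      exact mul_right_cancel₀ hπI this
    exact_mod_cast h2
  have hE1 : E - 1 ≠ 0 := by
    intro hc
    have : E = 1 := by linear_combination hc
    rw [hE_def, ← Complex.ofReal_exp, ← Complex.ofReal_one, Complex.ofReal_inj] at this
    have := Real.exp_pos h
    nlinarith [Real.add_one_le_exp h]
  have hEreal : E = ((Real.exp h : ℝ) : ℂ) := by rw [hE_def, Complex.ofReal_exp]
  have hexph1 : 1 < Real.exp h := by
    nlinarith [Real.add_one_le_exp h]
  have hEz : E - z ≠ 0 := by
    intro hc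
    have habs : ‖E‖ = ‖z‖ := by
      have : E = z := by linear_combination hc
      rw [this]
    rw [hE_def, hz_def, Complex.norm_exp, Complex.norm_exp] at habs
    have h1 : (h : ℂ).re = h := by simp
    have h2 : (mu * (h : ℂ)).re = 0 := by
      simp [hmu_def, Complex.mul_re, Complex.mul_im]
    rw [h1, h2, Real.exp_zero] at habs
    nlinarith
  have hlam1 : lam < 1 := (abs_lt.mp hlam).2
  have hlamm1 : -1 < lam := (abs_lt.mp hlam).1
  have hL1 : L - 1 ≠ 0 := by
    intro hc
    have : L = 1 := by linear_combination hc
    rw [hL_def, ← Complex.ofReal_one, Complex.ofReal_inj] at this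
    linarith
  have hEL : E - L ≠ 0 := by
    intro hc
    have : E = L := by linear_combination hc
    rw [hEreal, hL_def, Complex.ofReal_inj] at this
    linarith
  have hLE1 : L * E - 1 ≠ 0 := by
    intro hc
    have hreal : lam * Real.exp h = 1 := by
      have : L * E = 1 := by linear_combination hc
      rw [hEreal, hL_def, ← Complex.ofReal_mul, ← Complex.ofReal_one, Complex.ofReal_inj] at this
      exact this
    -- use the root equation to derive a contradiction
    set u := Real.exp h with hu
    have hu2 : Real.exp (2 * h) = u ^ 2 := by
      rw [two_mul, Real.exp_add, hu]; ring
    rw [hp, hu2] at hroot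
    have hupos : 0 < u := Real.exp_pos h
    have hlamu : lam = u⁻¹ := by field_simp; linarith [hreal]
    rw [hlamu] at hroot
    have hu0 : u ≠ 0 := ne_of_gt hupos
    have hkey : (u - 1) ^ 3 * (u + 1) = 0 := by
      field_simp at hroot
      nlinarith [hroot]
    have : u - 1 ≠ 0 := by nlinarith
    have : u + 1 ≠ 0 := by nlinarith
    have := pow_ne_zero 3 ‹u - 1 ≠ 0›
    exact (mul_ne_zero ‹(u-1)^3 ≠ 0› ‹u + 1 ≠ 0›) hkey
  have hL0 : L ≠ 0 := by
    simp [hL_def, Complex.ofReal_ne_zero]; exact hlam0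
  have hLN2 : 1 - (L ^ N) ^ 2 ≠ 0 := by
    have h0 : ((1 - lam ^ (2 * N) : ℝ) : ℂ) ≠ 0 := Complex.ofReal_ne_zero.mpr hlam2N
    push_cast at h0
    rw [← pow_mul, mul_comm N 2]
    exact h0
  -- power identities
  have hzN : z ^ N = Z := by
    rw [hz_def, hZ_def, ← Complex.exp_nat_mul]
    congr 1
    have : ((h : ℂ) * (N : ℂ)) = 1 := by
      rw [show ((h:ℂ) * (N:ℂ)) = ((h * (N:ℝ) : ℝ) : ℂ) by push_cast; ring, hhN]; simp
    calc (N : ℂ) * (mu * (h:ℂ)) = mu * ((h:ℂ) * (N:ℂ)) := by ring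
      _ = mu := by rw [this, mul_one]
  have hEN : E ^ N = Y := by
    rw [hE_def, hY_def, ← Complex.exp_nat_mul]
    congr 1
    rw [show ((N:ℂ) * (h:ℂ)) = ((h * (N:ℝ) : ℝ) : ℂ) by push_cast; ring, hhN]; simp
  -- evaluate middle sum
  have h1L : (1 : ℂ) - L ≠ 0 := fun hc => hL1 (by linear_combination -hc)
  have hzne1 : z ≠ 1 := fun hc => hz1 (by rw [hc]; ring)
  have hLne1 : L ≠ 1 := fun hc => hL1 (by rw [hc]; ring)
  have hmid : ∑ β ∈ Finset.Ico 1 N, C β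
      = K * (Z - z) / (z - 1) + a1 * (L ^ N - L) / (L - 1) + b1 * (L ^ N - L) / (L - 1) := by
    have step1 : ∀ β ∈ Finset.Ico 1 N, C β = z ^ β * K + a1 * L ^ β + b1 * L ^ (N - β) := by
      intro β hβ
      rw [Finset.mem_Ico] at hβ
      rw [hCmid β hβ.1 (by omega)]
      rw [show mu * (h : ℂ) * (β : ℂ) = (β : ℕ) * (mu * (h : ℂ)) by push_cast; ring,
        Complex.exp_nat_mul]
    rw [Finset.sum_congr rfl step1]
    rw [Finset.sum_add_distrib, Finset.sum_add_distrib, ← Finset.sum_mul, ← Finset.mul_sum,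
      ← Finset.mul_sum]
    have hgz : ∑ β ∈ Finset.Ico 1 N, z ^ β = (z ^ N - z) / (z - 1) := by
      rw [geom_sum_Ico hzne1 hN, pow_one]
    have hgL : ∑ β ∈ Finset.Ico 1 N, L ^ β = (L ^ N - L) / (L - 1) := by
      rw [geom_sum_Ico hLne1 hN, pow_one]
    have hrefl : ∑ β ∈ Finset.Ico 1 N, L ^ (N - β) = ∑ β ∈ Finset.Ico 1 N, L ^ β := by
      apply Finset.sum_nbij' (fun β => N - β) (fun β => N - β)
      · intro a ha; rw [Finset.mem_Ico] at ha ⊢; omega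
      · intro a ha; rw [Finset.mem_Ico] at ha ⊢; omega
      · intro a ha; rw [Finset.mem_Ico] at ha; omega
      · intro a ha; rw [Finset.mem_Ico] at ha; omega
      · intro a ha; rfl
    rw [hgz, hgL, hrefl, hgL, hzN]
    ring
  -- assemble total sum
  rw [Finset.sum_range_succ, Finset.range_eq_Ico, Finset.sum_eq_sum_Ico_succ_bot (by omega : 0 < N)]
  rw [hC0, hCN, hmid]
  rw [Complex.exp_add]
  -- apply key identity
  have hA' : a1 = ((L - 1) * (L - E) / (L * (1 - (L ^ N) ^ 2))) *
      ((1 - L ^ N * Z) / (mu * (mu - 1) * (E - 1)) + K * L ^ N * (Y - Z) * z / ((z - 1) * (E - z))) := by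
    rw [ha1, mul_comm 2 N, pow_mul]
  have hB' : b1 = ((L - 1) * (1 - L * E) / (L * (1 - (L ^ N) ^ 2))) *
      ((L ^ N - Z) / (mu * (mu - 1) * (E - 1)) + K * (Y - Z) * z / ((z - 1) * (E - z))) := by
    rw [hb1, mul_comm 2 N, pow_mul]
  exact keyid z E Z Y L (L ^ N) mu K a1 b1 hz1 hEz hmu0 hmu1 hE1 hL1 hEL hLE1 hL0 hLN2 hA' hB'
end

section
/- With the coefficients C_0, …, C_N as defined in the context (the Theorem-6 optimal coefficients for ω ∈ ℝ with ωh ∉ ℤ), one has ∑_{β=0}^{N} C_β·e^{−hβ} = (e^{2πiω−1} − 1)/(2πiω − 1), i.e. the quadrature formula ∫_0^1 e^{2πiωx} φ(x) dx ≅ ∑_{β=0}^N C_β φ(hβ) is exact for the function e^{−x}. -/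
lemma geomIco (x : ℂ) (hx : x ≠ 1) (N : ℕ) (hN : 1 ≤ N) :
    ∑ β ∈ Finset.Ico 1 N, x ^ β = (x ^ N - x) / (x - 1) := by
  have hx1 : x - 1 ≠ 0 := sub_ne_zero.mpr hx
  have h1 : ∑ β ∈ Finset.range N, x ^ β = x ^ 0 + ∑ β ∈ Finset.Ico 1 N, x ^ β := by
    rw [Finset.range_eq_Ico, Finset.sum_eq_sum_Ico_succ_bot hN]
  have h0 := geom_sum_mul x N
  rw [h1, pow_zero] at h0
  rw [eq_div_iff hx1]
  linear_combination h0


set_option maxHeartbeats 4000000 in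
theorem stmt10
    (N : ℕ) (hN : 1 ≤ N) (h : ℝ) (hh : h = 1 / N) (ω : ℝ)
    (hfreq : ∀ k : ℤ, ω * h ≠ (k : ℝ))
    (p lam : ℝ) (hp : p = 1 + 2 * h * Real.exp h - Real.exp (2 * h))
    (hroot : p * lam ^ 2 - 2 * (1 - Real.exp (2 * h) + h * (Real.exp (2 * h) + 1)) * lam + p = 0)
    (hlam : |lam| < 1) (hlam0 : lam ≠ 0) (hlam2N : 1 - lam ^ (2 * N) ≠ 0)
    (K a1 b1 : ℂ)
    (hK : K = (Complex.exp (h : ℂ) - Complex.exp ((2 * (Real.pi : ℂ) * Complex.I * (ω : ℂ)) * (h : ℂ))) * (1 - Complex.exp ((2 * (Real.pi : ℂ) * Complex.I * (ω : ℂ)) * (h : ℂ) + (h : ℂ))) * (1 - Complex.exp ((2 * (Real.pi : ℂ) * Complex.I * (ω : ℂ)) * (h : ℂ))) ^ 2 / (2 * (Real.pi : ℂ) ^ 2 * (ω : ℂ) ^ 2 * (4 * (Real.pi : ℂ) ^ 2 * (ω : ℂ) ^ 2 + 1) * Complex.exp ((2 * (Real.pi : ℂ) * Complex.I * (ω : ℂ))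 * (h : ℂ)) * ((1 - Complex.exp (2 * (h : ℂ))) * (1 - Complex.exp ((2 * (Real.pi : ℂ) * Complex.I * (ω : ℂ)) * (h : ℂ))) ^ 2 + 2 * (h : ℂ) * (Complex.exp (h : ℂ) - Complex.exp ((2 * (Real.pi : ℂ) * Complex.I * (ω : ℂ)) * (h : ℂ))) * (1 - Complex.exp ((2 * (Real.pi : ℂ) * Complex.I * (ω : ℂ)) * (h : ℂ) + (h : ℂ))))))
    (ha1 : a1 = (((lam : ℂ) - 1) * ((lam : ℂ) - Complex.exp (h : ℂ)) / ((lam : ℂ) * (1 - (lam : ℂ) ^ (2 * N)))) * ((1 - (lam : ℂ) ^ N * Complex.exp (2 * (Real.pi : ℂ) * Complex.I * (ω : ℂ))) / ((2 * (Real.pi : ℂ) * Complex.I * (ω : ℂ)) * ((2 * (Real.pi : ℂ) * Complex.I * (ω : ℂ)) - 1) * (Complex.exp (h : ℂ) - 1)) + K * (lam : ℂ) ^ N * (Complex.exp 1 - Complex.exp (2 * (Real.pi : ℂ) * Complex.I * (ω : ℂ))) * Complex.exp ((2 * (Real.pi : ℂ) * Complex.I * (ω : ℂ)) * (h : ℂ))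 / ((Complex.exp ((2 * (Real.pi : ℂ) * Complex.I * (ω : ℂ)) * (h : ℂ)) - 1) * (Complex.exp (h : ℂ) - Complex.exp ((2 * (Real.pi : ℂ) * Complex.I * (ω : ℂ)) * (h : ℂ))))))
    (hb1 : b1 = (((lam : ℂ) - 1) * (1 - (lam : ℂ) * Complex.exp (h : ℂ)) / ((lam : ℂ) * (1 - (lam : ℂ) ^ (2 * N)))) * (((lam : ℂ) ^ N - Complex.exp (2 * (Real.pi : ℂ) * Complex.I * (ω : ℂ))) / ((2 * (Real.pi : ℂ) * Complex.I * (ω : ℂ)) * ((2 * (Real.pi : ℂ) * Complex.I * (ω : ℂ)) - 1) * (Complex.exp (h : ℂ) - 1)) + K * (Complex.exp 1 - Complex.exp (2 * (Real.pi : ℂ) * Complex.I * (ω : ℂ))) * Complex.exp ((2 * (Real.pi : ℂ) * Complex.I * (ω : ℂ)) * (h : ℂ)) / ((Complex.exp ((2 * (Real.pi : ℂ) * Complex.I * (ω : ℂ)) * (h : ℂ)) - 1) * (Complex.exp (h : ℂ) - Complex.exp ((2 * (Real.pi : ℂ) * Complex.I * (ω : ℂ)) * (h : ℂ))))))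
    (C : ℕ → ℂ)
    (hC0 : C 0 = K * Complex.exp ((2 * (Real.pi : ℂ) * Complex.I * (ω : ℂ)) * (h : ℂ)) / (Complex.exp ((2 * (Real.pi : ℂ) * Complex.I * (ω : ℂ)) * (h : ℂ)) - 1) - 1 / (2 * (Real.pi : ℂ) * Complex.I * (ω : ℂ)) + a1 * (lam : ℂ) / ((lam : ℂ) - 1) + b1 * (lam : ℂ) ^ N / (1 - (lam : ℂ)))
    (hCmid : ∀ β : ℕ, 1 ≤ β → β ≤ N - 1 → C β = Complex.exp ((2 * (Real.pi : ℂ) * Complex.I * (ω : ℂ)) * (h : ℂ) * (β : ℂ)) * K + a1 * (lam : ℂ) ^ β + b1 * (lam : ℂ) ^ (N - β))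
    (hCN : C N = K * (Complex.exp (2 * (Real.pi : ℂ) * Complex.I * (ω : ℂ)) * Complex.exp (h : ℂ) / (Complex.exp (h : ℂ) - Complex.exp ((2 * (Real.pi : ℂ) * Complex.I * (ω : ℂ)) * (h : ℂ))) + Complex.exp ((2 * (Real.pi : ℂ) * Complex.I * (ω : ℂ)) * (h : ℂ) + 1) * (1 - Complex.exp (h : ℂ)) / ((Complex.exp ((2 * (Real.pi : ℂ) * Complex.I * (ω : ℂ)) * (h : ℂ)) - 1) * (Complex.exp (h : ℂ) - Complex.exp ((2 * (Real.pi : ℂ) * Complex.I * (ω : ℂ)) * (h : ℂ))))) + Complex.exp (2 * (Real.pi : ℂ) * Complex.I * (ω : ℂ)) / ((2 * (Real.pi : ℂ) * Complex.I * (ω : ℂ)) - 1) + a1 * (lam : ℂ) ^ N * Complex.exp (h : ℂ) / (Complex.exp (h : ℂ) - (lam : ℂ)) + b1 * (lam : ℂ) * Complex.exp (h : ℂ) / ((lam : ℂ) * Complex.exp (h : ℂ) - 1))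
    :
    ∑ β ∈ Finset.range (N + 1), C β * Complex.exp (-((h * (β : ℝ) : ℝ) : ℂ)) =
      (Complex.exp ((2 * (Real.pi : ℂ) * Complex.I * (ω : ℂ)) - 1) - 1) / ((2 * (Real.pi : ℂ) * Complex.I * (ω : ℂ)) - 1) := by
  
  clear hK
  set T := 2 * (Real.pi : ℂ) * Complex.I * (ω : ℂ) with hT_def
  set z := Complex.exp (T * (h : ℂ)) with hz_def
  set q := Complex.exp (h : ℂ) with hq_def
  set m := (lam : ℂ) with hm_def
  set e1 := Complex.exp 1 with he1_def
  set E := Complex.exp T with hE_def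
  -- basic real facts
  have hNR : (0:ℝ) < (N : ℝ) := by exact_mod_cast hN
  have hh0 : 0 < h := by rw [hh]; positivity
  have hhN : h * (N : ℝ) = 1 := by rw [hh]; field_simp
  have hu1 : 1 < Real.exp h := by
    rw [← Real.exp_zero]; exact Real.exp_lt_exp.mpr hh0
  have hlam' := abs_lt.mp hlam
  have hω0 : ω ≠ 0 := by
    intro h0; exact hfreq 0 (by simp [h0])
  -- λ * e^h ≠ 1 via hroot
  have hlamu : lam * Real.exp h ≠ 1 := by
    intro hlu
    set u := Real.exp h with hu_def
    have he2 : Real.exp (2 * h) = u ^ 2 := by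
      rw [two_mul, Real.exp_add]; ring
    rw [hp, he2] at hroot
    have hfin : (u - 1) ^ 3 * (u + 1) = 0 := by
      linear_combination (-(u ^ 2)) * hroot +
        ((1 + 2 * h * u - u ^ 2) * (1 + lam * u) - 2 * (1 - u ^ 2 + h * (u ^ 2 + 1)) * u) * hlu
    have hpos : 0 < (u - 1) ^ 3 * (u + 1) :=
      mul_pos (pow_pos (by linarith) 3) (by linarith)
    linarith
  -- complex nonvanishing facts
  have hq0 : q ≠ 0 := Complex.exp_ne_zero _
  have hz0 : z ≠ 0 := Complex.exp_ne_zero _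
  have he10 : e1 ≠ 0 := Complex.exp_ne_zero _
  have hm0 : m ≠ 0 := by
    rw [hm_def]; exact_mod_cast hlam0
  have hqR : q = ((Real.exp h : ℝ) : ℂ) := by rw [hq_def, Complex.ofReal_exp]
  have hT0 : T ≠ 0 := by
    rw [hT_def]
    exact mul_ne_zero (mul_ne_zero (mul_ne_zero two_ne_zero
      (Complex.ofReal_ne_zero.mpr Real.pi_ne_zero)) Complex.I_ne_zero)
      (Complex.ofReal_ne_zero.mpr hω0)
  have hT1 : T - 1 ≠ 0 := by
    rw [sub_ne_zero, hT_def]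
    intro hTeq
    have := congrArg Complex.re hTeq
    simp [Complex.mul_re, Complex.mul_im] at this
  have hq1 : q - 1 ≠ 0 := by
    rw [sub_ne_zero, hqR]
    intro hqe
    have : Real.exp h = 1 := by exact_mod_cast hqe
    linarith
  have hz1 : z - 1 ≠ 0 := by
    rw [sub_ne_zero, hz_def]
    intro hze
    rw [Complex.exp_eq_one_iff] at hze
    obtain ⟨n, hn⟩ := hze
    apply hfreq n
    have h2πI : (2 * (Real.pi : ℂ) * Complex.I) ≠ 0 :=
      mul_ne_zero (mul_ne_zero two_ne_zero (Complex.ofReal_ne_zero.mpr Real.pi_ne_zero))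
        Complex.I_ne_zero
    have : ((ω * h : ℝ) : ℂ) = (n : ℂ) := by
      apply mul_right_cancel₀ h2πI
      push_cast
      rw [hT_def] at hn
      linear_combination hn
    exact_mod_cast this
  have hqz : q - z ≠ 0 := by
    rw [sub_ne_zero]
    intro hqe
    have habs := congrArg (fun w : ℂ => ‖w‖) hqe
    rw [hq_def, hz_def, Complex.norm_exp, Complex.norm_exp] at habs
    have hre : ((T : ℂ) * (h : ℂ)).re = 0 := by
      rw [hT_def]; simp [Complex.mul_re, Complex.mul_im]
    rw [hre, Complex.ofReal_re, Real.exp_zero] at habs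
    linarith
  have hm1 : m - 1 ≠ 0 := by
    rw [sub_ne_zero, hm_def]
    intro hme
    have : lam = 1 := by exact_mod_cast hme
    linarith [hlam'.2]
  have h1m : (1:ℂ) - m ≠ 0 := by
    intro hme; apply hm1; linear_combination -hme
  have hqm : q - m ≠ 0 := by
    rw [hqR, hm_def]
    intro hme
    have : Real.exp h - lam = 0 := by exact_mod_cast hme
    linarith [hlam'.2]
  have hmq1 : m * q - 1 ≠ 0 := by
    rw [hqR, hm_def]
    intro hme
    have : lam * Real.exp h - 1 = 0 := by exact_mod_cast hme
    exact hlamu (by linarith)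
  have hM2 : (1:ℂ) - m ^ (2 * N) ≠ 0 := by
    rw [hm_def]
    intro hme
    apply hlam2N
    exact_mod_cast hme
  have hMN0 : m ^ N ≠ 0 := pow_ne_zero _ hm0
  -- geometric ratios
  have hA : z * q⁻¹ ≠ 1 := by
    intro H
    apply hqz
    have h2 : z = q := by field_simp at H; exact H
    rw [h2, sub_self]
  have hB : m * q⁻¹ ≠ 1 := by
    intro H
    apply hqm
    have h2 : m = q := by field_simp at H; exact H
    rw [h2, sub_self]
  have hD : q⁻¹ / m ≠ 1 := by
    intro H
    apply hmq1
    field_simp at H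
    linear_combination -H
  have hA' : z * q⁻¹ - 1 ≠ 0 := sub_ne_zero.mpr hA
  have hB' : m * q⁻¹ - 1 ≠ 0 := sub_ne_zero.mpr hB
  have hD' : q⁻¹ / m - 1 ≠ 0 := sub_ne_zero.mpr hD
  -- power relations
  have h1C : (h : ℂ) * (N : ℂ) = 1 := by
    rw [← Complex.ofReal_natCast, ← Complex.ofReal_mul, hhN, Complex.ofReal_one]
  have hqN : q ^ N = e1 := by
    rw [hq_def, he1_def, ← Complex.exp_nat_mul]
    congr 1
    rw [mul_comm]; exact h1C
  have hzN : z ^ N = E := by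
    rw [hz_def, hE_def, ← Complex.exp_nat_mul]
    congr 1
    linear_combination T * h1C
  have hw : Complex.exp (-(h : ℂ)) = q⁻¹ := by rw [hq_def, Complex.exp_neg]
  -- conversion lemmas for the geometric fractions
  have hzq : z - q ≠ 0 := fun H => hqz (by linear_combination -H)
  have hmq : m - q ≠ 0 := fun H => hqm (by linear_combination -H)
  have h1mq : (1:ℂ) - m * q ≠ 0 := fun H => hmq1 (by linear_combination -H)
  have c1 : (E * e1⁻¹ - z * q⁻¹) / (z * q⁻¹ - 1) = (E * q - z * e1) / (e1 * (z - q)) := by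
    rw [div_eq_div_iff hA' (mul_ne_zero he10 hzq)]
    field_simp
  have c2 : (m ^ N * e1⁻¹ - m * q⁻¹) / (m * q⁻¹ - 1) = (m ^ N * q - m * e1) / (e1 * (m - q)) := by
    rw [div_eq_div_iff hB' (mul_ne_zero he10 hmq)]
    field_simp
  have c3 : m ^ N * ((e1⁻¹ / m ^ N - q⁻¹ / m) / (q⁻¹ / m - 1))
      = (m * q - m ^ N * e1) / (e1 * (1 - m * q)) := by
    rw [mul_div_assoc' (m ^ N) _ _, div_eq_div_iff hD' (mul_ne_zero he10 h1mq)]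
    field_simp
  -- the middle sum
  have hmid : ∑ β ∈ Finset.Ico 1 N, C β * Complex.exp (-((h * (β : ℝ) : ℝ) : ℂ)) =
      K * ((E * q - z * e1) / (e1 * (z - q)))
      + a1 * ((m ^ N * q - m * e1) / (e1 * (m - q)))
      + b1 * ((m * q - m ^ N * e1) / (e1 * (1 - m * q))) := by
    have step : ∀ β ∈ Finset.Ico 1 N,
        C β * Complex.exp (-((h * (β : ℝ) : ℝ) : ℂ)) =
        K * (z * q⁻¹) ^ β + a1 * (m * q⁻¹) ^ β + b1 * m ^ N * (q⁻¹ / m) ^ β := by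
      intro β hβ
      obtain ⟨hβ1, hβN⟩ := Finset.mem_Ico.mp hβ
      rw [hCmid β hβ1 (Nat.le_sub_one_of_lt hβN)]
      have e2 : Complex.exp (T * (h : ℂ) * (β : ℂ)) = z ^ β := by
        rw [hz_def, ← Complex.exp_nat_mul]
        congr 1; ring
      have e1' : Complex.exp (-((h * (β : ℝ) : ℝ) : ℂ)) = (q⁻¹) ^ β := by
        rw [← hw, ← Complex.exp_nat_mul]
        congr 1; push_cast; ring
      have e3 : m ^ (N - β) = m ^ N / m ^ β := pow_sub₀ m hm0 (le_of_lt hβN)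
      rw [e2, e1', e3, mul_pow, mul_pow, div_pow]
      ring
    rw [Finset.sum_congr rfl step]
    rw [Finset.sum_add_distrib, Finset.sum_add_distrib,
      ← Finset.mul_sum, ← Finset.mul_sum, ← Finset.mul_sum]
    rw [geomIco _ hA N hN, geomIco _ hB N hN, geomIco _ hD N hN]
    simp only [mul_pow, div_pow, inv_pow]
    rw [hzN, hqN, c1, c2, mul_assoc b1 (m ^ N) _, c3]
  -- assemble
  rw [Finset.sum_range_succ, Finset.range_eq_Ico,
    Finset.sum_eq_sum_Ico_succ_bot (show 0 < N from hN)]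
  rw [show (0:ℕ)+1 = 1 from rfl]
  rw [hmid, hhN]
  rw [hC0, hCN]
  simp only [Nat.cast_zero, mul_zero, Complex.ofReal_zero, neg_zero, Complex.exp_zero,
    mul_one, Complex.ofReal_one]
  rw [Complex.exp_add, Complex.exp_sub, ← hz_def, ← he1_def, ← hE_def]
  rw [show Complex.exp (-(1:ℂ)) = e1⁻¹ by rw [he1_def, Complex.exp_neg]]
  rw [show m ^ (2 * N) = (m ^ N) ^ 2 by rw [← pow_mul, mul_comm]] at ha1 hb1 hM2
  clear_value T z q m e1 E
  clear hT_def hz_def hq_def hm_def he1_def hE_def hqR hCmid hC0 hCN hroot hp hfreq hh hlam hlamu hhN hmid hh0 hu1 hlam' hlam0 hlam2N hN hNR h1C hw hω0 c1 c2 c3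
  generalize hMM : m ^ N = M at ha1 hb1 hM2 hMN0 ⊢
  have hK0 : z / (z - 1) + (E * q - z * e1) / (e1 * (z - q))
      + (E * q / (q - z) + z * e1 * (1 - q) / ((z - 1) * (q - z))) * e1⁻¹ = 0 := by
    field_simp
    ring
  have hAcl : m / (m - 1) + (M * q - m * e1) / (e1 * (m - q)) + M * q * e1⁻¹ / (q - m)
      = m * (1 - q) / ((m - 1) * (m - q)) := by
    field_simp
    ring
  have hBcl : M / (1 - m) + (m * q - M * e1) / (e1 * (1 - m * q)) + m * q * e1⁻¹ / (m * q - 1)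
      = M * m * (1 - q) / ((1 - m) * (1 - m * q)) := by
    field_simp
    ring
  have hAB : a1 * (m * (1 - q) / ((m - 1) * (m - q))) + b1 * (M * m * (1 - q) / ((1 - m) * (1 - m * q)))
      = -(1 / (T * (T - 1))) := by
    rw [show K * M * (e1 - E) * z / ((z - 1) * (q - z))
        = M * (K * (e1 - E) * z / ((z - 1) * (q - z))) from by ring] at ha1
    generalize hX : K * (e1 - E) * z / ((z - 1) * (q - z)) = X at ha1 hb1
    have hPa : (m - 1) * (m - q) / (m * (1 - M ^ 2)) * (m * (1 - q) / ((m - 1) * (m - q)))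
        = (1 - q) / (1 - M ^ 2) := by
      field_simp
    have hPb : (m - 1) * (1 - m * q) / (m * (1 - M ^ 2)) * (M * m * (1 - q) / ((1 - m) * (1 - m * q)))
        = -(M * (1 - q) / (1 - M ^ 2)) := by
      field_simp
      ring
    rw [ha1, hb1]
    calc (m - 1) * (m - q) / (m * (1 - M ^ 2)) * ((1 - M * E) / (T * (T - 1) * (q - 1)) + M * X) *
            (m * (1 - q) / ((m - 1) * (m - q)))
          + (m - 1) * (1 - m * q) / (m * (1 - M ^ 2)) * ((M - E) / (T * (T - 1) * (q - 1)) + X) *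
            (M * m * (1 - q) / ((1 - m) * (1 - m * q)))
        = ((m - 1) * (m - q) / (m * (1 - M ^ 2)) * (m * (1 - q) / ((m - 1) * (m - q)))) *
            ((1 - M * E) / (T * (T - 1) * (q - 1)) + M * X)
          + ((m - 1) * (1 - m * q) / (m * (1 - M ^ 2)) * (M * m * (1 - q) / ((1 - m) * (1 - m * q)))) *
            ((M - E) / (T * (T - 1) * (q - 1)) + X) := by ring
      _ = (1 - q) / (1 - M ^ 2) * ((1 - M * E) / (T * (T - 1) * (q - 1)) + M * X)
          + (-(M * (1 - q) / (1 - M ^ 2))) * ((M - E) / (T * (T - 1) * (q - 1)) + X) := by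
            rw [hPa, hPb]
      _ = -(1 / (T * (T - 1))) := by
            field_simp
            ring
  have hFin : (-(1 / (T * (T - 1))) : ℂ) - 1 / T + E * e1⁻¹ / (T - 1) = (E / e1 - 1) / (T - 1) := by
    field_simp
    ring
  linear_combination K * hK0 + a1 * hAcl + b1 * hBcl + hAB + hFin
end

section
/- For every real ω ≠ 0 and every y ∈ [0,1], ∫_0^1 e^{2πiωx}·G_2(x − y) dx = (e^{−y}/4)·(e^{2πiω+1} − 2e^{(2πiω+1)y} + 1)/(2πiω+1) − (e^{y}/4)·(e^{2πiω−1} − 2e^{(2πiω−1)y} + 1)/(2πiω−1) + (e^{2πiω} − 2e^{2πiωy} + 1)/(2(2πiω)²) + (y·e^{2πiω} + y − e^{2πiω})/(4πiω). -/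
set_option maxHeartbeats 1600000

open Complex intervalIntegral MeasureTheory Set

theorem stmt12 (ω : ℝ) (hω : ω ≠ 0) (y : ℝ) (hy0 : 0 ≤ y) (hy1 : y ≤ 1)
    (G2 : ℝ → ℝ)
    (hG2 : ∀ x : ℝ, G2 x = Real.sign x / 2 * ((Real.exp x - Real.exp (-x)) / 2 - x))
    :
    ∫ x in (0:ℝ)..1, Complex.exp ((2 * (Real.pi : ℂ) * Complex.I * (ω : ℂ)) * (x : ℂ)) * ((G2 (x - y) : ℝ) : ℂ) =
      (Complex.exp (-((y : ℝ) : ℂ)) / 4) * (Complex.exp ((2 * (Real.pi : ℂ) * Complex.I * (ω : ℂ)) + 1) - 2 * Complex.exp (((2 * (Real.pi : ℂ) * Complex.I * (ω : ℂ)) + 1) * ((y : ℝ) : ℂ)) + 1) / ((2 * (Real.pi : ℂ) * Complex.I * (ω : ℂ)) + 1) - (Complex.exp ((y : ℝ) : ℂ) / 4) * (Complex.exp ((2 * (Real.pi : ℂ) * Complex.I * (ω : ℂ)) - 1) - 2 * Complex.exp (((2 * (Real.pi : ℂ) * Complex.I * (ω : ℂ)) - 1) * ((y : ℝ) : ℂ))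 + 1) / ((2 * (Real.pi : ℂ) * Complex.I * (ω : ℂ)) - 1) + (Complex.exp (2 * (Real.pi : ℂ) * Complex.I * (ω : ℂ)) - 2 * Complex.exp ((2 * (Real.pi : ℂ) * Complex.I * (ω : ℂ)) * ((y : ℝ) : ℂ)) + 1) / (2 * (2 * (Real.pi : ℂ) * Complex.I * (ω : ℂ)) ^ 2) + (((y : ℝ) : ℂ) * Complex.exp (2 * (Real.pi : ℂ) * Complex.I * (ω : ℂ)) + ((y : ℝ) : ℂ) - Complex.exp (2 * (Real.pi : ℂ) * Complex.I * (ω : ℂ))) / (4 * (Real.pi : ℂ) * Complex.I * (ω : ℂ)) := by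
  set c : ℂ := 2 * (Real.pi : ℂ) * Complex.I * (ω : ℂ) with hc_def
  have hc : c ≠ 0 := by
    simp [hc_def, Real.pi_ne_zero, Complex.I_ne_zero, hω, Complex.ofReal_ne_zero]
  have hcre : c.re = 0 := by simp [hc_def]
  have hc1 : c + 1 ≠ 0 := by
    intro h
    have : (c + 1).re = 0 := by rw [h]; simp
    simp [hcre] at this
  have hc2 : c - 1 ≠ 0 := by
    intro h
    have : (c - 1).re = 0 := by rw [h]; simp
    simp [hcre] at this
  set g : ℝ → ℂ := fun t => Complex.exp (c*t) * ((Complex.exp ((t:ℂ) - (y:ℂ)) - Complex.exp ((y:ℂ) - (t:ℂ)))/4 - ((t:ℂ) - (y:ℂ))/2) with hg_def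
  set F : ℝ → ℂ := fun t => Complex.exp (-(y:ℂ)) * Complex.exp ((c+1)*(t:ℂ)) / (c+1) / 4
      - Complex.exp (y:ℂ) * Complex.exp ((c-1)*(t:ℂ)) / (c-1) / 4
      - ((t:ℂ) - (y:ℂ)) * Complex.exp (c*(t:ℂ)) / c / 2 + Complex.exp (c*(t:ℂ)) / c^2 / 2 with hF_def
  clear_value c g F
  have hgc : Continuous g := by
    rw [hg_def]; fun_prop
  have hF : ∀ t : ℝ, HasDerivAt F (g t) t := by
    intro t
    have he1 : HasDerivAt (fun z : ℂ => Complex.exp ((c+1)*z)) (Complex.exp ((c+1)*(t:ℂ)) * (c+1)) (t:ℂ) := by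
      simpa using ((hasDerivAt_id (t:ℂ)).const_mul (c+1)).cexp
    have he2 : HasDerivAt (fun z : ℂ => Complex.exp ((c-1)*z)) (Complex.exp ((c-1)*(t:ℂ)) * (c-1)) (t:ℂ) := by
      simpa using ((hasDerivAt_id (t:ℂ)).const_mul (c-1)).cexp
    have he3 : HasDerivAt (fun z : ℂ => Complex.exp (c*z)) (Complex.exp (c*(t:ℂ)) * c) (t:ℂ) := by
      simpa using ((hasDerivAt_id (t:ℂ)).const_mul c).cexp
    have hid : HasDerivAt (fun z : ℂ => z - (y:ℂ)) 1 (t:ℂ) := (hasDerivAt_id (t:ℂ)).sub_const _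
    have hfull := (((((he1.const_mul (Complex.exp (-(y:ℂ)))).div_const (c+1)).div_const 4).sub
        (((he2.const_mul (Complex.exp (y:ℂ))).div_const (c-1)).div_const 4)).sub
        (((hid.mul he3).div_const c).div_const 2)).add ((he3.div_const (c^2)).div_const 2)
    have hcomp := hfull.comp_ofReal
    convert hcomp using 1
    case e'_8 => rw [hF_def]; rfl
    have hgt : g t = Complex.exp (-(y:ℂ)) * Complex.exp ((c+1)*(t:ℂ)) / 4
        - Complex.exp ((y:ℂ)) * Complex.exp ((c-1)*(t:ℂ)) / 4
        - Complex.exp (c*(t:ℂ)) * ((t:ℂ)-(y:ℂ))/2 := by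
      calc g t = Complex.exp (c*(t:ℂ)) * Complex.exp ((t:ℂ)-(y:ℂ))/4
          - Complex.exp (c*(t:ℂ)) * Complex.exp ((y:ℂ)-(t:ℂ))/4
          - Complex.exp (c*(t:ℂ))*((t:ℂ)-(y:ℂ))/2 := by rw [hg_def]; ring
        _ = _ := by
            rw [← Complex.exp_add, ← Complex.exp_add,
              show c*(t:ℂ) + ((t:ℂ)-(y:ℂ)) = -(y:ℂ) + (c+1)*(t:ℂ) by ring,
              show c*(t:ℂ) + ((y:ℂ)-(t:ℂ)) = (y:ℂ) + (c-1)*(t:ℂ) by ring,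
              Complex.exp_add, Complex.exp_add]
    have i1 : (c+1)*(c+1)⁻¹ = 1 := mul_inv_cancel₀ hc1
    have i2 : (c-1)*(c-1)⁻¹ = 1 := mul_inv_cancel₀ hc2
    have i3 : c*c⁻¹ = 1 := mul_inv_cancel₀ hc
    rw [hgt]
    linear_combination (-(Complex.exp (-(y:ℂ)) * Complex.exp ((c+1)*(t:ℂ))/4)) * i1
      + (Complex.exp (y:ℂ) * Complex.exp ((c-1)*(t:ℂ))/4) * i2
      + (Complex.exp (c*(t:ℂ))*((t:ℂ)-(y:ℂ))/2 - Complex.exp (c*(t:ℂ))/(2*c)) * i3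
  have heq1 : EqOn (fun x:ℝ => Complex.exp (c*(x:ℂ)) * ((G2 (x - y) : ℝ) : ℂ)) (fun x => -g x) (uIcc 0 y) := by
    intro x hx
    rw [uIcc_of_le hy0] at hx
    rcases lt_or_eq_of_le hx.2 with h | h
    · simp only [hG2, hg_def]
      rw [Real.sign_of_neg (by linarith : x - y < 0)]
      push_cast
      rw [neg_sub]
      ring
    · subst h
      simp [hG2, hg_def, Real.sign_zero]
  have heq2 : EqOn (fun x:ℝ => Complex.exp (c*(x:ℂ)) * ((G2 (x - y) : ℝ) : ℂ)) g (uIcc y 1) := by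
    intro x hx
    rw [uIcc_of_le hy1] at hx
    rcases lt_or_eq_of_le hx.1 with h | h
    · simp only [hG2, hg_def]
      rw [Real.sign_of_pos (by linarith : 0 < x - y)]
      push_cast
      rw [neg_sub]
      ring
    · subst h
      simp [hG2, hg_def, Real.sign_zero]
  have hi1 : IntervalIntegrable (fun x:ℝ => Complex.exp (c*(x:ℂ)) * ((G2 (x - y) : ℝ) : ℂ)) volume 0 y :=
    ((hgc.neg).intervalIntegrable 0 y).congr
      (fun x hx => (heq1 (uIoc_subset_uIcc hx)).symm)
  have hi2 : IntervalIntegrable (fun x:ℝ => Complex.exp (c*(x:ℂ)) * ((G2 (x - y) : ℝ) : ℂ)) volume y 1 :=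
    (hgc.intervalIntegrable y 1).congr
      (fun x hx => (heq2 (uIoc_subset_uIcc hx)).symm)
  have key1 : ∫ x in (0:ℝ)..y, g x = F y - F 0 :=
    intervalIntegral.integral_eq_sub_of_hasDerivAt (fun t _ => hF t) (hgc.intervalIntegrable _ _)
  have key2 : ∫ x in y..(1:ℝ), g x = F 1 - F y :=
    intervalIntegral.integral_eq_sub_of_hasDerivAt (fun t _ => hF t) (hgc.intervalIntegrable _ _)
  rw [← intervalIntegral.integral_add_adjacent_intervals hi1 hi2,
    intervalIntegral.integral_congr heq1, intervalIntegral.integral_congr heq2,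
    intervalIntegral.integral_neg, key1, key2]
  rw [show (4:ℂ) * (Real.pi:ℂ) * Complex.I * (ω:ℂ) = 2*c by rw [hc_def]; ring]
  simp only [hF_def, Complex.ofReal_zero, Complex.ofReal_one, mul_zero, mul_one,
    Complex.exp_zero, sub_zero, zero_sub]
  ring
end

section
/- Let N ≥ 2 be an integer and h = 1/N. If complex numbers C_0, …, C_N, p_0, d satisfy the homogeneous system ∑_{γ=0}^{N} C_γ·G_2(hβ − hγ) + p_0 + d·e^{−hβ} = 0 for all β = 0, 1, …, N, together with ∑_{γ=0}^{N} C_γ = 0 and ∑_{γ=0}^{N} C_γ·e^{−hγ} = 0, then C_0 = ⋯ = C_N = 0, p_0 = 0, and d = 0. Consequently, for any right-hand sides the system of linear equations (2.1)–(2.3) has a unique solution. -/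
open Finset
namespace Stmt13Aux

noncomputable def ee (h : ℝ) (t : ℕ) : ℝ := Real.exp (-(h * t))
noncomputable def aa (h : ℝ) (t : ℕ) : ℝ := -(h * t)/2 + 1 - ee h t
noncomputable def bb (h : ℝ) (t : ℕ) : ℝ := Real.exp (h * t)/4 + ee h t / 2
noncomputable def cc (h : ℝ) (t : ℕ) : ℝ := -(h * t)/2 - ee h t
noncomputable def dd (h : ℝ) (t : ℕ) : ℝ := Real.exp (h * t)/4
def chi (k t : ℕ) : ℝ := if k < t then 1 else 0
noncomputable def om (h : ℝ) (k β γ : ℕ) : ℝ :=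
  h - (Real.exp (h * (k+1)) - Real.exp (h * k)) * (ee h β + ee h γ)
    + (Real.exp (2 * (h * (k+1))) - Real.exp (2 * (h * k)))/2 * ee h β * ee h γ
noncomputable def Sc (N : ℕ) (c : ℕ → ℂ) (k : ℕ) : ℂ :=
  ∑ γ ∈ range (N+1), ((chi k γ : ℝ) : ℂ) * c γ
noncomputable def Tc (N : ℕ) (h : ℝ) (c : ℕ → ℂ) (k : ℕ) : ℂ :=
  ∑ γ ∈ range (N+1), ((chi k γ : ℝ) : ℂ) * c γ * ((ee h γ : ℝ) : ℂ)
noncomputable def qq (N : ℕ) (h : ℝ) (c : ℕ → ℂ) (k : ℕ) : ℂ :=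
  (h : ℂ) * (star (Sc N c k) * Sc N c k)
  - ((Real.exp (h*(k+1)) - Real.exp (h*k) : ℝ) : ℂ)
      * (star (Sc N c k) * Tc N h c k + star (Tc N h c k) * Sc N c k)
  + (((Real.exp (2*(h*(k+1))) - Real.exp (2*(h*k)))/2 : ℝ) : ℂ) * (star (Tc N h c k) * Tc N h c k)
noncomputable def rr (N : ℕ) (h : ℝ) (c : ℕ → ℂ) (k : ℕ) : ℝ :=
  h * Complex.normSq (Sc N c k)
  - (Real.exp (h*(k+1)) - Real.exp (h*k)) * (2 * ((star (Sc N c k) * Tc N h c k).re))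
  + ((Real.exp (2*(h*(k+1))) - Real.exp (2*(h*k)))/2) * Complex.normSq (Tc N h c k)

lemma chi_mul_chi (k β γ : ℕ) : chi k β * chi k γ = chi k (min β γ) := by
  by_cases h1 : k < β <;> by_cases h2 : k < γ <;>
    simp [chi, h1, h2, lt_min_iff, *]

lemma sum_chi_mul (N m : ℕ) (hm : m ≤ N) (f : ℕ → ℝ) :
    ∑ k ∈ range N, chi k m * (f (k+1) - f k) = f m - f 0 := by
  have h1 : ∑ k ∈ range m, chi k m * (f (k+1) - f k)
      = ∑ k ∈ range N, chi k m * (f (k+1) - f k) := by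
    refine Finset.sum_subset (Finset.range_subset_range.2 hm) ?_
    intro k _ hk
    simp only [mem_range, not_lt] at hk
    simp [chi, not_lt.2 hk]
  rw [← h1]
  have h2 : ∑ k ∈ range m, chi k m * (f (k+1) - f k)
      = ∑ k ∈ range m, (f (k+1) - f k) := by
    refine Finset.sum_congr rfl fun k hk => ?_
    simp only [mem_range] at hk
    simp [chi, hk]
  rw [h2, Finset.sum_range_sub]

lemma g2_eq (s : ℝ) :
    Real.sign s / 2 * ((Real.exp s - Real.exp (-s)) / 2 - s)
      = (Real.exp s + Real.exp (-s))/4 - Real.exp (-|s|)/2 - |s|/2 := by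
  rcases lt_trichotomy s 0 with hs | hs | hs
  · rw [Real.sign_of_neg hs, abs_of_neg hs]
    simp only [neg_neg]
    ring
  · subst hs; norm_num
  · rw [Real.sign_of_pos hs, abs_of_pos hs]
    ring

lemma ksum (N : ℕ) (h : ℝ) (β γ : ℕ) (hβ : β ≤ N) (hγ : γ ≤ N) :
    ∑ k ∈ range N, chi k β * chi k γ * om h k β γ
      = h * (min β γ) - (Real.exp (h * (min β γ)) - 1) * (ee h β + ee h γ)
        + (Real.exp (2 * (h * (min β γ))) - 1)/2 * ee h β * ee h γ := by
  have hm : min β γ ≤ N := le_trans (min_le_left _ _) hβ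
  set f1 : ℕ → ℝ := fun t => h * (t : ℝ) with hf1
  set f2 : ℕ → ℝ := fun t => Real.exp (h * (t : ℝ)) with hf2
  set f3 : ℕ → ℝ := fun t => Real.exp (2 * (h * (t : ℝ))) with hf3
  have e1 : ∀ k, chi k β * chi k γ * om h k β γ
      = chi k (min β γ) * (f1 (k+1) - f1 k)
        - (chi k (min β γ) * (f2 (k+1) - f2 k)) * (ee h β + ee h γ)
        + (chi k (min β γ) * (f3 (k+1) - f3 k)) / 2 * ee h β * ee h γ := by
    intro k
    rw [← chi_mul_chi k β γ]
    simp only [om, hf1, hf2, hf3]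
    push_cast
    ring
  calc ∑ k ∈ range N, chi k β * chi k γ * om h k β γ
      = (∑ k ∈ range N, chi k (min β γ) * (f1 (k+1) - f1 k))
        - (∑ k ∈ range N, chi k (min β γ) * (f2 (k+1) - f2 k)) * (ee h β + ee h γ)
        + (∑ k ∈ range N, chi k (min β γ) * (f3 (k+1) - f3 k)) / 2 * ee h β * ee h γ := by
        rw [Finset.sum_mul, Finset.sum_div, Finset.sum_mul, Finset.sum_mul, ← Finset.sum_sub_distrib, ← Finset.sum_add_distrib]
        exact Finset.sum_congr rfl fun k _ => by rw [e1 k]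
    _ = _ := by
        rw [sum_chi_mul N _ hm f1, sum_chi_mul N _ hm f2, sum_chi_mul N _ hm f3]
        simp only [hf1, hf2, hf3, Nat.cast_zero, mul_zero, Real.exp_zero]
        ring

lemma master (h : ℝ) (hh : 0 ≤ h) (N β γ : ℕ) (hβ : β ≤ N) (hγ : γ ≤ N) :
    Real.sign (h*(β:ℝ) - h*(γ:ℝ))/2 *
      ((Real.exp (h*(β:ℝ) - h*(γ:ℝ)) - Real.exp (-(h*(β:ℝ) - h*(γ:ℝ))))/2 - (h*(β:ℝ) - h*(γ:ℝ)))
    = aa h β + bb h β * ee h γ + cc h γ + ee h β * dd h γ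
      + ∑ k ∈ range N, chi k β * chi k γ * om h k β γ := by
  rw [g2_eq, ksum N h β γ hβ hγ]
  rcases le_total β γ with hbg | hbg
  · rw [min_eq_left hbg]
    have h1 : h*(β:ℝ) - h*(γ:ℝ) ≤ 0 := by
      have := mul_le_mul_of_nonneg_left (Nat.cast_le.2 hbg : (β:ℝ) ≤ γ) hh
      linarith
    rw [abs_of_nonpos h1]
    simp only [aa, bb, cc, dd, ee, neg_neg, neg_sub, Real.exp_sub, Real.exp_neg, two_mul,
      Real.exp_add]
    field_simp
    ring
  · rw [min_eq_right hbg]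
    have h1 : 0 ≤ h*(β:ℝ) - h*(γ:ℝ) := by
      have := mul_le_mul_of_nonneg_left (Nat.cast_le.2 hbg : (γ:ℝ) ≤ β) hh
      linarith
    rw [abs_of_nonneg h1]
    simp only [aa, bb, cc, dd, ee, neg_neg, neg_sub, Real.exp_sub, Real.exp_neg, two_mul,
      Real.exp_add]
    field_simp
    ring

lemma Q_eq (N : ℕ) (h : ℝ) (c : ℕ → ℂ)
    (H2 : ∑ γ ∈ range (N+1), c γ = 0)
    (H3 : ∑ γ ∈ range (N+1), c γ * ((ee h γ : ℝ) : ℂ) = 0) :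
    ∑ β ∈ range (N+1), ∑ γ ∈ range (N+1), star (c β) * c γ *
      ((aa h β + bb h β * ee h γ + cc h γ + ee h β * dd h γ
         + ∑ k ∈ range N, chi k β * chi k γ * om h k β γ : ℝ) : ℂ)
    = ∑ k ∈ range N, qq N h c k := by
  have H2' : ∑ β ∈ range (N+1), star (c β) = 0 := by
    have := congrArg star H2
    simpa [star_sum] using this
  have H3' : ∑ β ∈ range (N+1), star (c β) * ((ee h β : ℝ) : ℂ) = 0 := by
    have := congrArg star H3
    simpa [star_sum, star_mul', Complex.star_def, Complex.conj_ofReal] using this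
  have hS : ∀ k, star (Sc N c k) = ∑ β ∈ range (N+1), ((chi k β : ℝ) : ℂ) * star (c β) := by
    intro k
    simp [Sc, star_sum, star_mul', Complex.star_def, Complex.conj_ofReal]
  have hT : ∀ k, star (Tc N h c k)
      = ∑ β ∈ range (N+1), ((chi k β : ℝ) : ℂ) * star (c β) * ((ee h β : ℝ) : ℂ) := by
    intro k
    simp [Tc, star_sum, star_mul', Complex.star_def, Complex.conj_ofReal, mul_assoc]
  -- the five pieces
  have S1 : ∑ β ∈ range (N+1), ∑ γ ∈ range (N+1),
      (star (c β) * ((aa h β : ℝ) : ℂ)) * c γ = 0 := by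
    refine Finset.sum_eq_zero fun β _ => ?_
    rw [← Finset.mul_sum, H2, mul_zero]
  have S2 : ∑ β ∈ range (N+1), ∑ γ ∈ range (N+1),
      (star (c β) * ((bb h β : ℝ) : ℂ)) * (c γ * ((ee h γ : ℝ) : ℂ)) = 0 := by
    refine Finset.sum_eq_zero fun β _ => ?_
    rw [← Finset.mul_sum, H3, mul_zero]
  have S3 : ∑ β ∈ range (N+1), ∑ γ ∈ range (N+1),
      star (c β) * (c γ * ((cc h γ : ℝ) : ℂ)) = 0 := by
    have e : ∀ β ∈ range (N+1), ∑ γ ∈ range (N+1), star (c β) * (c γ * ((cc h γ : ℝ) : ℂ))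
        = star (c β) * ∑ γ ∈ range (N+1), c γ * ((cc h γ : ℝ) : ℂ) :=
      fun β _ => by rw [← Finset.mul_sum]
    rw [Finset.sum_congr rfl e, ← Finset.sum_mul, H2', zero_mul]
  have S4 : ∑ β ∈ range (N+1), ∑ γ ∈ range (N+1),
      (star (c β) * ((ee h β : ℝ) : ℂ)) * (c γ * ((dd h γ : ℝ) : ℂ)) = 0 := by
    have e : ∀ β ∈ range (N+1), ∑ γ ∈ range (N+1),
        (star (c β) * ((ee h β : ℝ) : ℂ)) * (c γ * ((dd h γ : ℝ) : ℂ))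
        = (star (c β) * ((ee h β : ℝ) : ℂ)) * ∑ γ ∈ range (N+1), c γ * ((dd h γ : ℝ) : ℂ) :=
      fun β _ => by rw [← Finset.mul_sum]
    rw [Finset.sum_congr rfl e, ← Finset.sum_mul, H3', zero_mul]
  -- per-k product lemmas
  have L1 : ∀ k, ∑ β ∈ range (N+1), ∑ γ ∈ range (N+1),
      (((chi k β : ℝ) : ℂ) * star (c β)) * (((chi k γ : ℝ) : ℂ) * c γ)
      = star (Sc N c k) * Sc N c k := by
    intro k; rw [hS k, Sc, Finset.sum_mul_sum]
  have L2 : ∀ k, ∑ β ∈ range (N+1), ∑ γ ∈ range (N+1),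
      (((chi k β : ℝ) : ℂ) * star (c β)) * (((chi k γ : ℝ) : ℂ) * c γ * ((ee h γ : ℝ) : ℂ))
      = star (Sc N c k) * Tc N h c k := by
    intro k; rw [hS k, Tc, Finset.sum_mul_sum]
  have L3 : ∀ k, ∑ β ∈ range (N+1), ∑ γ ∈ range (N+1),
      (((chi k β : ℝ) : ℂ) * star (c β) * ((ee h β : ℝ) : ℂ)) * (((chi k γ : ℝ) : ℂ) * c γ)
      = star (Tc N h c k) * Sc N c k := by
    intro k; rw [hT k, Sc, Finset.sum_mul_sum]
  have L4 : ∀ k, ∑ β ∈ range (N+1), ∑ γ ∈ range (N+1),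
      (((chi k β : ℝ) : ℂ) * star (c β) * ((ee h β : ℝ) : ℂ))
        * (((chi k γ : ℝ) : ℂ) * c γ * ((ee h γ : ℝ) : ℂ))
      = star (Tc N h c k) * Tc N h c k := by
    intro k; rw [hT k, Tc, Finset.sum_mul_sum]
  have key : ∀ k ∈ range N, ∑ β ∈ range (N+1), ∑ γ ∈ range (N+1),
      star (c β) * c γ * ((chi k β : ℝ) : ℂ) * ((chi k γ : ℝ) : ℂ) * ((om h k β γ : ℝ) : ℂ)
      = qq N h c k := by
    intro k _
    calc ∑ β ∈ range (N+1), ∑ γ ∈ range (N+1),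
        star (c β) * c γ * ((chi k β : ℝ) : ℂ) * ((chi k γ : ℝ) : ℂ) * ((om h k β γ : ℝ) : ℂ)
        = ∑ β ∈ range (N+1), ∑ γ ∈ range (N+1),
            ((h:ℂ) * ((((chi k β : ℝ) : ℂ) * star (c β)) * (((chi k γ : ℝ) : ℂ) * c γ))
             - ((Real.exp (h*(k+1)) - Real.exp (h*k) : ℝ) : ℂ)
                * ((((chi k β : ℝ) : ℂ) * star (c β)) * (((chi k γ : ℝ) : ℂ) * c γ * ((ee h γ : ℝ) : ℂ))
                   + (((chi k β : ℝ) : ℂ) * star (c β) * ((ee h β : ℝ) : ℂ)) * (((chi k γ : ℝ) : ℂ) * c γ))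
             + (((Real.exp (2*(h*(k+1))) - Real.exp (2*(h*k)))/2 : ℝ) : ℂ)
                * ((((chi k β : ℝ) : ℂ) * star (c β) * ((ee h β : ℝ) : ℂ))
                   * (((chi k γ : ℝ) : ℂ) * c γ * ((ee h γ : ℝ) : ℂ)))) := by
          refine Finset.sum_congr rfl fun β _ => Finset.sum_congr rfl fun γ _ => ?_
          simp only [om]
          push_cast
          ring
      _ = qq N h c k := by
          simp only [Finset.sum_add_distrib, Finset.sum_sub_distrib, ← Finset.mul_sum,
            ← Finset.sum_mul]
          rw [qq, ← hS k, ← hT k,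
            show Sc N c k = ∑ γ ∈ range (N+1), ((chi k γ : ℝ) : ℂ) * c γ from rfl,
            show Tc N h c k = ∑ γ ∈ range (N+1), ((chi k γ : ℝ) : ℂ) * c γ * ((ee h γ : ℝ) : ℂ) from rfl]
  have S5 : ∑ β ∈ range (N+1), ∑ γ ∈ range (N+1), star (c β) * c γ *
      ((∑ k ∈ range N, chi k β * chi k γ * om h k β γ : ℝ) : ℂ)
      = ∑ k ∈ range N, qq N h c k := by
    calc ∑ β ∈ range (N+1), ∑ γ ∈ range (N+1), star (c β) * c γ *
        ((∑ k ∈ range N, chi k β * chi k γ * om h k β γ : ℝ) : ℂ)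
        = ∑ β ∈ range (N+1), ∑ γ ∈ range (N+1), ∑ k ∈ range N,
            star (c β) * c γ * ((chi k β : ℝ) : ℂ) * ((chi k γ : ℝ) : ℂ) * ((om h k β γ : ℝ) : ℂ) := by
          refine Finset.sum_congr rfl fun β _ => Finset.sum_congr rfl fun γ _ => ?_
          push_cast
          rw [Finset.mul_sum]
          exact Finset.sum_congr rfl fun k _ => by ring
      _ = ∑ β ∈ range (N+1), ∑ k ∈ range N, ∑ γ ∈ range (N+1),
            star (c β) * c γ * ((chi k β : ℝ) : ℂ) * ((chi k γ : ℝ) : ℂ) * ((om h k β γ : ℝ) : ℂ) :=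
          Finset.sum_congr rfl fun β _ => Finset.sum_comm
      _ = ∑ k ∈ range N, ∑ β ∈ range (N+1), ∑ γ ∈ range (N+1),
            star (c β) * c γ * ((chi k β : ℝ) : ℂ) * ((chi k γ : ℝ) : ℂ) * ((om h k β γ : ℝ) : ℂ) :=
          Finset.sum_comm
      _ = ∑ k ∈ range N, qq N h c k := Finset.sum_congr rfl key
  calc ∑ β ∈ range (N+1), ∑ γ ∈ range (N+1), star (c β) * c γ *
      ((aa h β + bb h β * ee h γ + cc h γ + ee h β * dd h γ
         + ∑ k ∈ range N, chi k β * chi k γ * om h k β γ : ℝ) : ℂ)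
      = ∑ β ∈ range (N+1), ∑ γ ∈ range (N+1),
          ((star (c β) * ((aa h β : ℝ) : ℂ)) * c γ
           + ((star (c β) * ((bb h β : ℝ) : ℂ)) * (c γ * ((ee h γ : ℝ) : ℂ))
           + (star (c β) * (c γ * ((cc h γ : ℝ) : ℂ))
           + ((star (c β) * ((ee h β : ℝ) : ℂ)) * (c γ * ((dd h γ : ℝ) : ℂ))
           + star (c β) * c γ * ((∑ k ∈ range N, chi k β * chi k γ * om h k β γ : ℝ) : ℂ))))) := by
        refine Finset.sum_congr rfl fun β _ => Finset.sum_congr rfl fun γ _ => ?_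
        push_cast
        ring
    _ = ∑ k ∈ range N, qq N h c k := by
        simp only [Finset.sum_add_distrib]
        rw [S1, S2, S3, S4, S5]
        ring

lemma key_ineq (h : ℝ) (h0 : 0 < h) (hhalf : h ≤ 1/2) :
    2 * (Real.exp h - 1) < h * (Real.exp h + 1) := by
  have hb : |Real.exp h - ∑ m ∈ range 4, h^m / m.factorial|
      ≤ |h|^4 * ((4:ℕ).succ / ((4:ℕ).factorial * 4)) :=
    Real.exp_bound (by rw [abs_of_pos h0]; linarith) (by norm_num)
  have hsum : ∑ m ∈ range 4, h^m / m.factorial = 1 + h + h^2/2 + h^3/6 := by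
    simp [Finset.sum_range_succ, Nat.factorial]
  rw [hsum, abs_of_pos h0] at hb
  norm_num [Nat.factorial] at hb
  have hb2 : Real.exp h ≤ 1 + h + h^2/2 + h^3/6 + h^4 * (5/96) := by
    have := abs_le.1 hb
    nlinarith [this.2]
  nlinarith [pow_pos h0 3, pow_pos h0 4]

lemma coeff_pos (h : ℝ) (h0 : 0 < h) (hhalf : h ≤ 1/2) (k : ℕ) :
    (Real.exp (h*(k+1)) - Real.exp (h*k))^2
      < h * ((Real.exp (2*(h*(k+1))) - Real.exp (2*(h*k)))/2) := by
  have hE : Real.exp (h*(k+1)) = Real.exp (h*k) * Real.exp h := by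
    rw [← Real.exp_add]; ring_nf
  have h2E : Real.exp (2*(h*(k+1))) = Real.exp (h*(k+1))^2 := by
    rw [two_mul, Real.exp_add]; ring
  have h2E' : Real.exp (2*(h*k)) = Real.exp (h*k)^2 := by
    rw [two_mul, Real.exp_add]; ring
  have hEpos : 0 < Real.exp (h*k) := Real.exp_pos _
  have hg : 1 < Real.exp h := by
    have := Real.add_one_lt_exp (ne_of_gt h0); linarith
  have hkey := key_ineq h h0 hhalf
  have hd : 0 < h*(Real.exp h + 1) - 2*(Real.exp h - 1) := by linarith
  rw [hE, h2E, h2E', hE]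
  nlinarith [mul_pos (mul_pos (mul_pos hEpos hEpos) (by linarith : (0:ℝ) < Real.exp h - 1)) hd]

lemma posdef (a b c2 : ℝ) (S T : ℂ) (ha : 0 < a) (hb : b^2 < a*c2)
    (hz : a * Complex.normSq S - b * (2*((star S * T).re)) + c2 * Complex.normSq T = 0) :
    S = 0 ∧ T = 0 := by
  have h1 : Complex.normSq S = S.re^2 + S.im^2 := by rw [Complex.normSq_apply]; ring
  have h2 : Complex.normSq T = T.re^2 + T.im^2 := by rw [Complex.normSq_apply]; ring
  have h3 : (star S * T).re = S.re*T.re + S.im*T.im := by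
    simp [Complex.mul_re, Complex.star_def, Complex.conj_re, Complex.conj_im]
    try ring
  rw [h1, h2, h3] at hz
  have key : (a*S.re - b*T.re)^2 + (a*S.im - b*T.im)^2 + (a*c2-b^2)*(T.re^2+T.im^2)
      = a * (a * (S.re^2 + S.im^2) - b * (2*(S.re*T.re + S.im*T.im)) + c2 * (T.re^2+T.im^2)) := by
    ring
  rw [hz, mul_zero] at key
  have hT : T.re^2 + T.im^2 = 0 := by
    have hnn : 0 ≤ T.re^2 + T.im^2 := by positivity
    nlinarith [sq_nonneg (a*S.re - b*T.re), sq_nonneg (a*S.im - b*T.im)]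
  have hTre : T.re = 0 := by
    have : T.re^2 = 0 := le_antisymm (by nlinarith [sq_nonneg T.im]) (sq_nonneg _)
    exact pow_eq_zero_iff (two_ne_zero) |>.1 this
  have hTim : T.im = 0 := by
    have : T.im^2 = 0 := le_antisymm (by nlinarith [sq_nonneg T.re]) (sq_nonneg _)
    exact pow_eq_zero_iff (two_ne_zero) |>.1 this
  rw [hTre, hTim] at hz
  have h4 : a * (S.re^2 + S.im^2) = 0 := by linear_combination hz
  have hs : S.re^2 + S.im^2 = 0 := (mul_eq_zero.1 h4).resolve_left (ne_of_gt ha)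
  have hSre : S.re = 0 := by
    have : S.re^2 = 0 := le_antisymm (by nlinarith [sq_nonneg S.im]) (sq_nonneg _)
    exact pow_eq_zero_iff (two_ne_zero) |>.1 this
  have hSim : S.im = 0 := by
    have : S.im^2 = 0 := le_antisymm (by nlinarith [sq_nonneg S.re]) (sq_nonneg _)
    exact pow_eq_zero_iff (two_ne_zero) |>.1 this
  exact ⟨Complex.ext hSre hSim, Complex.ext hTre hTim⟩

lemma nonneg_of (a b c2 : ℝ) (S T : ℂ) (ha : 0 < a) (hb : b^2 < a*c2) :
    0 ≤ a * Complex.normSq S - b * (2*((star S * T).re)) + c2 * Complex.normSq T := by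
  have h1 : Complex.normSq S = S.re^2 + S.im^2 := by rw [Complex.normSq_apply]; ring
  have h2 : Complex.normSq T = T.re^2 + T.im^2 := by rw [Complex.normSq_apply]; ring
  have h3 : (star S * T).re = S.re*T.re + S.im*T.im := by
    simp [Complex.mul_re, Complex.star_def, Complex.conj_re, Complex.conj_im]
    try ring
  rw [h1, h2, h3]
  nlinarith [sq_nonneg (a*S.re - b*T.re), sq_nonneg (a*S.im - b*T.im), sq_nonneg T.re, sq_nonneg T.im]

lemma Sc_succ_diff (N : ℕ) (c : ℕ → ℂ) (k : ℕ) (hk : k + 1 < N + 1) :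
    Sc N c k - Sc N c (k+1) = c (k+1) := by
  unfold Sc
  rw [← Finset.sum_sub_distrib]
  rw [Finset.sum_eq_single (k+1)]
  · simp [chi]
  · intro γ _ hγ
    have : chi k γ = chi (k+1) γ := by
      unfold chi
      rcases Nat.lt_or_ge k γ with h1 | h1
      · have : k + 1 < γ := lt_of_le_of_ne h1 (Ne.symm hγ)
        simp [h1, this]
      · simp [not_lt.2 h1, not_lt.2 (le_trans h1 (Nat.le_succ k))]
    rw [this]; ring
  · intro hmem
    exact absurd (Finset.mem_range.2 hk) hmem

lemma Sc_zero_eq (N : ℕ) (c : ℕ → ℂ) :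
    Sc N c 0 = (∑ γ ∈ range (N+1), c γ) - c 0 := by
  unfold Sc
  rw [Finset.sum_range_succ' (fun γ => ((chi 0 γ : ℝ) : ℂ) * c γ) N, Finset.sum_range_succ' c N]
  simp [chi]

lemma Sc_top (N : ℕ) (c : ℕ → ℂ) : Sc N c N = 0 := by
  unfold Sc
  refine Finset.sum_eq_zero fun γ hγ => ?_
  have : ¬ N < γ := not_lt.2 (Nat.lt_succ_iff.1 (Finset.mem_range.1 hγ))
  simp [chi, this]

lemma qq_eq_rr (N : ℕ) (h : ℝ) (c : ℕ → ℂ) (k : ℕ) : qq N h c k = ((rr N h c k : ℝ) : ℂ) := by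
  set S := Sc N c k
  set T := Tc N h c k
  have e1 : star S * S = (Complex.normSq S : ℂ) := by
    rw [Complex.star_def, mul_comm, Complex.mul_conj]
  have e4 : star T * T = (Complex.normSq T : ℂ) := by
    rw [Complex.star_def, mul_comm, Complex.mul_conj]
  have e2 : star S * T + star T * S = ((2 * (star S * T).re : ℝ) : ℂ) := by
    have h5 : star T * S = star (star S * T) := by
      rw [star_mul', star_star]; ring
    rw [h5, Complex.star_def, Complex.add_conj]
    try push_cast
    try ring
  rw [qq, rr, e1, e4, e2]
  push_cast
  ring


lemma core (N : ℕ) (hN : 2 ≤ N) (h : ℝ) (hh : h = 1/N) (c : ℕ → ℂ) (p0 d : ℂ)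
    (Heq : ∀ β ∈ range (N+1),
      ∑ γ ∈ range (N+1), c γ * ((Real.sign (h*(β:ℝ) - h*(γ:ℝ)) / 2 *
        ((Real.exp (h*(β:ℝ) - h*(γ:ℝ)) - Real.exp (-(h*(β:ℝ) - h*(γ:ℝ))))/2
          - (h*(β:ℝ) - h*(γ:ℝ))) : ℝ) : ℂ)
        + p0 + d * Complex.exp (-((h*(β:ℝ) : ℝ) : ℂ)) = 0)
    (H2 : ∑ γ ∈ range (N+1), c γ = 0)
    (H3 : ∑ γ ∈ range (N+1), c γ * Complex.exp (-((h*(γ:ℝ) : ℝ) : ℂ)) = 0) :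
    (∀ β ∈ range (N+1), c β = 0) ∧ p0 = 0 ∧ d = 0 := by
  have hN0 : (0:ℝ) < N := by
    have : (2:ℝ) ≤ N := by exact_mod_cast hN
    linarith
  have h0 : 0 < h := by rw [hh]; positivity
  have hhalf : h ≤ 1/2 := by
    rw [hh]
    rw [div_le_div_iff₀ hN0 (by norm_num)]
    have : (2:ℝ) ≤ N := by exact_mod_cast hN
    linarith
  have hE : ∀ t : ℕ, Complex.exp (-((h*(t:ℝ) : ℝ) : ℂ)) = ((ee h t : ℝ) : ℂ) := by
    intro t
    rw [ee, Complex.ofReal_exp, Complex.ofReal_neg]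
  have H3' : ∑ γ ∈ range (N+1), c γ * ((ee h γ : ℝ) : ℂ) = 0 := by
    rw [← H3]
    exact Finset.sum_congr rfl fun γ _ => by rw [hE]
  have H2s : ∑ β ∈ range (N+1), star (c β) = 0 := by
    have := congrArg star H2
    simpa [star_sum] using this
  have H3s : ∑ β ∈ range (N+1), star (c β) * ((ee h β : ℝ) : ℂ) = 0 := by
    have := congrArg star H3'
    simpa [star_sum, star_mul', Complex.star_def, Complex.conj_ofReal] using this
  set g2v : ℕ → ℕ → ℝ := fun β γ => Real.sign (h*(β:ℝ) - h*(γ:ℝ)) / 2 *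
      ((Real.exp (h*(β:ℝ) - h*(γ:ℝ)) - Real.exp (-(h*(β:ℝ) - h*(γ:ℝ))))/2
        - (h*(β:ℝ) - h*(γ:ℝ))) with hg2v
  have Heq' : ∀ β ∈ range (N+1),
      ∑ γ ∈ range (N+1), c γ * ((g2v β γ : ℝ) : ℂ) + p0 + d * ((ee h β : ℝ) : ℂ) = 0 := by
    intro β hβ
    rw [← hE β]
    exact Heq β hβ
  have Q0 : ∑ β ∈ range (N+1), ∑ γ ∈ range (N+1),
      star (c β) * (c γ * ((g2v β γ : ℝ) : ℂ)) = 0 := by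
    have sum0 : ∑ β ∈ range (N+1), (star (c β) * ∑ γ ∈ range (N+1), c γ * ((g2v β γ : ℝ) : ℂ)
        + star (c β) * p0 + star (c β) * (d * ((ee h β : ℝ) : ℂ))) = 0 := by
      refine Finset.sum_eq_zero fun β hβ => ?_
      rw [← mul_add, ← mul_add, Heq' β hβ, mul_zero]
    rw [Finset.sum_add_distrib, Finset.sum_add_distrib] at sum0
    have hB : ∑ β ∈ range (N+1), star (c β) * p0 = 0 := by
      rw [← Finset.sum_mul, H2s, zero_mul]
    have hC : ∑ β ∈ range (N+1), star (c β) * (d * ((ee h β : ℝ) : ℂ)) = 0 := by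
      have e : ∀ β ∈ range (N+1), star (c β) * (d * ((ee h β : ℝ) : ℂ))
          = d * (star (c β) * ((ee h β : ℝ) : ℂ)) := fun β _ => by ring
      rw [Finset.sum_congr rfl e, ← Finset.mul_sum, H3s, mul_zero]
    have hA : ∀ β ∈ range (N+1), star (c β) * ∑ γ ∈ range (N+1), c γ * ((g2v β γ : ℝ) : ℂ)
        = ∑ γ ∈ range (N+1), star (c β) * (c γ * ((g2v β γ : ℝ) : ℂ)) :=
      fun β _ => Finset.mul_sum _ _ _
    rw [hB, hC, add_zero, add_zero, Finset.sum_congr rfl hA] at sum0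
    exact sum0
  have QQ : ∑ k ∈ range N, qq N h c k = 0 := by
    calc ∑ k ∈ range N, qq N h c k
        = ∑ β ∈ range (N+1), ∑ γ ∈ range (N+1), star (c β) * c γ *
            ((aa h β + bb h β * ee h γ + cc h γ + ee h β * dd h γ
              + ∑ k ∈ range N, chi k β * chi k γ * om h k β γ : ℝ) : ℂ) :=
          (Q_eq N h c H2 H3').symm
      _ = ∑ β ∈ range (N+1), ∑ γ ∈ range (N+1),
            star (c β) * (c γ * ((g2v β γ : ℝ) : ℂ)) := by
          refine Finset.sum_congr rfl fun β hβ => Finset.sum_congr rfl fun γ hγ => ?_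
          rw [hg2v]
          rw [← master h h0.le N β γ (Nat.lt_succ_iff.1 (mem_range.1 hβ))
              (Nat.lt_succ_iff.1 (mem_range.1 hγ))]
          ring
      _ = 0 := Q0
  have Rsum : ∑ k ∈ range N, rr N h c k = 0 := by
    have hco : ((∑ k ∈ range N, rr N h c k : ℝ) : ℂ) = 0 := by
      push_cast
      rw [← QQ]
      exact Finset.sum_congr rfl fun k _ => (qq_eq_rr N h c k).symm
    exact_mod_cast hco
  have hrnn : ∀ k ∈ range N, 0 ≤ rr N h c k := by
    intro k _
    exact nonneg_of h _ _ _ _ h0 (coeff_pos h h0 hhalf k)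
  have hr0 : ∀ k ∈ range N, rr N h c k = 0 :=
    (Finset.sum_eq_zero_iff_of_nonneg hrnn).1 Rsum
  have hST : ∀ k, k < N → Sc N c k = 0 ∧ Tc N h c k = 0 := by
    intro k hk
    exact posdef h _ _ _ _ h0 (coeff_pos h h0 hhalf k) (hr0 k (mem_range.2 hk))
  have hSall : ∀ k, k ≤ N → Sc N c k = 0 := by
    intro k hk
    rcases lt_or_eq_of_le hk with hk' | hk'
    · exact (hST k hk').1
    · rw [hk']; exact Sc_top N c
  have hcz : ∀ β ∈ range (N+1), c β = 0 := by
    intro β hβ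
    rcases Nat.eq_zero_or_pos β with h1 | h1
    · subst h1
      have := Sc_zero_eq N c
      rw [H2, hSall 0 (by omega)] at this
      linear_combination this
    · obtain ⟨k, rfl⟩ : ∃ k, β = k + 1 := ⟨β - 1, by omega⟩
      have hkN : k + 1 < N + 1 := mem_range.1 hβ
      have hd := Sc_succ_diff N c k hkN
      rw [hSall k (by omega), hSall (k+1) (by omega)] at hd
      linear_combination -hd
  refine ⟨hcz, ?_⟩
  have hzero : ∀ β ∈ range (N+1), ∑ γ ∈ range (N+1), c γ * ((g2v β γ : ℝ) : ℂ) = 0 :=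
    fun β _ => Finset.sum_eq_zero fun γ hγ => by rw [hcz γ hγ, zero_mul]
  have e0 := Heq' 0 (mem_range.2 (by omega))
  have e1 := Heq' 1 (mem_range.2 (by omega))
  rw [hzero 0 (mem_range.2 (by omega)), zero_add] at e0
  rw [hzero 1 (mem_range.2 (by omega)), zero_add] at e1
  have he0 : ((ee h 0 : ℝ) : ℂ) = 1 := by
    simp [ee]
  rw [he0, mul_one] at e0
  have hne : ((ee h 1 : ℝ) : ℂ) ≠ 1 := by
    rw [ee]
    intro hcon
    have : Real.exp (-(h*(1:ℕ))) = 1 := by exact_mod_cast hcon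
    rw [Real.exp_eq_one_iff] at this
    push_cast at this
    linarith
  have hd0 : d = 0 := by
    have hsub : d * (((ee h 1 : ℝ) : ℂ) - 1) = 0 := by linear_combination e1 - e0
    rcases mul_eq_zero.1 hsub with hd | hd
    · exact hd
    · exact absurd (by linear_combination hd : ((ee h 1 : ℝ) : ℂ) = 1) hne
  refine ⟨?_, hd0⟩
  rw [hd0] at e0
  linear_combination e0

end Stmt13Aux


theorem stmt13 (N : ℕ) (hN : 2 ≤ N) (h : ℝ) (hh : h = 1 / N)
    (G2 : ℝ → ℝ)
    (hG2 : ∀ x : ℝ, G2 x = Real.sign x / 2 * ((Real.exp x - Real.exp (-x)) / 2 - x))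
    :
    (∀ (C : Fin (N + 1) → ℂ) (p0 d : ℂ),
      (∀ β : Fin (N + 1),
        ∑ γ : Fin (N + 1), C γ * ((G2 (h * ((β : ℕ) : ℝ) - h * ((γ : ℕ) : ℝ)) : ℝ) : ℂ) + p0 +
          d * Complex.exp (-((h * ((β : ℕ) : ℝ) : ℝ) : ℂ)) = 0) →
      (∑ γ : Fin (N + 1), C γ = 0) →
      (∑ γ : Fin (N + 1), C γ * Complex.exp (-((h * ((γ : ℕ) : ℝ) : ℝ) : ℂ)) = 0) →
      (∀ β : Fin (N + 1), C β = 0) ∧ p0 = 0 ∧ d = 0) ∧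
    (∀ (f : Fin (N + 1) → ℂ) (r₁ r₂ : ℂ),
      ∃! s : (Fin (N + 1) → ℂ) × ℂ × ℂ,
        (∀ β : Fin (N + 1),
          ∑ γ : Fin (N + 1), s.1 γ * ((G2 (h * ((β : ℕ) : ℝ) - h * ((γ : ℕ) : ℝ)) : ℝ) : ℂ) + s.2.1 +
            s.2.2 * Complex.exp (-((h * ((β : ℕ) : ℝ) : ℝ) : ℂ)) = f β) ∧
        (∑ γ : Fin (N + 1), s.1 γ = r₁) ∧
        (∑ γ : Fin (N + 1), s.1 γ * Complex.exp (-((h * ((γ : ℕ) : ℝ) : ℝ) : ℂ)) = r₂)) := by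
  have part1 : ∀ (C : Fin (N + 1) → ℂ) (p0 d : ℂ),
      (∀ β : Fin (N + 1),
        ∑ γ : Fin (N + 1), C γ * ((G2 (h * ((β : ℕ) : ℝ) - h * ((γ : ℕ) : ℝ)) : ℝ) : ℂ) + p0 +
          d * Complex.exp (-((h * ((β : ℕ) : ℝ) : ℝ) : ℂ)) = 0) →
      (∑ γ : Fin (N + 1), C γ = 0) →
      (∑ γ : Fin (N + 1), C γ * Complex.exp (-((h * ((γ : ℕ) : ℝ) : ℝ) : ℂ)) = 0) →
      (∀ β : Fin (N + 1), C β = 0) ∧ p0 = 0 ∧ d = 0 := by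
    intro C p0 d HeqF H2F H3F
    set c : ℕ → ℂ := fun n => if hn : n < N + 1 then C ⟨n, hn⟩ else 0 with hc
    have hcC : ∀ γ : Fin (N+1), c (γ : ℕ) = C γ := by
      intro γ; simp [hc, γ.isLt, not_lt.2 γ.is_le]
    have H2R : ∑ γ ∈ Finset.range (N+1), c γ = 0 := by
      rw [← Fin.sum_univ_eq_sum_range c (N+1), Finset.sum_congr rfl fun γ _ => hcC γ]
      exact H2F
    have H3R : ∑ γ ∈ Finset.range (N+1), c γ * Complex.exp (-((h*(γ:ℝ) : ℝ) : ℂ)) = 0 := by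
      rw [← Fin.sum_univ_eq_sum_range (fun n => c n * Complex.exp (-((h*(n:ℝ) : ℝ) : ℂ))) (N+1)]
      rw [Finset.sum_congr rfl fun γ _ => by rw [hcC γ]]
      exact H3F
    have HeqR : ∀ β ∈ Finset.range (N+1),
        ∑ γ ∈ Finset.range (N+1), c γ * ((Real.sign (h*(β:ℝ) - h*(γ:ℝ)) / 2 *
          ((Real.exp (h*(β:ℝ) - h*(γ:ℝ)) - Real.exp (-(h*(β:ℝ) - h*(γ:ℝ))))/2
            - (h*(β:ℝ) - h*(γ:ℝ))) : ℝ) : ℂ)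
          + p0 + d * Complex.exp (-((h*(β:ℝ) : ℝ) : ℂ)) = 0 := by
      intro β hβ
      have hβ' : β < N+1 := Finset.mem_range.1 hβ
      have key : ∑ γ ∈ Finset.range (N+1), c γ * ((Real.sign (h*(β:ℝ) - h*(γ:ℝ)) / 2 *
          ((Real.exp (h*(β:ℝ) - h*(γ:ℝ)) - Real.exp (-(h*(β:ℝ) - h*(γ:ℝ))))/2
            - (h*(β:ℝ) - h*(γ:ℝ))) : ℝ) : ℂ)
          = ∑ γ : Fin (N+1), C γ *
              ((G2 (h * (((⟨β, hβ'⟩ : Fin (N+1)) : ℕ) : ℝ) - h * ((γ : ℕ) : ℝ)) : ℝ) : ℂ) := by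
        rw [← Fin.sum_univ_eq_sum_range (fun n => c n * ((Real.sign (h*(β:ℝ) - h*(n:ℝ)) / 2 *
          ((Real.exp (h*(β:ℝ) - h*(n:ℝ)) - Real.exp (-(h*(β:ℝ) - h*(n:ℝ))))/2
            - (h*(β:ℝ) - h*(n:ℝ))) : ℝ) : ℂ)) (N+1)]
        refine Finset.sum_congr rfl fun γ _ => ?_
        rw [hcC γ, hG2]
      rw [key]
      exact HeqF ⟨β, hβ'⟩
    obtain ⟨hc0, hp, hd⟩ := Stmt13Aux.core N hN h hh c p0 d HeqR H2R H3R
    refine ⟨fun β => ?_, hp, hd⟩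
    rw [← hcC β]
    exact hc0 (β : ℕ) (Finset.mem_range.2 β.isLt)
  refine ⟨part1, ?_⟩
  intro f r₁ r₂
  let Φ : ((Fin (N+1) → ℂ) × ℂ × ℂ) →ₗ[ℂ] ((Fin (N+1) → ℂ) × ℂ × ℂ) :=
    { toFun := fun s =>
        (fun β => ∑ γ : Fin (N+1), s.1 γ * ((G2 (h * ((β : ℕ) : ℝ) - h * ((γ : ℕ) : ℝ)) : ℝ) : ℂ)
            + s.2.1 + s.2.2 * Complex.exp (-((h * ((β : ℕ) : ℝ) : ℝ) : ℂ)),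
         ∑ γ : Fin (N+1), s.1 γ,
         ∑ γ : Fin (N+1), s.1 γ * Complex.exp (-((h * ((γ : ℕ) : ℝ) : ℝ) : ℂ)))
      map_add' := by
        intro x y
        refine Prod.ext ?_ (Prod.ext ?_ ?_)
        · funext β
          simp only [Prod.fst_add, Pi.add_apply, Prod.snd_add, add_mul, Finset.sum_add_distrib]
          ring
        · simp [Finset.sum_add_distrib]
        · simp only [Prod.fst_add, Pi.add_apply, Prod.snd_add, add_mul, Finset.sum_add_distrib]
      map_smul' := by
        intro r x
        refine Prod.ext ?_ (Prod.ext ?_ ?_)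
        · funext β
          simp only [Prod.smul_fst, Prod.smul_snd, Pi.smul_apply, smul_eq_mul, RingHom.id_apply,
            mul_assoc, ← Finset.mul_sum]
          ring
        · simp [Finset.mul_sum]
        · simp only [Prod.smul_fst, Prod.smul_snd, Pi.smul_apply, smul_eq_mul, RingHom.id_apply,
            mul_assoc, ← Finset.mul_sum] }
  have hinj : Function.Injective Φ := by
    rw [← LinearMap.ker_eq_bot, LinearMap.ker_eq_bot']
    intro s hs
    have h1 : ∀ β : Fin (N+1),
        ∑ γ : Fin (N+1), s.1 γ * ((G2 (h * ((β : ℕ) : ℝ) - h * ((γ : ℕ) : ℝ)) : ℝ) : ℂ)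
          + s.2.1 + s.2.2 * Complex.exp (-((h * ((β : ℕ) : ℝ) : ℝ) : ℂ)) = 0 :=
      fun β => congrFun (congrArg Prod.fst hs) β
    have h2 : ∑ γ : Fin (N+1), s.1 γ = 0 := congrArg (fun p => p.2.1) hs
    have h3 : ∑ γ : Fin (N+1), s.1 γ * Complex.exp (-((h * ((γ : ℕ) : ℝ) : ℝ) : ℂ)) = 0 :=
      congrArg (fun p => p.2.2) hs
    obtain ⟨hc0, hp, hd⟩ := part1 s.1 s.2.1 s.2.2 h1 h2 h3
    exact Prod.ext (funext hc0) (Prod.ext hp hd)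
  have hsurj : Function.Surjective Φ := (LinearMap.injective_iff_surjective).1 hinj
  obtain ⟨s, hs⟩ := hsurj (f, r₁, r₂)
  refine ⟨s, ⟨fun β => congrFun (congrArg Prod.fst hs) β,
      congrArg (fun p => p.2.1) hs, congrArg (fun p => p.2.2) hs⟩, ?_⟩
  rintro y ⟨hy1, hy2, hy3⟩
  apply hinj
  rw [hs]
  exact Prod.ext (funext hy1) (Prod.ext hy2 hy3)
end

section
/- With the coefficients C_0, …, C_N as defined in the context (the Theorem-7 optimal coefficients for ωh ∈ ℤ, ω ≠ 0), one has e^{2πiω} = 1 and ∑_{β=0}^{N} C_β = 0 = (e^{2πiω} − 1)/(2πiω), i.e. the quadrature formula ∫_0^1 e^{2πiωx} φ(x) dx ≅ ∑_{β=0}^N C_β φ(hβ) is exact for the constant function 1. -/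
theorem aux_sum (z e l q : ℂ) (hz : z ≠ 0) (hz1 : z - 1 ≠ 0) (hz1' : 1 - z ≠ 0)
    (hl0 : l ≠ 0) (hl1 : 1 - l ≠ 0) (hel : e - l ≠ 0) (he1 : e - 1 ≠ 0)
    (hq : q + 1 ≠ 0) (hle : 1 - l * e ≠ 0) :
    ((z * (1 - e) - 1) / (z * (1 - z) * (1 - e))
      + (e - l) * (1 - l) / (z * (z - 1) * l * (e - 1) * (q + 1)) * l ^ 2 / ((1 - l) * (e - l))
      + (1 - e * l) * (1 - l) / (z * (z - 1) * l * (e - 1) * (q + 1)) * q / ((1 - l) * (1 - l * e)))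
    + ((e - l) * (1 - l) / (z * (z - 1) * l * (e - 1) * (q + 1))
        + (1 - e * l) * (1 - l) / (z * (z - 1) * l * (e - 1) * (q + 1))) * ((l - q) / (1 - l))
    + ((z * (e - 1) - e) / (z * (1 - z) * (1 - e))
      + (e - l) * (1 - l) / (z * (z - 1) * l * (e - 1) * (q + 1)) * e * q / ((1 - l) * (e - l))
      + (1 - e * l) * (1 - l) / (z * (z - 1) * l * (e - 1) * (q + 1)) * e * l ^ 2 / ((1 - l) * (1 - l * e)))
    = 0 := by
  have h1e : (1 : ℂ) - e ≠ 0 := fun hc => he1 (by linear_combination -hc)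
  have hD : z * (z - 1) * l * (e - 1) * (q + 1) ≠ 0 :=
    mul_ne_zero (mul_ne_zero (mul_ne_zero (mul_ne_zero hz hz1) hl0) he1) hq
  have hD0 : z * (1 - z) * (1 - e) ≠ 0 := mul_ne_zero (mul_ne_zero hz hz1') h1e
  have t2 : (e - l) * (1 - l) / (z * (z - 1) * l * (e - 1) * (q + 1)) * l ^ 2 / ((1 - l) * (e - l))
      = l ^ 2 / (z * (z - 1) * l * (e - 1) * (q + 1)) := by
    rw [div_mul_eq_mul_div, div_div, div_eq_div_iff (mul_ne_zero hD (mul_ne_zero hl1 hel)) hD]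
    ring
  have t3 : (1 - e * l) * (1 - l) / (z * (z - 1) * l * (e - 1) * (q + 1)) * q / ((1 - l) * (1 - l * e))
      = q / (z * (z - 1) * l * (e - 1) * (q + 1)) := by
    rw [div_mul_eq_mul_div, div_div, div_eq_div_iff (mul_ne_zero hD (mul_ne_zero hl1 hle)) hD]
    ring
  have t4 : ((e - l) * (1 - l) / (z * (z - 1) * l * (e - 1) * (q + 1))
        + (1 - e * l) * (1 - l) / (z * (z - 1) * l * (e - 1) * (q + 1))) * ((l - q) / (1 - l))
      = (1 + e) * (1 - l) * (l - q) / (z * (z - 1) * l * (e - 1) * (q + 1)) := by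
    rw [← add_div, div_mul_div_comm,
      div_eq_div_iff (mul_ne_zero hD hl1) hD]
    ring
  have t5 : (e - l) * (1 - l) / (z * (z - 1) * l * (e - 1) * (q + 1)) * e * q / ((1 - l) * (e - l))
      = e * q / (z * (z - 1) * l * (e - 1) * (q + 1)) := by
    rw [div_mul_eq_mul_div, div_mul_eq_mul_div, div_div,
      div_eq_div_iff (mul_ne_zero hD (mul_ne_zero hl1 hel)) hD]
    ring
  have t6 : (1 - e * l) * (1 - l) / (z * (z - 1) * l * (e - 1) * (q + 1)) * e * l ^ 2 / ((1 - l) * (1 - l * e))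
      = e * l ^ 2 / (z * (z - 1) * l * (e - 1) * (q + 1)) := by
    rw [div_mul_eq_mul_div, div_mul_eq_mul_div, div_div,
      div_eq_div_iff (mul_ne_zero hD (mul_ne_zero hl1 hle)) hD]
    ring
  rw [t2, t3, t4, t5, t6]
  have e1 : ((z * (1 - e) - 1) / (z * (1 - z) * (1 - e))
      + l ^ 2 / (z * (z - 1) * l * (e - 1) * (q + 1))
      + q / (z * (z - 1) * l * (e - 1) * (q + 1)))
    + (1 + e) * (1 - l) * (l - q) / (z * (z - 1) * l * (e - 1) * (q + 1))
    + ((z * (e - 1) - e) / (z * (1 - z) * (1 - e))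
      + e * q / (z * (z - 1) * l * (e - 1) * (q + 1))
      + e * l ^ 2 / (z * (z - 1) * l * (e - 1) * (q + 1)))
    = (-(1 + e)) / (z * (1 - z) * (1 - e))
      + ((1 + e) * (l * (q + 1))) / (z * (z - 1) * l * (e - 1) * (q + 1)) := by
    ring
  rw [e1, div_add_div _ _ hD0 hD, div_eq_zero_iff]
  left
  ring

set_option maxHeartbeats 1000000 in
theorem stmt14
    (N : ℕ) (hN : 1 ≤ N) (h : ℝ) (hh : h = 1 / N) (ω : ℝ) (hω : ω ≠ 0)
    (hωh : ∃ k : ℤ, ω * h = (k : ℝ))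
    (p lam : ℝ) (hp : p = 1 + 2 * h * Real.exp h - Real.exp (2 * h))
    (hroot : p * lam ^ 2 - 2 * (1 - Real.exp (2 * h) + h * (Real.exp (2 * h) + 1)) * lam + p = 0)
    (hlam : |lam| < 1) (hlam0 : lam ≠ 0)
    (a1 b1 : ℂ)
    (ha1 : a1 = (Complex.exp (h : ℂ) - (lam : ℂ)) * (1 - (lam : ℂ)) / ((2 * (Real.pi : ℂ) * Complex.I * (ω : ℂ)) * ((2 * (Real.pi : ℂ) * Complex.I * (ω : ℂ)) - 1) * (lam : ℂ) * (Complex.exp (h : ℂ) - 1) * ((lam : ℂ) ^ N + 1)))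
    (hb1 : b1 = (1 - Complex.exp (h : ℂ) * (lam : ℂ)) * (1 - (lam : ℂ)) / ((2 * (Real.pi : ℂ) * Complex.I * (ω : ℂ)) * ((2 * (Real.pi : ℂ) * Complex.I * (ω : ℂ)) - 1) * (lam : ℂ) * (Complex.exp (h : ℂ) - 1) * ((lam : ℂ) ^ N + 1)))
    (C : ℕ → ℂ)
    (hC0 : C 0 = ((2 * (Real.pi : ℂ) * Complex.I * (ω : ℂ)) * (1 - Complex.exp (h : ℂ)) - 1) / ((2 * (Real.pi : ℂ) * Complex.I * (ω : ℂ)) * (1 - (2 * (Real.pi : ℂ) * Complex.I * (ω : ℂ))) * (1 - Complex.exp (h : ℂ))) + a1 * (lam : ℂ) ^ 2 / ((1 - (lam : ℂ)) * (Complex.exp (h : ℂ) - (lam : ℂ))) + b1 * (lam : ℂ) ^ N / ((1 - (lam : ℂ)) * (1 - (lam : ℂ) * Complex.exp (h : ℂ))))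
    (hCmid : ∀ β : ℕ, 1 ≤ β → β ≤ N - 1 → C β = a1 * (lam : ℂ) ^ β + b1 * (lam : ℂ) ^ (N - β))
    (hCN : C N = ((2 * (Real.pi : ℂ) * Complex.I * (ω : ℂ)) * (Complex.exp (h : ℂ) - 1) - Complex.exp (h : ℂ)) / ((2 * (Real.pi : ℂ) * Complex.I * (ω : ℂ)) * (1 - (2 * (Real.pi : ℂ) * Complex.I * (ω : ℂ))) * (1 - Complex.exp (h : ℂ))) + a1 * Complex.exp (h : ℂ) * (lam : ℂ) ^ N / ((1 - (lam : ℂ)) * (Complex.exp (h : ℂ) - (lam : ℂ))) + b1 * Complex.exp (h : ℂ) * (lam : ℂ) ^ 2 / ((1 - (lam : ℂ)) * (1 - (lam : ℂ) * Complex.exp (h : ℂ))))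
    :
    Complex.exp (2 * (Real.pi : ℂ) * Complex.I * (ω : ℂ)) = 1 ∧
    ∑ β ∈ Finset.range (N + 1), C β = 0 ∧
    (Complex.exp (2 * (Real.pi : ℂ) * Complex.I * (ω : ℂ)) - 1) / (2 * (Real.pi : ℂ) * Complex.I * (ω : ℂ)) = 0 := by
  obtain ⟨k, hk⟩ := hωh
  have hN0 : (N : ℝ) ≠ 0 := Nat.cast_ne_zero.mpr (by omega)
  have hωval : ω = ((k * (N:ℤ) : ℤ) : ℝ) := by
    push_cast
    rw [hh] at hk
    field_simp at hk
    linarith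
  -- Part 1
  have part1 : Complex.exp (2 * (Real.pi : ℂ) * Complex.I * (ω : ℂ)) = 1 := by
    have : (ω : ℂ) = ((k * (N:ℤ) : ℤ) : ℂ) := by exact_mod_cast congrArg (fun r : ℝ => (r : ℂ)) hωval
    rw [this, show (2 * (Real.pi : ℂ) * Complex.I * ((k * (N:ℤ) : ℤ) : ℂ)) = ((k * (N:ℤ) : ℤ) : ℂ) * (2 * (Real.pi : ℝ) * Complex.I) by push_cast; ring]
    exact Complex.exp_int_mul_two_pi_mul_I _
  refine ⟨part1, ?_, by rw [part1]; simp⟩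
  -- setup
  have hpos : 0 < h := by rw [hh]; positivity
  have hE1 : 1 < Real.exp h := by simpa using Real.exp_lt_exp.mpr hpos
  have hEc : Complex.exp (h : ℂ) = ((Real.exp h : ℝ) : ℂ) := (Complex.ofReal_exp h).symm
  set E := Real.exp h with hEdef
  have hlam1 : lam < 1 := (abs_lt.mp hlam).2
  have hlamgt : -1 < lam := (abs_lt.mp hlam).1
  -- nonzeroness facts
  have hzR : (2 * Real.pi * ω : ℝ) ≠ 0 := by
    have := Real.pi_ne_zero; positivity
  have hz : (2 * (Real.pi : ℂ) * Complex.I * (ω : ℂ)) ≠ 0 := by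
    simp [Complex.ext_iff, Real.pi_ne_zero, hω, Complex.I_ne_zero]
  have hz1 : (2 * (Real.pi : ℂ) * Complex.I * (ω : ℂ)) - 1 ≠ 0 := by
    intro hc
    have := congrArg Complex.re hc
    simp at this
  have hz1' : (1 : ℂ) - (2 * (Real.pi : ℂ) * Complex.I * (ω : ℂ)) ≠ 0 := by
    intro hc
    have := congrArg Complex.re hc
    simp at this
  have hlamC : (lam : ℂ) ≠ 0 := Complex.ofReal_ne_zero.mpr hlam0
  have hL1 : (1 : ℂ) - (lam : ℂ) ≠ 0 := by
    have : ((1 - lam : ℝ) : ℂ) ≠ 0 := Complex.ofReal_ne_zero.mpr (by linarith)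
    push_cast at this; exact this
  have heL : ((E : ℝ) : ℂ) - (lam : ℂ) ≠ 0 := by
    have : ((E - lam : ℝ) : ℂ) ≠ 0 := Complex.ofReal_ne_zero.mpr (by linarith)
    push_cast at this; exact this
  have he1 : ((E : ℝ) : ℂ) - 1 ≠ 0 := by
    have : ((E - 1 : ℝ) : ℂ) ≠ 0 := Complex.ofReal_ne_zero.mpr (by linarith)
    push_cast at this; exact this
  have hLNR : (0:ℝ) < lam ^ N + 1 := by
    have h1 : |lam| ^ N < 1 := pow_lt_one₀ (abs_nonneg _) hlam (by omega)
    have h2 : -(|lam| ^ N) ≤ lam ^ N := by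
      rw [← abs_pow]; exact neg_abs_le _
    linarith
  have hLN : ((lam : ℂ)) ^ N + 1 ≠ 0 := by
    have : ((lam ^ N + 1 : ℝ) : ℂ) ≠ 0 := Complex.ofReal_ne_zero.mpr (by linarith)
    push_cast at this; exact this
  have hLeR : lam * E ≠ 1 := by
    intro hc
    have hE2 : Real.exp (2*h) = E * E := by rw [two_mul, Real.exp_add]
    rw [hp, hE2] at hroot
    have hE0 : E ≠ 0 := by positivity
    have hlamval : lam = 1 / E := by field_simp; linarith [hc]
    rw [hlamval] at hroot
    field_simp at hroot
    nlinarith [hroot, sq_nonneg (E-1), sq_nonneg (E+1), mul_pos (mul_pos (sub_pos.mpr hE1) (sub_pos.mpr hE1)) (by nlinarith : (0:ℝ) < E^2 - 1)]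
  have hLe : (1 : ℂ) - (lam : ℂ) * ((E : ℝ) : ℂ) ≠ 0 := by
    have : ((1 - lam * E : ℝ) : ℂ) ≠ 0 := Complex.ofReal_ne_zero.mpr (by
      intro hc; apply hLeR; linarith)
    push_cast at this; exact this
  -- geometric sum over middle indices
  set L : ℂ := (lam : ℂ) with hLdef
  have hgeom : (1 - L) * (∑ β ∈ Finset.Ico 1 N, L ^ β) = L - L ^ N := by
    have h1 : (∑ β ∈ Finset.Ico 1 N, L ^ β) = L * ∑ i ∈ Finset.range (N-1), L ^ i := by
      rw [Finset.sum_Ico_eq_sum_range, Finset.mul_sum]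
      apply Finset.sum_congr rfl
      intro i _
      rw [add_comm, pow_succ']
    rw [h1]
    have h2 : (∑ i ∈ Finset.range (N-1), L ^ i) * (L - 1) = L ^ (N-1) - 1 := geom_sum_mul L (N-1)
    have h3 : L * L ^ (N-1) = L ^ N := by
      rw [← pow_succ']
      congr 1
      omega
    linear_combination (-L) * h2 - h3
  have hrefl : (∑ β ∈ Finset.Ico 1 N, L ^ (N - β)) = ∑ β ∈ Finset.Ico 1 N, L ^ β := by
    rw [Finset.sum_Ico_eq_sum_range, Finset.sum_Ico_eq_sum_range]
    rw [← Finset.sum_range_reflect]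
    apply Finset.sum_congr rfl
    intro i hi
    simp only [Finset.mem_range] at hi
    congr 1
    omega
  have hS : (∑ β ∈ Finset.Ico 1 N, L ^ β) = (L - L ^ N) / (1 - L) := by
    rw [eq_div_iff hL1]; linear_combination hgeom
  have hsum : ∑ β ∈ Finset.range (N+1), C β
      = C 0 + (a1 + b1) * ((L - L ^ N) / (1 - L)) + C N := by
    rw [Finset.range_eq_Ico, Finset.sum_eq_sum_Ico_succ_bot (by omega),
      Finset.sum_Ico_succ_top (by omega)]
    have e2 : ∑ β ∈ Finset.Ico 1 N, C β = (a1 + b1) * ((L - L ^ N) / (1 - L)) := by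
      rw [← hS]
      have e3 : ∑ β ∈ Finset.Ico 1 N, C β
          = (∑ β ∈ Finset.Ico 1 N, a1 * L ^ β) + ∑ β ∈ Finset.Ico 1 N, b1 * L ^ (N - β) := by
        rw [← Finset.sum_add_distrib]
        apply Finset.sum_congr rfl
        intro β hβ
        simp only [Finset.mem_Ico] at hβ
        exact hCmid β hβ.1 (by omega)
      rw [e3, ← Finset.mul_sum, ← Finset.mul_sum, hrefl]
      ring
    rw [e2]; ring
  rw [hsum, hC0, hCN, ha1, hb1, hEc]
  exact aux_sum (2 * (Real.pi : ℂ) * Complex.I * (ω : ℂ)) ((E : ℝ) : ℂ) L (L ^ N)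
    hz hz1 hz1' hlamC hL1 heL he1 hLN hLe
end

section
/- With the coefficients C_0, …, C_N as defined in the context (the Theorem-7 optimal coefficients for ωh ∈ ℤ, ω ≠ 0), one has ∑_{β=0}^{N} C_β·e^{−hβ} = (e^{−1} − 1)/(2πiω − 1) = (e^{2πiω−1} − 1)/(2πiω − 1), i.e. the quadrature formula ∫_0^1 e^{2πiωx} φ(x) dx ≅ ∑_{β=0}^N C_β φ(hβ) is exact for the function e^{−x}. -/
set_option maxHeartbeats 1000000
set_option linter.unusedVariables false

set_option linter.unusedVariables false
set_option maxHeartbeats 1000000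

lemma key15 (E L z S B : ℂ) (hz : z ≠ 0) (hz1 : z - 1 ≠ 0) (hL : L ≠ 0)
    (hL1 : (1:ℂ) - L ≠ 0) (hE : E ≠ 0) (hE1 : E - 1 ≠ 0) (hEL : E - L ≠ 0)
    (hLE1 : (1:ℂ) - L * E ≠ 0) (hS : S + 1 ≠ 0) (hS0 : S ≠ 0) (hB : B ≠ 0)
    (hx1 : L * E⁻¹ - 1 ≠ 0) (hy1 : L⁻¹ * E⁻¹ - 1 ≠ 0)
    (a1 b1 : ℂ)
    (ha1 : a1 = (E - L) * (1 - L) / (z * (z - 1) * L * (E - 1) * (S + 1)))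
    (hb1 : b1 = (1 - E * L) * (1 - L) / (z * (z - 1) * L * (E - 1) * (S + 1))) :
    ((z * (1 - E) - 1) / (z * (1 - z) * (1 - E)) + a1 * L ^ 2 / ((1 - L) * (E - L))
        + b1 * S / ((1 - L) * (1 - L * E)))
      + (a1 * ((S * B⁻¹ - L * E⁻¹) / (L * E⁻¹ - 1))
        + b1 * S * ((S⁻¹ * B⁻¹ - L⁻¹ * E⁻¹) / (L⁻¹ * E⁻¹ - 1)))
      + ((z * (E - 1) - E) / (z * (1 - z) * (1 - E)) + a1 * E * S / ((1 - L) * (E - L))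
        + b1 * E * L ^ 2 / ((1 - L) * (1 - L * E))) * B⁻¹
    = (B⁻¹ - 1) / (z - 1) := by
  have h1z : (1:ℂ) - z ≠ 0 := fun hc => hz1 (by linear_combination -hc)
  have h1E : (1:ℂ) - E ≠ 0 := fun hc => hE1 (by linear_combination -hc)
  have hLE : L - E ≠ 0 := fun hc => hEL (by linear_combination -hc)
  have hG1 : (S * B⁻¹ - L * E⁻¹) / (L * E⁻¹ - 1) = (S * E - L * B) / (B * (L - E)) := by
    rw [div_eq_div_iff hx1 (mul_ne_zero hB hLE)]
    field_simp
  have hG2 : S * ((S⁻¹ * B⁻¹ - L⁻¹ * E⁻¹) / (L⁻¹ * E⁻¹ - 1))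
      = (L * E - S * B) / (B * (1 - L * E)) := by
    have e1 : (S⁻¹ * B⁻¹ - L⁻¹ * E⁻¹) / (L⁻¹ * E⁻¹ - 1)
        = (L * E - S * B) / (S * B * (1 - L * E)) := by
      rw [div_eq_div_iff hy1 (mul_ne_zero (mul_ne_zero hS0 hB) hLE1)]
      field_simp
    rw [e1, mul_div_assoc', mul_assoc, mul_div_mul_left _ _ hS0]
  have hKa : L ^ 2 / ((1 - L) * (E - L)) + (S * E - L * B) / (B * (L - E))
      + E * S * B⁻¹ / ((1 - L) * (E - L))
      = L * (B + S * E) / (B * ((1 - L) * (E - L))) := by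
    field_simp
    ring
  have hKb : S / ((1 - L) * (1 - L * E)) + (L * E - S * B) / (B * (1 - L * E))
      + E * L ^ 2 * B⁻¹ / ((1 - L) * (1 - L * E))
      = L * (E + S * B) / (B * ((1 - L) * (1 - L * E))) := by
    have d1 : (1 - L) * (1 - L * E) ≠ 0 := mul_ne_zero hL1 hLE1
    have d2 : B * (1 - L * E) ≠ 0 := mul_ne_zero hB hLE1
    have d3 : B * ((1 - L) * (1 - L * E)) ≠ 0 := mul_ne_zero hB d1
    have e1 : E * L ^ 2 * B⁻¹ / ((1 - L) * (1 - L * E)) = E * L ^ 2 / (B * ((1 - L) * (1 - L * E))) := by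
      rw [div_eq_div_iff d1 d3]
      field_simp
    rw [e1, div_add_div _ _ d1 d2, div_add_div _ _ (mul_ne_zero d1 d2) d3,
      div_eq_div_iff (mul_ne_zero (mul_ne_zero d1 d2) d3) d3]
    ring
  have ha : a1 * (L * (B + S * E) / (B * ((1 - L) * (E - L))))
      = (B + S * E) / (z * (z - 1) * (E - 1) * (S + 1) * B) := by
    have dleft : z * (z - 1) * L * (E - 1) * (S + 1) * (B * ((1 - L) * (E - L))) ≠ 0 :=
      mul_ne_zero (mul_ne_zero (mul_ne_zero (mul_ne_zero (mul_ne_zero hz hz1) hL) hE1) hS)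
        (mul_ne_zero hB (mul_ne_zero hL1 hEL))
    have hD2 : z * (z - 1) * (E - 1) * (S + 1) * B ≠ 0 :=
      mul_ne_zero (mul_ne_zero (mul_ne_zero (mul_ne_zero hz hz1) hE1) hS) hB
    rw [ha1, div_mul_div_comm, div_eq_div_iff dleft hD2]; ring
  have hb : b1 * (L * (E + S * B) / (B * ((1 - L) * (1 - L * E))))
      = (E + S * B) / (z * (z - 1) * (E - 1) * (S + 1) * B) := by
    have dleft : z * (z - 1) * L * (E - 1) * (S + 1) * (B * ((1 - L) * (1 - L * E))) ≠ 0 :=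
      mul_ne_zero (mul_ne_zero (mul_ne_zero (mul_ne_zero (mul_ne_zero hz hz1) hL) hE1) hS)
        (mul_ne_zero hB (mul_ne_zero hL1 hLE1))
    have hD2 : z * (z - 1) * (E - 1) * (S + 1) * B ≠ 0 :=
      mul_ne_zero (mul_ne_zero (mul_ne_zero (mul_ne_zero hz hz1) hE1) hS) hB
    rw [hb1, div_mul_div_comm, div_eq_div_iff dleft hD2]; ring
  have step1 : ((z * (1 - E) - 1) / (z * (1 - z) * (1 - E)) + a1 * L ^ 2 / ((1 - L) * (E - L))
        + b1 * S / ((1 - L) * (1 - L * E)))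
      + (a1 * ((S * B⁻¹ - L * E⁻¹) / (L * E⁻¹ - 1))
        + b1 * S * ((S⁻¹ * B⁻¹ - L⁻¹ * E⁻¹) / (L⁻¹ * E⁻¹ - 1)))
      + ((z * (E - 1) - E) / (z * (1 - z) * (1 - E)) + a1 * E * S / ((1 - L) * (E - L))
        + b1 * E * L ^ 2 / ((1 - L) * (1 - L * E))) * B⁻¹
      = ((z * (1 - E) - 1) / (z * (1 - z) * (1 - E)) + (z * (E - 1) - E) / (z * (1 - z) * (1 - E)) * B⁻¹)
        + a1 * (L ^ 2 / ((1 - L) * (E - L)) + (S * E - L * B) / (B * (L - E))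
            + E * S * B⁻¹ / ((1 - L) * (E - L)))
        + b1 * (S / ((1 - L) * (1 - L * E)) + (L * E - S * B) / (B * (1 - L * E))
            + E * L ^ 2 * B⁻¹ / ((1 - L) * (1 - L * E))) := by
    rw [← hG1, ← hG2]
    ring
  rw [step1, hKa, hKb, ha, hb]
  -- final combination
  have hD1 : z * (1 - z) * (1 - E) ≠ 0 := mul_ne_zero (mul_ne_zero hz h1z) h1E
  have hD1B : z * (1 - z) * (1 - E) * B ≠ 0 := mul_ne_zero hD1 hB
  have hD2 : z * (z - 1) * (E - 1) * (S + 1) * B ≠ 0 :=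
    mul_ne_zero (mul_ne_zero (mul_ne_zero (mul_ne_zero hz hz1) hE1) hS) hB
  have t1 : (z * (E - 1) - E) / (z * (1 - z) * (1 - E)) * B⁻¹
      = (z * (E - 1) - E) / (z * (1 - z) * (1 - E) * B) := by
    rw [← div_div (z * (E - 1) - E) (z * (1 - z) * (1 - E)) B]
    exact (div_eq_mul_inv _ _).symm
  rw [t1, div_add_div _ _ hD1 hD1B, div_add_div _ _ (mul_ne_zero hD1 hD1B) hD2,
    div_add_div _ _ (mul_ne_zero (mul_ne_zero hD1 hD1B) hD2) hD2,
    div_eq_div_iff (mul_ne_zero (mul_ne_zero (mul_ne_zero hD1 hD1B) hD2) hD2) hz1]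
  have hBB : B * B⁻¹ = 1 := mul_inv_cancel₀ hB
  linear_combination (-((z * (1 - z) * (1 - E)) ^ 2 * (z * (z - 1) * (E - 1) * (S + 1) * B) ^ 2)) * hBB

theorem stmt15
    (N : ℕ) (hN : 1 ≤ N) (h : ℝ) (hh : h = 1 / N) (ω : ℝ) (hω : ω ≠ 0)
    (hωh : ∃ k : ℤ, ω * h = (k : ℝ))
    (p lam : ℝ) (hp : p = 1 + 2 * h * Real.exp h - Real.exp (2 * h))
    (hroot : p * lam ^ 2 - 2 * (1 - Real.exp (2 * h) + h * (Real.exp (2 * h) + 1)) * lam + p = 0)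
    (hlam : |lam| < 1) (hlam0 : lam ≠ 0)
    (a1 b1 : ℂ)
    (ha1 : a1 = (Complex.exp (h : ℂ) - (lam : ℂ)) * (1 - (lam : ℂ)) / ((2 * (Real.pi : ℂ) * Complex.I * (ω : ℂ)) * ((2 * (Real.pi : ℂ) * Complex.I * (ω : ℂ)) - 1) * (lam : ℂ) * (Complex.exp (h : ℂ) - 1) * ((lam : ℂ) ^ N + 1)))
    (hb1 : b1 = (1 - Complex.exp (h : ℂ) * (lam : ℂ)) * (1 - (lam : ℂ)) / ((2 * (Real.pi : ℂ) * Complex.I * (ω : ℂ)) * ((2 * (Real.pi : ℂ) * Complex.I * (ω : ℂ)) - 1) * (lam : ℂ) * (Complex.exp (h : ℂ) - 1) * ((lam : ℂ) ^ N + 1)))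
    (C : ℕ → ℂ)
    (hC0 : C 0 = ((2 * (Real.pi : ℂ) * Complex.I * (ω : ℂ)) * (1 - Complex.exp (h : ℂ)) - 1) / ((2 * (Real.pi : ℂ) * Complex.I * (ω : ℂ)) * (1 - (2 * (Real.pi : ℂ) * Complex.I * (ω : ℂ))) * (1 - Complex.exp (h : ℂ))) + a1 * (lam : ℂ) ^ 2 / ((1 - (lam : ℂ)) * (Complex.exp (h : ℂ) - (lam : ℂ))) + b1 * (lam : ℂ) ^ N / ((1 - (lam : ℂ)) * (1 - (lam : ℂ) * Complex.exp (h : ℂ))))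
    (hCmid : ∀ β : ℕ, 1 ≤ β → β ≤ N - 1 → C β = a1 * (lam : ℂ) ^ β + b1 * (lam : ℂ) ^ (N - β))
    (hCN : C N = ((2 * (Real.pi : ℂ) * Complex.I * (ω : ℂ)) * (Complex.exp (h : ℂ) - 1) - Complex.exp (h : ℂ)) / ((2 * (Real.pi : ℂ) * Complex.I * (ω : ℂ)) * (1 - (2 * (Real.pi : ℂ) * Complex.I * (ω : ℂ))) * (1 - Complex.exp (h : ℂ))) + a1 * Complex.exp (h : ℂ) * (lam : ℂ) ^ N / ((1 - (lam : ℂ)) * (Complex.exp (h : ℂ) - (lam : ℂ))) + b1 * Complex.exp (h : ℂ) * (lam : ℂ) ^ 2 / ((1 - (lam : ℂ)) * (1 - (lam : ℂ) * Complex.exp (h : ℂ))))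
    :
    ∑ β ∈ Finset.range (N + 1), C β * Complex.exp (-((h * (β : ℝ) : ℝ) : ℂ)) =
      (Complex.exp (-1) - 1) / ((2 * (Real.pi : ℂ) * Complex.I * (ω : ℂ)) - 1) ∧
    (Complex.exp (-1) - 1) / ((2 * (Real.pi : ℂ) * Complex.I * (ω : ℂ)) - 1) =
      (Complex.exp ((2 * (Real.pi : ℂ) * Complex.I * (ω : ℂ)) - 1) - 1) / ((2 * (Real.pi : ℂ) * Complex.I * (ω : ℂ)) - 1) := by
  have hNpos : 0 < N := hN
  have hNne : (N:ℝ) ≠ 0 := Nat.cast_ne_zero.mpr (by omega)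
  have hhpos : 0 < h := by
    rw [hh]; positivity
  have ht1 : 1 < Real.exp h := by
    rw [← Real.exp_zero]; exact Real.exp_lt_exp.mpr hhpos
  obtain ⟨hlam_gt, hlam_lt⟩ := abs_lt.mp hlam
  have hEr : Complex.exp (h:ℂ) = ((Real.exp h : ℝ) : ℂ) := (Complex.ofReal_exp h).symm
  have hz0 : 2 * (Real.pi : ℂ) * Complex.I * (ω : ℂ) ≠ 0 :=
    mul_ne_zero (mul_ne_zero (mul_ne_zero two_ne_zero
      (Complex.ofReal_ne_zero.mpr Real.pi_ne_zero)) Complex.I_ne_zero)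
      (Complex.ofReal_ne_zero.mpr hω)
  have hzre : (2 * (Real.pi : ℂ) * Complex.I * (ω : ℂ)).re = 0 := by
    have e : 2 * (Real.pi : ℂ) * Complex.I * (ω : ℂ) = ((2 * Real.pi * ω : ℝ) : ℂ) * Complex.I := by
      push_cast; ring
    rw [e]
    simp
  have hz1 : 2 * (Real.pi : ℂ) * Complex.I * (ω : ℂ) - 1 ≠ 0 := by
    intro hc
    have h1 : 2 * (Real.pi : ℂ) * Complex.I * (ω : ℂ) = 1 := by linear_combination hc
    have h2 := congrArg Complex.re h1
    rw [hzre] at h2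
    simp at h2
  have hL0 : (lam : ℂ) ≠ 0 := Complex.ofReal_ne_zero.mpr hlam0
  have hL1 : (1:ℂ) - (lam : ℂ) ≠ 0 := by
    rw [show (1:ℂ) - (lam:ℂ) = ((1 - lam : ℝ):ℂ) by push_cast; ring]
    exact Complex.ofReal_ne_zero.mpr (by linarith)
  have hE0 : Complex.exp (h:ℂ) ≠ 0 := Complex.exp_ne_zero _
  have hE1 : Complex.exp (h:ℂ) - 1 ≠ 0 := by
    rw [hEr, show ((Real.exp h : ℝ):ℂ) - 1 = ((Real.exp h - 1 : ℝ):ℂ) by push_cast; ring]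
    exact Complex.ofReal_ne_zero.mpr (by linarith)
  have hEL : Complex.exp (h:ℂ) - (lam : ℂ) ≠ 0 := by
    rw [hEr, show ((Real.exp h : ℝ):ℂ) - (lam:ℂ) = ((Real.exp h - lam : ℝ):ℂ) by push_cast; ring]
    exact Complex.ofReal_ne_zero.mpr (by linarith)
  have h2h : Real.exp (2*h) = Real.exp h ^ 2 := by rw [two_mul, Real.exp_add, sq]
  have hkeyr : lam * Real.exp h ≠ 1 := by
    intro hc
    rw [hp, h2h] at hroot
    have hQ : (Real.exp h - 1)^3 * (Real.exp h + 1) = 0 := by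
      linear_combination (-(Real.exp h ^ 2)) * hroot +
        ((1 + 2*h*Real.exp h - Real.exp h ^ 2) * (Real.exp h * lam + 1)
          - 2 * (1 - Real.exp h ^ 2 + h * (Real.exp h ^ 2 + 1)) * Real.exp h) * hc
    have h1 : (0:ℝ) < (Real.exp h - 1)^3 * (Real.exp h + 1) := by
      have e1 : (0:ℝ) < Real.exp h - 1 := by linarith
      have e2 : (0:ℝ) < Real.exp h + 1 := by linarith
      exact mul_pos (pow_pos e1 3) e2
    linarith
  have hLE1 : (1:ℂ) - (lam : ℂ) * Complex.exp (h:ℂ) ≠ 0 := by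
    rw [hEr, show (1:ℂ) - (lam:ℂ) * ((Real.exp h : ℝ):ℂ) = ((1 - lam * Real.exp h : ℝ):ℂ) by push_cast; ring]
    exact Complex.ofReal_ne_zero.mpr (sub_ne_zero.mpr (Ne.symm hkeyr))
  have hSr : 0 < lam ^ N + 1 := by
    have h1 : |lam ^ N| < 1 := by
      rw [abs_pow]
      exact pow_lt_one₀ (abs_nonneg _) hlam (by omega)
    have := (abs_lt.mp h1).1
    linarith
  have hS : (lam : ℂ) ^ N + 1 ≠ 0 := by
    rw [show ((lam:ℂ))^N + 1 = ((lam ^ N + 1 : ℝ):ℂ) by push_cast; ring]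
    exact Complex.ofReal_ne_zero.mpr (ne_of_gt hSr)
  have hS0 : (lam : ℂ) ^ N ≠ 0 := pow_ne_zero _ hL0
  have hB : Complex.exp 1 ≠ 0 := Complex.exp_ne_zero _
  have hhN : h * (N:ℝ) = 1 := by rw [hh]; field_simp
  have hEN : Complex.exp (h:ℂ) ^ N = Complex.exp 1 := by
    rw [← Complex.exp_nat_mul]
    congr 1
    rw [show ((N:ℕ):ℂ) * (h:ℂ) = ((h * (N:ℝ) : ℝ):ℂ) by push_cast; ring, hhN]
    norm_num
  have hx1 : (lam : ℂ) * (Complex.exp (h:ℂ))⁻¹ - 1 ≠ 0 := by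
    intro hc
    apply hEL
    have h2 : (lam:ℂ) * (Complex.exp (h:ℂ))⁻¹ = 1 := by linear_combination hc
    have h3 : (lam:ℂ) = Complex.exp (h:ℂ) := by
      field_simp at h2
      exact h2
    rw [h3]; ring
  have hy1 : ((lam : ℂ))⁻¹ * (Complex.exp (h:ℂ))⁻¹ - 1 ≠ 0 := by
    intro hc
    apply hLE1
    have h2 : ((lam:ℂ))⁻¹ * (Complex.exp (h:ℂ))⁻¹ = 1 := by linear_combination hc
    have h3 : ((lam:ℂ) * Complex.exp (h:ℂ))⁻¹ = 1 := by rw [mul_inv]; exact h2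
    have h4 : (lam:ℂ) * Complex.exp (h:ℂ) = 1 := by rwa [inv_eq_one] at h3
    linear_combination -h4
  have hterm : ∀ β : ℕ, Complex.exp (-((h * (β : ℝ) : ℝ) : ℂ)) = ((Complex.exp (h:ℂ))⁻¹) ^ β := by
    intro β
    rw [show -((h * (β : ℝ) : ℝ) : ℂ) = (β:ℕ) * (-(h:ℂ)) by push_cast; ring,
      Complex.exp_nat_mul, Complex.exp_neg]
  have hx1' : (lam : ℂ) * (Complex.exp (h:ℂ))⁻¹ ≠ 1 := fun hc => hx1 (by rw [hc]; ring)
  have hy1' : ((lam : ℂ))⁻¹ * (Complex.exp (h:ℂ))⁻¹ ≠ 1 := fun hc => hy1 (by rw [hc]; ring)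
  have hmid : ∑ β ∈ Finset.Ico 1 N, C β * ((Complex.exp (h:ℂ))⁻¹) ^ β
      = a1 * (((lam:ℂ)^N * (Complex.exp 1)⁻¹ - (lam:ℂ) * (Complex.exp (h:ℂ))⁻¹) /
          ((lam:ℂ) * (Complex.exp (h:ℂ))⁻¹ - 1))
        + b1 * (lam:ℂ)^N * ((((lam:ℂ)^N)⁻¹ * (Complex.exp 1)⁻¹ - ((lam:ℂ))⁻¹ * (Complex.exp (h:ℂ))⁻¹) /
          (((lam:ℂ))⁻¹ * (Complex.exp (h:ℂ))⁻¹ - 1)) := by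
    have step : ∀ β ∈ Finset.Ico 1 N, C β * ((Complex.exp (h:ℂ))⁻¹) ^ β
        = a1 * ((lam:ℂ) * (Complex.exp (h:ℂ))⁻¹) ^ β
          + b1 * (lam:ℂ)^N * (((lam:ℂ))⁻¹ * (Complex.exp (h:ℂ))⁻¹) ^ β := by
      intro β hβ
      obtain ⟨hβ1, hβ2⟩ := Finset.mem_Ico.mp hβ
      rw [hCmid β hβ1 (by omega)]
      have hpowsub : (lam:ℂ) ^ (N - β) = (lam:ℂ)^N * (((lam:ℂ))⁻¹) ^ β := by
        rw [pow_sub₀ _ hL0 hβ2.le, inv_pow]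
      rw [hpowsub, mul_pow, mul_pow]
      ring
    rw [Finset.sum_congr rfl step, Finset.sum_add_distrib]
    have g1 : ∑ β ∈ Finset.Ico 1 N, a1 * ((lam:ℂ) * (Complex.exp (h:ℂ))⁻¹) ^ β
        = a1 * (((lam:ℂ)^N * (Complex.exp 1)⁻¹ - (lam:ℂ) * (Complex.exp (h:ℂ))⁻¹) /
            ((lam:ℂ) * (Complex.exp (h:ℂ))⁻¹ - 1)) := by
      rw [← Finset.mul_sum, geom_sum_Ico hx1' hN, mul_pow, inv_pow, hEN, pow_one]
    have g2 : ∑ β ∈ Finset.Ico 1 N, b1 * (lam:ℂ)^N * (((lam:ℂ))⁻¹ * (Complex.exp (h:ℂ))⁻¹) ^ β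
        = b1 * (lam:ℂ)^N * ((((lam:ℂ)^N)⁻¹ * (Complex.exp 1)⁻¹ - ((lam:ℂ))⁻¹ * (Complex.exp (h:ℂ))⁻¹) /
            (((lam:ℂ))⁻¹ * (Complex.exp (h:ℂ))⁻¹ - 1)) := by
      rw [← Finset.mul_sum, geom_sum_Ico hy1' hN, mul_pow, inv_pow, inv_pow, hEN, pow_one]
    rw [g1, g2]
  have hBinv : Complex.exp (-1 : ℂ) = (Complex.exp 1)⁻¹ := by
    rw [← Complex.exp_neg]
  constructor
  · have hsum : ∑ β ∈ Finset.range (N + 1), C β * Complex.exp (-((h * (β : ℝ) : ℝ) : ℂ))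
        = C 0 + (∑ β ∈ Finset.Ico 1 N, C β * ((Complex.exp (h:ℂ))⁻¹) ^ β)
          + C N * ((Complex.exp (h:ℂ))⁻¹) ^ N := by
      rw [Finset.sum_congr rfl (fun β _ => by rw [hterm β]), Finset.sum_range_succ,
        Finset.range_eq_Ico, Finset.sum_eq_sum_Ico_succ_bot hNpos]
      rw [pow_zero, mul_one]
    rw [hsum, hmid, hC0, hCN]
    have hpowN : ((Complex.exp (h:ℂ))⁻¹) ^ N = (Complex.exp 1)⁻¹ := by
      rw [inv_pow, hEN]
    rw [hpowN]
    have := key15 (Complex.exp (h:ℂ)) (lam:ℂ) (2 * (Real.pi : ℂ) * Complex.I * (ω : ℂ))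
      ((lam:ℂ)^N) (Complex.exp 1) hz0 hz1 hL0 hL1 hE0 hE1 hEL hLE1 hS hS0 hB hx1 hy1
      a1 b1 ha1 hb1
    rw [hBinv]
    exact this
  · obtain ⟨k, hk⟩ := hωh
    have hωval : ω = (k:ℝ) * N := by
      rw [hh] at hk
      field_simp at hk
      linarith
    have hexpz : Complex.exp (2 * (Real.pi : ℂ) * Complex.I * (ω : ℂ)) = 1 := by
      rw [show 2 * (Real.pi : ℂ) * Complex.I * (ω : ℂ)
          = ((k * N : ℤ):ℂ) * (2 * (Real.pi : ℂ) * Complex.I) by push_cast [hωval]; ring]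
      exact Complex.exp_int_mul_two_pi_mul_I _
    have he : Complex.exp (2 * (Real.pi : ℂ) * Complex.I * (ω : ℂ) - 1) = Complex.exp (-1) := by
      rw [sub_eq_add_neg, Complex.exp_add, hexpz, one_mul]
    rw [he]
end

section
/- Let a < b be real numbers, N ≥ 1 an integer, ω ∈ ℝ, and set Ω = ω(b−a), h' = 1/N, and assume Ωh' ∉ ℤ. Let Ĉ_0, …, Ĉ_N be the Theorem-6 optimal coefficients on [0,1] for the frequency Ω (as defined in the context), and define C_{β,ω}[a,b] = (b−a)·e^{2πiωa}·Ĉ_β for β = 0, …, N. Then ∑_{β=0}^{N} C_{β,ω}[a,b] = (e^{2πiωb} − e^{2πiωa})/(2πiω) = ∫_a^b e^{2πiωx} dx, i.e. the quadrature formula ∫_a^b e^{2πiωx} φ(x) dx ≅ ∑_{β=0}^N C_{β,ω}[a,b] φ(a + β(b−a)/N) is exact for the constant function 1. -/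
set_option maxHeartbeats 1000000 in
private lemma key17A (a1 T E lam Λ : ℂ)
    (hlam1 : lam - 1 ≠ 0) (hlam0 : lam ≠ 0) (hΛ2 : 1 - Λ ^ 2 ≠ 0)
    (hElam : E - lam ≠ 0)
    (ha1 : a1 = (lam - 1) * (lam - E) / (lam * (1 - Λ ^ 2)) * T) :
    a1 * lam / (lam - 1) + a1 * ((Λ - lam) / (lam - 1)) + a1 * Λ * E / (E - lam)
      = -(Λ * (E - 1) / (1 - Λ ^ 2)) * T := by
  rw [ha1]
  field_simp
  ring

set_option maxHeartbeats 1000000 in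
private lemma key17B (b1 U E lam Λ : ℂ)
    (hlam1 : lam - 1 ≠ 0) (hlam0 : lam ≠ 0) (hΛ2 : 1 - Λ ^ 2 ≠ 0)
    (hlamE : lam * E - 1 ≠ 0) (h1l : (1:ℂ) - lam ≠ 0)
    (hb1 : b1 = (lam - 1) * (1 - lam * E) / (lam * (1 - Λ ^ 2)) * U) :
    b1 * Λ / (1 - lam) + b1 * ((Λ - lam) / (lam - 1)) + b1 * lam * E / (lam * E - 1)
      = ((E - 1) / (1 - Λ ^ 2)) * U := by
  rw [hb1]
  field_simp
  ring

set_option maxHeartbeats 1000000 in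
private lemma key17TU (K z E Λ Z F s : ℂ)
    (hz1 : z - 1 ≠ 0) (hE1 : E - 1 ≠ 0) (hEz : E - z ≠ 0) (hΛ2 : 1 - Λ ^ 2 ≠ 0)
    (hs : s ≠ 0) (hs1 : s - 1 ≠ 0) :
    -(Λ * (E - 1) / (1 - Λ ^ 2)) * ((1 - Λ * Z) / (s * (s - 1) * (E - 1)) + K * Λ * (F - Z) * z / ((z - 1) * (E - z)))
      + ((E - 1) / (1 - Λ ^ 2)) * ((Λ - Z) / (s * (s - 1) * (E - 1)) + K * (F - Z) * z / ((z - 1) * (E - z)))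
      = -Z / (s * (s - 1)) + K * (F - Z) * z * (E - 1) / ((z - 1) * (E - z)) := by
  field_simp
  ring

set_option maxHeartbeats 1000000 in
private lemma key17K (K z E Z F : ℂ)
    (hz1 : z - 1 ≠ 0) (hEz : E - z ≠ 0) :
    K * z / (z - 1) + (Z - z) / (z - 1) * K
      + K * (Z * E / (E - z) + z * F * (1 - E) / ((z - 1) * (E - z)))
      = K * (Z - F) * z * (E - 1) / ((z - 1) * (E - z)) := by
  field_simp
  ring

set_option maxHeartbeats 1000000 in
private lemma key17F (K z E Z F s : ℂ)
    (hz1 : z - 1 ≠ 0) (hEz : E - z ≠ 0) (hs : s ≠ 0) (hs1 : s - 1 ≠ 0) :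
    K * (Z - F) * z * (E - 1) / ((z - 1) * (E - z)) - 1 / s + Z / (s - 1)
      + (-Z / (s * (s - 1)) + K * (F - Z) * z * (E - 1) / ((z - 1) * (E - z)))
      = (Z - 1) / s := by
  field_simp
  ring

set_option maxHeartbeats 1000000 in
private theorem key17 (K a1 b1 z E lam Λ Z F s : ℂ)
    (hz1 : z - 1 ≠ 0) (hE1 : E - 1 ≠ 0) (hEz : E - z ≠ 0)
    (hlam1 : lam - 1 ≠ 0) (hlam0 : lam ≠ 0) (hΛ2 : 1 - Λ ^ 2 ≠ 0)
    (hElam : E - lam ≠ 0) (hlamE : lam * E - 1 ≠ 0)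
    (hs : s ≠ 0) (hs1 : s - 1 ≠ 0)
    (ha1 : a1 = ((lam - 1) * (lam - E) / (lam * (1 - Λ ^ 2))) *
      ((1 - Λ * Z) / (s * (s - 1) * (E - 1)) + K * Λ * (F - Z) * z / ((z - 1) * (E - z))))
    (hb1 : b1 = ((lam - 1) * (1 - lam * E) / (lam * (1 - Λ ^ 2))) *
      ((Λ - Z) / (s * (s - 1) * (E - 1)) + K * (F - Z) * z / ((z - 1) * (E - z)))) :
    (K * z / (z - 1) - 1 / s + a1 * lam / (lam - 1) + b1 * Λ / (1 - lam))
    + ((Z - z) / (z - 1) * K + a1 * ((Λ - lam) / (lam - 1)) + b1 * ((Λ - lam) / (lam - 1)))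
    + (K * (Z * E / (E - z) + z * F * (1 - E) / ((z - 1) * (E - z))) + Z / (s - 1)
        + a1 * Λ * E / (E - lam) + b1 * lam * E / (lam * E - 1))
    = (Z - 1) / s := by
  have h1l : (1 : ℂ) - lam ≠ 0 := fun hc => hlam1 (by linear_combination -hc)
  obtain ⟨T, hT⟩ : ∃ T : ℂ, T = (1 - Λ * Z) / (s * (s - 1) * (E - 1)) + K * Λ * (F - Z) * z / ((z - 1) * (E - z)) := ⟨_, rfl⟩
  obtain ⟨U, hU⟩ : ∃ U : ℂ, U = (Λ - Z) / (s * (s - 1) * (E - 1)) + K * (F - Z) * z / ((z - 1) * (E - z)) := ⟨_, rfl⟩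
  rw [← hT] at ha1
  rw [← hU] at hb1
  have hA := key17A a1 T E lam Λ hlam1 hlam0 hΛ2 hElam ha1
  have hB := key17B b1 U E lam Λ hlam1 hlam0 hΛ2 hlamE h1l hb1
  have hTU := key17TU K z E Λ Z F s hz1 hE1 hEz hΛ2 hs hs1
  rw [← hT, ← hU] at hTU
  have hKt := key17K K z E Z F hz1 hEz
  have hfin := key17F K z E Z F s hz1 hEz hs hs1
  linear_combination hA + hB + hTU + hKt + hfin

set_option maxHeartbeats 1000000 in
theorem stmt17
    (a b : ℝ) (hab : a < b) (N : ℕ) (hN : 1 ≤ N) (ω : ℝ)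
    (Ω : ℝ) (hΩ : Ω = ω * (b - a)) (h : ℝ) (hh : h = 1 / N)
    (hfreq : ∀ k : ℤ, Ω * h ≠ (k : ℝ))
    (p lam : ℝ) (hp : p = 1 + 2 * h * Real.exp h - Real.exp (2 * h))
    (hroot : p * lam ^ 2 - 2 * (1 - Real.exp (2 * h) + h * (Real.exp (2 * h) + 1)) * lam + p = 0)
    (hlam : |lam| < 1) (hlam0 : lam ≠ 0) (hlam2N : 1 - lam ^ (2 * N) ≠ 0)
    (K a1 b1 : ℂ)
    (hK : K = (Complex.exp (h : ℂ) - Complex.exp ((2 * (Real.pi : ℂ) * Complex.I * (Ω : ℂ)) * (h : ℂ))) * (1 - Complex.exp ((2 * (Real.pi : ℂ) * Complex.I * (Ω : ℂ)) * (h : ℂ) + (h : ℂ))) * (1 - Complex.exp ((2 * (Real.pi : ℂ) * Complex.I * (Ω : ℂ)) * (h : ℂ))) ^ 2 / (2 * (Real.pi : ℂ) ^ 2 * (Ω : ℂ) ^ 2 * (4 * (Real.pi : ℂ) ^ 2 * (Ω : ℂ) ^ 2 + 1) * Complex.exp ((2 * (Real.pi : ℂ) * Complex.I * (Ω : ℂ))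 * (h : ℂ)) * ((1 - Complex.exp (2 * (h : ℂ))) * (1 - Complex.exp ((2 * (Real.pi : ℂ) * Complex.I * (Ω : ℂ)) * (h : ℂ))) ^ 2 + 2 * (h : ℂ) * (Complex.exp (h : ℂ) - Complex.exp ((2 * (Real.pi : ℂ) * Complex.I * (Ω : ℂ)) * (h : ℂ))) * (1 - Complex.exp ((2 * (Real.pi : ℂ) * Complex.I * (Ω : ℂ)) * (h : ℂ) + (h : ℂ))))))
    (ha1 : a1 = (((lam : ℂ) - 1) * ((lam : ℂ) - Complex.exp (h : ℂ)) / ((lam : ℂ) * (1 - (lam : ℂ) ^ (2 * N)))) * ((1 - (lam : ℂ) ^ N * Complex.exp (2 * (Real.pi : ℂ) * Complex.I * (Ω : ℂ))) / ((2 * (Real.pi : ℂ) * Complex.I * (Ω : ℂ)) * ((2 * (Real.pi : ℂ) * Complex.I * (Ω : ℂ)) - 1) * (Complex.exp (h : ℂ) - 1)) + K * (lam : ℂ) ^ N * (Complex.exp 1 - Complex.exp (2 * (Real.pi : ℂ) * Complex.I * (Ω : ℂ))) * Complex.exp ((2 * (Real.pi : ℂ) * Complex.I * (Ω : ℂ))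 * (h : ℂ)) / ((Complex.exp ((2 * (Real.pi : ℂ) * Complex.I * (Ω : ℂ)) * (h : ℂ)) - 1) * (Complex.exp (h : ℂ) - Complex.exp ((2 * (Real.pi : ℂ) * Complex.I * (Ω : ℂ)) * (h : ℂ))))))
    (hb1 : b1 = (((lam : ℂ) - 1) * (1 - (lam : ℂ) * Complex.exp (h : ℂ)) / ((lam : ℂ) * (1 - (lam : ℂ) ^ (2 * N)))) * (((lam : ℂ) ^ N - Complex.exp (2 * (Real.pi : ℂ) * Complex.I * (Ω : ℂ))) / ((2 * (Real.pi : ℂ) * Complex.I * (Ω : ℂ)) * ((2 * (Real.pi : ℂ) * Complex.I * (Ω : ℂ)) - 1) * (Complex.exp (h : ℂ) - 1)) + K * (Complex.exp 1 - Complex.exp (2 * (Real.pi : ℂ) * Complex.I * (Ω : ℂ))) * Complex.exp ((2 * (Real.pi : ℂ) * Complex.I * (Ω : ℂ)) * (h : ℂ)) / ((Complex.exp ((2 * (Real.pi : ℂ) * Complex.I * (Ω : ℂ)) * (h : ℂ)) - 1) * (Complex.exp (h : ℂ) - Complex.exp ((2 * (Real.pi : ℂ) * Complex.I * (Ω : ℂ))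 * (h : ℂ))))))
    (C : ℕ → ℂ)
    (hC0 : C 0 = K * Complex.exp ((2 * (Real.pi : ℂ) * Complex.I * (Ω : ℂ)) * (h : ℂ)) / (Complex.exp ((2 * (Real.pi : ℂ) * Complex.I * (Ω : ℂ)) * (h : ℂ)) - 1) - 1 / (2 * (Real.pi : ℂ) * Complex.I * (Ω : ℂ)) + a1 * (lam : ℂ) / ((lam : ℂ) - 1) + b1 * (lam : ℂ) ^ N / (1 - (lam : ℂ)))
    (hCmid : ∀ β : ℕ, 1 ≤ β → β ≤ N - 1 → C β = Complex.exp ((2 * (Real.pi : ℂ) * Complex.I * (Ω : ℂ)) * (h : ℂ) * (β : ℂ)) * K + a1 * (lam : ℂ) ^ β + b1 * (lam : ℂ) ^ (N - β))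
    (hCN : C N = K * (Complex.exp (2 * (Real.pi : ℂ) * Complex.I * (Ω : ℂ)) * Complex.exp (h : ℂ) / (Complex.exp (h : ℂ) - Complex.exp ((2 * (Real.pi : ℂ) * Complex.I * (Ω : ℂ)) * (h : ℂ))) + Complex.exp ((2 * (Real.pi : ℂ) * Complex.I * (Ω : ℂ)) * (h : ℂ) + 1) * (1 - Complex.exp (h : ℂ)) / ((Complex.exp ((2 * (Real.pi : ℂ) * Complex.I * (Ω : ℂ)) * (h : ℂ)) - 1) * (Complex.exp (h : ℂ) - Complex.exp ((2 * (Real.pi : ℂ) * Complex.I * (Ω : ℂ)) * (h : ℂ))))) + Complex.exp (2 * (Real.pi : ℂ) * Complex.I * (Ω : ℂ)) / ((2 * (Real.pi : ℂ) * Complex.I * (Ω : ℂ)) - 1) + a1 * (lam : ℂ) ^ N * Complex.exp (h : ℂ) / (Complex.exp (h : ℂ) - (lam : ℂ)) + b1 * (lam : ℂ) * Complex.exp (h : ℂ) / ((lam : ℂ) * Complex.exp (h : ℂ) - 1))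
    (Cab : ℕ → ℂ)
    (hCab : ∀ β : ℕ, Cab β = ((b : ℂ) - (a : ℂ)) * Complex.exp (2 * (Real.pi : ℂ) * Complex.I * (ω : ℂ) * (a : ℂ)) * C β)
    :
    ∑ β ∈ Finset.range (N + 1), Cab β =
      (Complex.exp ((2 * (Real.pi : ℂ) * Complex.I * (ω : ℂ)) * (b : ℂ)) - Complex.exp ((2 * (Real.pi : ℂ) * Complex.I * (ω : ℂ)) * (a : ℂ))) / (2 * (Real.pi : ℂ) * Complex.I * (ω : ℂ)) ∧
    (Complex.exp ((2 * (Real.pi : ℂ) * Complex.I * (ω : ℂ)) * (b : ℂ)) - Complex.exp ((2 * (Real.pi : ℂ) * Complex.I * (ω : ℂ)) * (a : ℂ))) / (2 * (Real.pi : ℂ) * Complex.I * (ω : ℂ)) =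
      ∫ x in a..b, Complex.exp ((2 * (Real.pi : ℂ) * Complex.I * (ω : ℂ)) * (x : ℂ)) := by
  clear hK
  -- basic facts
  have hNpos : (0:ℝ) < N := by exact_mod_cast Nat.lt_of_lt_of_le Nat.zero_lt_one hN
  have hh0 : 0 < h := by rw [hh]; positivity
  have hba : (0:ℝ) < b - a := sub_pos.mpr hab
  have hΩ0 : Ω ≠ 0 := by
    intro hc
    exact hfreq 0 (by simp [hc])
  have hω0 : ω ≠ 0 := by
    intro hc
    exact hΩ0 (by rw [hΩ, hc, zero_mul])
  have hπC : ((Real.pi : ℝ) : ℂ) ≠ 0 := Complex.ofReal_ne_zero.mpr Real.pi_ne_zero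
  have hsne : (2 * (Real.pi : ℂ) * Complex.I * (Ω : ℂ)) ≠ 0 :=
    mul_ne_zero (mul_ne_zero (mul_ne_zero two_ne_zero hπC) Complex.I_ne_zero)
      (Complex.ofReal_ne_zero.mpr hΩ0)
  have hPne : (2 * (Real.pi : ℂ) * Complex.I * (ω : ℂ)) ≠ 0 :=
    mul_ne_zero (mul_ne_zero (mul_ne_zero two_ne_zero hπC) Complex.I_ne_zero)
      (Complex.ofReal_ne_zero.mpr hω0)
  have hNC : ((N : ℝ) : ℂ) ≠ 0 := Complex.ofReal_ne_zero.mpr (ne_of_gt hNpos)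
  have hNC2 : ((N : ℕ) : ℂ) ≠ 0 := Nat.cast_ne_zero.mpr (by omega)
  have hhC : ((h : ℂ)) * (N : ℂ) = 1 := by
    rw [hh]
    push_cast
    exact one_div_mul_cancel hNC2
  -- exp facts
  have hexp1 : 1 < Real.exp h := by
    have := Real.exp_lt_exp.mpr hh0
    rwa [Real.exp_zero] at this
  have hs1 : (2 * (Real.pi : ℂ) * Complex.I * (Ω : ℂ)) - 1 ≠ 0 := by
    intro hc
    have hre := congrArg Complex.re hc
    simp [Complex.mul_re, Complex.mul_im] at hre
  have hz1 : Complex.exp ((2 * (Real.pi : ℂ) * Complex.I * (Ω : ℂ)) * (h : ℂ)) - 1 ≠ 0 := by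
    rw [sub_ne_zero]
    intro hc
    obtain ⟨n, hn⟩ := Complex.exp_eq_one_iff.mp hc
    apply hfreq n
    have h2 : ((Ω * h : ℝ) : ℂ) = (n : ℂ) := by
      apply mul_left_cancel₀ (mul_ne_zero (mul_ne_zero (two_ne_zero (α := ℂ)) hπC) Complex.I_ne_zero)
      push_cast
      push_cast at hn
      linear_combination hn
    exact_mod_cast h2
  have hE1 : Complex.exp ((h : ℂ)) - 1 ≠ 0 := by
    rw [sub_ne_zero, ← Complex.ofReal_exp, ← Complex.ofReal_one]
    intro hc
    have : Real.exp h = 1 := by exact_mod_cast hc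
    linarith
  have habsz : ‖Complex.exp ((2 * (Real.pi : ℂ) * Complex.I * (Ω : ℂ)) * (h : ℂ))‖ = 1 := by
    rw [Complex.norm_exp]
    have hre : ((2 * (Real.pi : ℂ) * Complex.I * (Ω : ℂ)) * (h : ℂ)).re = 0 := by
      simp [Complex.mul_re, Complex.mul_im]
    rw [hre, Real.exp_zero]
  have hEz : Complex.exp ((h : ℂ)) - Complex.exp ((2 * (Real.pi : ℂ) * Complex.I * (Ω : ℂ)) * (h : ℂ)) ≠ 0 := by
    rw [sub_ne_zero]
    intro hc
    have habs : ‖Complex.exp ((h : ℂ))‖ = 1 := by rw [hc, habsz]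
    rw [Complex.norm_exp] at habs
    simp at habs
    linarith
  have hlamlt : lam < 1 := lt_of_le_of_lt (le_abs_self lam) hlam
  have hlam1R : lam ≠ 1 := ne_of_lt hlamlt
  have hlam1C : ((lam : ℝ) : ℂ) - 1 ≠ 0 := sub_ne_zero.mpr (by exact_mod_cast hlam1R)
  have hlam0C : ((lam : ℝ) : ℂ) ≠ 0 := Complex.ofReal_ne_zero.mpr hlam0
  have hΛ2 : (1 : ℂ) - (((lam : ℝ) : ℂ) ^ N) ^ 2 ≠ 0 := by
    have h2 : (((lam : ℝ) : ℂ) ^ N) ^ 2 = ((lam : ℝ) : ℂ) ^ (2 * N) := by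
      rw [← pow_mul, mul_comm]
    rw [h2]
    intro hc
    apply hlam2N
    exact_mod_cast hc
  have hElamC : Complex.exp ((h : ℂ)) - ((lam : ℝ) : ℂ) ≠ 0 := by
    rw [← Complex.ofReal_exp, sub_ne_zero]
    intro hc
    have : Real.exp h = lam := by exact_mod_cast hc
    linarith
  have hlamE1 : ((lam : ℝ) : ℂ) * Complex.exp ((h : ℂ)) - 1 ≠ 0 := by
    rw [← Complex.ofReal_exp]
    intro hc
    have hmul : lam * Real.exp h = 1 := by
      have : ((lam * Real.exp h : ℝ) : ℂ) = ((1 : ℝ) : ℂ) := by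
        rw [Complex.ofReal_mul, Complex.ofReal_one]
        linear_combination hc
      exact_mod_cast this
    have hc2 : Real.exp (2 * h) = Real.exp h ^ 2 := by
      rw [two_mul, Real.exp_add, sq]
    rw [hp, hc2] at hroot
    have hM : lam * Real.exp h - 1 = 0 := by linarith
    have hzero : (1 - Real.exp h ^ 2) * (1 - Real.exp h) ^ 2 = 0 := by
      linear_combination (Real.exp h ^ 2) * hroot -
        ((1 + 2 * h * Real.exp h - Real.exp h ^ 2) * (Real.exp h * lam + 1)
          - 2 * (1 - Real.exp h ^ 2 + h * (Real.exp h ^ 2 + 1)) * Real.exp h) * hM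
    rcases mul_eq_zero.mp hzero with hz | hz
    · nlinarith
    · nlinarith
  -- power identities
  have hzN : Complex.exp ((2 * (Real.pi : ℂ) * Complex.I * (Ω : ℂ)) * (h : ℂ)) ^ N
      = Complex.exp (2 * (Real.pi : ℂ) * Complex.I * (Ω : ℂ)) := by
    rw [← Complex.exp_nat_mul]
    congr 1
    push_cast
    linear_combination (2 * (Real.pi : ℂ) * Complex.I * (Ω : ℂ)) * hhC
  have hEN : Complex.exp ((h : ℂ)) ^ N = Complex.exp 1 := by
    rw [← Complex.exp_nat_mul]
    congr 1
    push_cast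
    linear_combination hhC
  -- rewrite hypotheses into key17 shape
  have hpow2 : ((lam : ℝ) : ℂ) ^ (2 * N) = (((lam : ℝ) : ℂ) ^ N) ^ 2 := by
    rw [← pow_mul, mul_comm]
  rw [hpow2] at ha1 hb1
  rw [Complex.exp_add] at hCN
  -- middle sum
  have hmid_each : ∀ β ∈ Finset.Ico 1 N,
      C β = Complex.exp ((2 * (Real.pi : ℂ) * Complex.I * (Ω : ℂ)) * (h : ℂ)) ^ β * K
        + a1 * ((lam : ℝ) : ℂ) ^ β + b1 * ((lam : ℝ) : ℂ) ^ (N - β) := by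
    intro β hβ
    rw [Finset.mem_Ico] at hβ
    rw [hCmid β hβ.1 (by omega)]
    congr 2
    rw [← Complex.exp_nat_mul]
    congr 1
    ring
  have hrefl : ∑ β ∈ Finset.Ico 1 N, ((lam : ℝ) : ℂ) ^ (N - β)
      = ∑ β ∈ Finset.Ico 1 N, ((lam : ℝ) : ℂ) ^ β := by
    rw [Finset.sum_Ico_reflect (fun j => ((lam : ℝ) : ℂ) ^ j) 1 (by omega : N ≤ N + 1),
      show N + 1 - N = 1 from by omega, show N + 1 - 1 = N from by omega]
  have hlamne1 : ((lam : ℝ) : ℂ) ≠ 1 := sub_ne_zero.mp hlam1C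
  have hzne1 : Complex.exp ((2 * (Real.pi : ℂ) * Complex.I * (Ω : ℂ)) * (h : ℂ)) ≠ 1 := sub_ne_zero.mp hz1
  have hIco : ∑ β ∈ Finset.Ico 1 N, C β
      = (Complex.exp (2 * (Real.pi : ℂ) * Complex.I * (Ω : ℂ)) - Complex.exp ((2 * (Real.pi : ℂ) * Complex.I * (Ω : ℂ)) * (h : ℂ))) / (Complex.exp ((2 * (Real.pi : ℂ) * Complex.I * (Ω : ℂ)) * (h : ℂ)) - 1) * K
        + a1 * ((((lam : ℝ) : ℂ) ^ N - ((lam : ℝ) : ℂ)) / (((lam : ℝ) : ℂ) - 1))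
        + b1 * ((((lam : ℝ) : ℂ) ^ N - ((lam : ℝ) : ℂ)) / (((lam : ℝ) : ℂ) - 1)) := by
    rw [Finset.sum_congr rfl hmid_each, Finset.sum_add_distrib, Finset.sum_add_distrib]
    congr 1
    · congr 1
      · rw [← Finset.sum_mul, geom_sum_Ico hzne1 hN, hzN, pow_one]
      · rw [← Finset.mul_sum, geom_sum_Ico hlamne1 hN, pow_one]
    · rw [← Finset.mul_sum, hrefl, geom_sum_Ico hlamne1 hN, pow_one]
  have hsplit : ∑ β ∈ Finset.range (N + 1), C β = C 0 + (∑ β ∈ Finset.Ico 1 N, C β) + C N := by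
    rw [Finset.sum_range_succ, Finset.range_eq_Ico,
      Finset.sum_eq_sum_Ico_succ_bot (by omega : 0 < N)]
  -- key identity
  have hkey := key17 K a1 b1
    (Complex.exp ((2 * (Real.pi : ℂ) * Complex.I * (Ω : ℂ)) * (h : ℂ)))
    (Complex.exp ((h : ℂ))) ((lam : ℝ) : ℂ) (((lam : ℝ) : ℂ) ^ N)
    (Complex.exp (2 * (Real.pi : ℂ) * Complex.I * (Ω : ℂ))) (Complex.exp 1)
    (2 * (Real.pi : ℂ) * Complex.I * (Ω : ℂ))
    hz1 hE1 hEz hlam1C hlam0C hΛ2 hElamC hlamE1 hsne hs1 ha1 hb1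
  have hsum : ∑ β ∈ Finset.range (N + 1), C β
      = (Complex.exp (2 * (Real.pi : ℂ) * Complex.I * (Ω : ℂ)) - 1) / (2 * (Real.pi : ℂ) * Complex.I * (Ω : ℂ)) := by
    rw [hsplit, hC0, hIco, hCN]
    linear_combination hkey
  constructor
  · -- the quadrature sum
    have hCab' : ∀ β ∈ Finset.range (N + 1), Cab β
        = ((b : ℂ) - (a : ℂ)) * Complex.exp (2 * (Real.pi : ℂ) * Complex.I * (ω : ℂ) * (a : ℂ)) * C β :=
      fun β _ => hCab β
    rw [Finset.sum_congr rfl hCab', ← Finset.mul_sum, hsum]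
    have hsP : (2 * (Real.pi : ℂ) * Complex.I * (Ω : ℂ))
        = (2 * (Real.pi : ℂ) * Complex.I * (ω : ℂ)) * ((b : ℂ) - (a : ℂ)) := by
      rw [hΩ]
      push_cast
      ring
    have hZb : Complex.exp ((2 * (Real.pi : ℂ) * Complex.I * (ω : ℂ)) * (b : ℂ))
        = Complex.exp (2 * (Real.pi : ℂ) * Complex.I * (ω : ℂ) * (a : ℂ))
          * Complex.exp (2 * (Real.pi : ℂ) * Complex.I * (Ω : ℂ)) := by
      rw [← Complex.exp_add]
      congr 1
      rw [hsP]
      ring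
    rw [hZb, hsP]
    have hbane : ((b : ℂ) - (a : ℂ)) ≠ 0 := sub_ne_zero.mpr (by exact_mod_cast hab.ne')
    field_simp
  · rw [integral_exp_mul_complex hPne]
end
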